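/- arXiv:1511.04837 — 8 statements merged into one kernel-verified Lean document; each statement's English description precedes it below -/
import Mathlib

section
/- Let p be a prime, γ ≥ 1 an integer, C ⊆ {0, 1, …, p^γ − 1} a nonempty set of integers, and Ω = ⋃_{c∈C} (c + p^γ ℤ_p). Then Ω tiles ℚ_p by translation if and only if for every integer n with 1 ≤ n ≤ γ the image of C in ℤ/p^nℤ has cardinality equal to a power of p, i.e. #(C mod p^n) = p^{k_n} for some k_n ∈ ℕ (this cardinality condition is the paper's p-homogeneity of Ω). -/
/-!
Write `A ⊆ ℤ/p^γℤ` for the image of `C`, so that `Ω` is the preimage of `A` under reduction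
`ℤ_p → ℤ/p^γℤ`. Choosing coset representatives of `ℤ_p` in `ℚ_p` reduces tilings of `ℚ_p` by `Ω`
to factorizations `A ⊕ B = ℤ/p^γℤ`; for the forward direction, one point of each residue ball
that is covered exactly once already determines `B`.

If `A ⊕ B = ℤ/p^(m+1)ℤ`, then over `𝔽_p` the mask polynomials satisfy
`A(X) B(X) ≡ 1 + X + ⋯ + X^(p^(m+1)-1) = (X - 1)^(p^(m+1)-1)` modulo `X^(p^(m+1)) - 1`,
so `(X - 1)^(p^m)` divides `A(X)` or `B(X)`, say `A(X)`. Reducing exponents modulo `p^m`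
gives a polynomial of degree `< p^m` divisible by `X^(p^m) - 1 = (X - 1)^(p^m)`, hence zero:
every fibre of `A → ℤ/p^mℤ` has size divisible by `p`, i.e. `A` is a union of cosets of
`p^m ℤ/p^(m+1)ℤ`. Counting then shows that the images still tile, `A' ⊕ B' = ℤ/p^mℤ`,
so all `|A mod p^n|` divide `p^n`. Conversely, if all `|A mod p^n|` are powers of `p`,
the reduction `A → A mod p^m` is either injective or `p`-to-one, and a complement of
`A mod p^m` lifts to one of `A` by taking a full preimage, respectively a set-theoretic section.
-/

open MeasureTheory Finset Polynomial Pointwise AddSubgroup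

theorem pow_sub_one_dvd_pow_sub_pow_of_mod_eq {R : Type*} [CommRing R] (x : R) {n a b : ℕ}
    (h : a % n = b % n) : x ^ n - 1 ∣ x ^ a - x ^ b := by
  have reduce (c : ℕ) : x ^ n - 1 ∣ x ^ c - x ^ (c % n) := by
    have := (sub_dvd_pow_sub_pow (x ^ n) 1 (c / n)).mul_left (x ^ (c % n))
    rwa [one_pow, mul_sub, mul_one, ← pow_mul, ← pow_add, Nat.mod_add_div] at this
  simpa [h] using dvd_sub (reduce a) (reduce b)

theorem Prime.pow_succ_dvd_or_pow_succ_dvd_of_dvd_mul {M : Type*} [CommMonoidWithZero M]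
    [IsCancelMulZero M] {q a b : M} (hq : Prime q) {k l : ℕ} (h : q ^ (k + l + 1) ∣ a * b) :
    q ^ (k + 1) ∣ a ∨ q ^ (l + 1) ∣ b := by
  rw [pow_dvd_iff_le_emultiplicity, emultiplicity_mul hq] at h
  simp only [pow_dvd_iff_le_emultiplicity]
  by_contra! hlt
  obtain ⟨ha, hb⟩ := hlt
  push_cast at ha hb
  rw [ENat.lt_natCast_add_one_iff] at ha hb
  have := h.trans (add_le_add ha hb)
  norm_cast at this
  omega

theorem Nat.pow_succ_div_pow {p : ℕ} (hp : 0 < p) (m : ℕ) : p ^ (m + 1) / p ^ m = p := by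
  rw [pow_succ', Nat.mul_div_cancel _ (Nat.pow_pos hp)]

theorem AddSubgroup.isComplement_of_add_eq_univ_of_card_mul_card_le {G : Type*} [AddGroup G]
    [Finite G] {S T : Set G} (hST : S + T = Set.univ)
    (hcard : Nat.card S * Nat.card T ≤ Nat.card G) : IsComplement S T := by
  refine Function.Surjective.bijective_of_nat_card_le (fun g => ?_) (by rwa [Nat.card_prod])
  obtain ⟨s, hs, t, ht, hst⟩ := Set.mem_add.mp (hST ▸ Set.mem_univ g)
  exact ⟨(⟨s, hs⟩, ⟨t, ht⟩), hst⟩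

namespace ZMod

section Reduction

variable {M N : ℕ}

theorem val_castHom [NeZero M] (h : N ∣ M) (x : ZMod M) :
    (castHom h (ZMod N) x).val = x.val % N := by
  rw [castHom_apply, cast_eq_val, val_natCast]

theorem image_castHom_image_castHom {K : ℕ} (h₁ : N ∣ M) (h₂ : K ∣ N) (s : Finset (ZMod M)) :
    (s.image (castHom h₁ (ZMod N))).image (castHom h₂ (ZMod K)) =
      s.image (castHom (h₂.trans h₁) (ZMod K)) := by
  rw [image_image, ← RingHom.coe_comp, RingHom.ext_zmod ((castHom h₂ _).comp _)]

theorem image_castHom_self (h : M ∣ M) (s : Finset (ZMod M)) :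
    s.image (castHom h (ZMod M)) = s := by
  rw [RingHom.ext_zmod (castHom h _) (RingHom.id _), RingHom.coe_id, image_id]

theorem sum_val_eq_sum_range [NeZero N] {R : Type*} [AddCommMonoid R] (f : ℕ → R) :
    ∑ s : ZMod N, f s.val = ∑ i ∈ range N, f i :=
  sum_nbij' val (fun i => (i : ZMod N)) (fun s _ => mem_range.mpr (val_lt s))
    (fun _ _ => mem_univ _) (fun s _ => natCast_zmod_val s)
    (fun _ hi => val_cast_of_lt (mem_range.mp hi)) (fun _ _ => rfl)

variable [NeZero M] [NeZero N]

theorem card_filter_castHom_eq (h : N ∣ M) (r : ZMod N) :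
    #{x : ZMod M | castHom h (ZMod N) x = r} = M / N := by
  have hfib (s : ZMod N) : #{x : ZMod M | castHom h (ZMod N) x = s} =
      #{x : ZMod M | castHom h (ZMod N) x = r} :=
    AddMonoidHom.card_fiber_eq_of_mem_range (castHom h (ZMod N)).toAddMonoidHom
      (ringHom_surjective (castHom h (ZMod N)) s) (ringHom_surjective (castHom h (ZMod N)) r)
  have hsum := card_eq_sum_card_fiberwise (f := castHom h (ZMod N)) (s := univ) (t := univ)
    (fun _ _ => mem_univ _)
  simp only [hfib, sum_const, card_univ, ZMod.card, smul_eq_mul] at hsum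
  exact (Nat.div_eq_of_eq_mul_right (NeZero.pos N) hsum).symm

theorem card_filter_castHom_le (h : N ∣ M) (s : Finset (ZMod M)) (r : ZMod N) :
    #{x ∈ s | castHom h (ZMod N) x = r} ≤ M / N :=
  (card_le_card (filter_subset_filter _ (subset_univ s))).trans (card_filter_castHom_eq h r).le

theorem card_filter_castHom_mem_le (h : N ∣ M) (S : Finset (ZMod N)) :
    #{x : ZMod M | castHom h (ZMod N) x ∈ S} ≤ M / N * #S :=
  card_le_mul_card_image_of_maps_to (fun _ hx => (mem_filter.mp hx).2) _
    fun r _ => card_filter_castHom_le h _ r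

theorem card_eq_mul_card_image_castHom (h : N ∣ M) {A : Finset (ZMod M)}
    (hA : ∀ r, M / N ∣ #{a ∈ A | castHom h (ZMod N) a = r}) :
    #A = M / N * #(A.image (castHom h (ZMod N))) := by
  rw [card_eq_sum_card_image (castHom h (ZMod N)) A, mul_comm, ← smul_eq_mul, ← sum_const]
  refine sum_congr rfl fun r hr => le_antisymm (card_filter_castHom_le h A r)
    (Nat.le_of_dvd (card_pos.mpr ?_) (hA r))
  obtain ⟨a, ha, rfl⟩ := mem_image.mp hr
  exact ⟨a, mem_filter.mpr ⟨ha, rfl⟩⟩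

end Reduction

section MaskPolynomial

variable {M N : ℕ} {R : Type*} [CommRing R]

theorem pow_sub_one_dvd_sum_mul_sum_sub [NeZero N] (x : R) {A B : Finset (ZMod N)}
    (h : IsComplement (A : Set (ZMod N)) B) :
    x ^ N - 1 ∣ (∑ a ∈ A, x ^ a.val) * (∑ b ∈ B, x ^ b.val) - ∑ s : ZMod N, x ^ s.val := by
  have hsum : ∑ s : ZMod N, x ^ s.val = ∑ a ∈ A, ∑ b ∈ B, x ^ (a + b).val := by
    rw [← Fintype.sum_bijective _ h (fun ab => x ^ (ab.1.1 + ab.2.1).val) _ (fun _ => rfl),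
      Fintype.sum_prod_type, ← sum_coe_sort A]
    exact sum_congr rfl fun a _ => sum_coe_sort B (fun b => x ^ (a.1 + b).val)
  rw [hsum, sum_mul_sum, ← sum_sub_distrib]
  refine dvd_sum fun a _ => ?_
  rw [← sum_sub_distrib]
  refine dvd_sum fun b _ => ?_
  rw [← pow_add, val_add]
  exact pow_sub_one_dvd_pow_sub_pow_of_mod_eq x (Nat.mod_mod _ _).symm

theorem pow_sub_one_dvd_sum_sub_sum_castHom [NeZero M] (x : R) (h : N ∣ M) (A : Finset (ZMod M)) :
    x ^ N - 1 ∣ ∑ a ∈ A, x ^ a.val - ∑ a ∈ A, x ^ (castHom h (ZMod N) a).val := by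
  rw [← sum_sub_distrib]
  refine dvd_sum fun a _ => ?_
  rw [val_castHom]
  exact pow_sub_one_dvd_pow_sub_pow_of_mod_eq x (Nat.mod_mod _ _).symm

end MaskPolynomial

end ZMod

namespace Polynomial

variable {R : Type*} [Semiring R] {α : Type*} {N : ℕ} [NeZero N]

theorem coeff_sum_X_pow_val (s : Finset α) (f : α → ZMod N) (r : ZMod N) :
    (∑ a ∈ s, (X : R[X]) ^ (f a).val).coeff r.val = #{a ∈ s | f a = r} := by
  simp only [finsetSum_coeff, coeff_X_pow, sum_boole]
  congr 2
  exact filter_congr fun a _ => by rw [eq_comm, (ZMod.val_injective N).eq_iff]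

theorem natDegree_sum_X_pow_val_lt (s : Finset α) (f : α → ZMod N) :
    (∑ a ∈ s, (X : R[X]) ^ (f a).val).natDegree < N := by
  refine Nat.lt_of_le_pred (NeZero.pos N) (natDegree_sum_le_of_forall_le _ _ fun a _ => ?_)
  exact (natDegree_X_pow_le _).trans (Nat.le_pred_of_lt (ZMod.val_lt _))

end Polynomial

namespace ZMod

variable {p : ℕ} [hp : Fact p.Prime]

theorem sum_X_pow_val_eq_X_sub_one_pow (k : ℕ) :
    ∑ s : ZMod (p ^ k), (X : (ZMod p)[X]) ^ s.val = (X - 1) ^ (p ^ k - 1) := by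
  have hX : (X : (ZMod p)[X]) - 1 ≠ 0 := by simpa using X_sub_C_ne_zero (1 : ZMod p)
  apply mul_right_cancel₀ hX
  rw [sum_val_eq_sum_range (fun i => (X : (ZMod p)[X]) ^ i), geom_sum_mul, ← pow_succ,
    Nat.sub_add_cancel (Nat.one_le_pow _ _ hp.out.pos), sub_pow_char_pow, one_pow]

theorem dvd_card_filter_castHom_of_dvd_sum {M N : ℕ} [NeZero M] [NeZero N] (h : N ∣ M)
    {S : Finset (ZMod M)} (hS : (X : (ZMod p)[X]) ^ N - 1 ∣ ∑ a ∈ S, X ^ a.val) (r : ZMod N) :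
    p ∣ #{a ∈ S | castHom h (ZMod N) a = r} := by
  have hdvd := (dvd_sub_right hS).mp (pow_sub_one_dvd_sum_sub_sum_castHom X h S)
  have hzero := eq_zero_of_dvd_of_natDegree_lt hdvd (by
    rw [← C_1, natDegree_X_pow_sub_C]
    exact natDegree_sum_X_pow_val_lt S _)
  have := coeff_sum_X_pow_val (R := ZMod p) S (castHom h (ZMod N)) r
  rwa [hzero, coeff_zero, eq_comm, natCast_eq_zero_iff] at this

section Step

variable {m : ℕ}

local notation "π" => castHom (pow_dvd_pow p (Nat.le_succ m)) (ZMod (p ^ m))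

theorem dvd_card_filter_castHom_or_of_isComplement {A B : Finset (ZMod (p ^ (m + 1)))}
    (h : IsComplement (A : Set (ZMod (p ^ (m + 1)))) B) :
    (∀ r, p ∣ #{a ∈ A | π a = r}) ∨ (∀ r, p ∣ #{b ∈ B | π b = r}) := by
  have hXp (k : ℕ) : (X : (ZMod p)[X]) ^ p ^ k - 1 = (X - 1) ^ p ^ k := by
    rw [sub_pow_char_pow, one_pow]
  have hprime : Prime (X - 1 : (ZMod p)[X]) := by simpa using prime_X_sub_C (1 : ZMod p)
  have hpos : 1 ≤ p ^ m := Nat.one_le_pow _ _ hp.out.pos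
  have hprod : (X - 1 : (ZMod p)[X]) ^ (p ^ m - 1 + (p ^ m - 1) + 1) ∣
      (∑ a ∈ A, X ^ a.val) * (∑ b ∈ B, X ^ b.val) := by
    have hmod := pow_sub_one_dvd_sum_mul_sum_sub (X : (ZMod p)[X]) h
    rw [hXp, sum_X_pow_val_eq_X_sub_one_pow] at hmod
    have hle : p ^ m - 1 + (p ^ m - 1) + 1 ≤ p ^ (m + 1) - 1 := by
      have := Nat.mul_le_mul_right (p ^ m) hp.out.two_le
      rw [pow_succ']
      omega
    refine (pow_dvd_pow _ hle).trans (dvd_sub_self_right.mp ?_)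
    exact (pow_dvd_pow _ (Nat.sub_le _ 1)).trans hmod
  rcases hprime.pow_succ_dvd_or_pow_succ_dvd_of_dvd_mul hprod with hA | hB
  · rw [Nat.sub_add_cancel hpos, ← hXp] at hA
    exact Or.inl (dvd_card_filter_castHom_of_dvd_sum _ hA)
  · rw [Nat.sub_add_cancel hpos, ← hXp] at hB
    exact Or.inr (dvd_card_filter_castHom_of_dvd_sum _ hB)

theorem card_eq_mul_card_image_castHom_or_of_isComplement {A B : Finset (ZMod (p ^ (m + 1)))}
    (h : IsComplement (A : Set (ZMod (p ^ (m + 1)))) B) :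
    #A = p * #(A.image π) ∨ #B = p * #(B.image π) := by
  have hfib := Nat.pow_succ_div_pow hp.out.pos m
  refine (dvd_card_filter_castHom_or_of_isComplement h).imp (fun hA => ?_) (fun hB => ?_)
  · have := card_eq_mul_card_image_castHom _ (by rwa [hfib])
    rwa [hfib] at this
  · have := card_eq_mul_card_image_castHom _ (by rwa [hfib])
    rwa [hfib] at this

theorem isComplement_image_castHom_succ {A B : Finset (ZMod (p ^ (m + 1)))}
    (h : IsComplement (A : Set (ZMod (p ^ (m + 1)))) B) :
    IsComplement (A.image π : Set (ZMod (p ^ m))) (B.image π) := by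
  refine isComplement_of_add_eq_univ_of_card_mul_card_le ?_ ?_
  · rw [coe_image, coe_image, ← Set.image_add, h.add_eq,
      Set.image_univ_of_surjective (ringHom_surjective π)]
  have hcard : #A * #B = p * p ^ m := by
    have := h.card_mul_card
    simp only [coe_sort_coe, Nat.card_eq_finsetCard, Nat.card_zmod] at this
    rw [this, pow_succ']
  have hA := card_image_le (s := A) (f := π)
  have hB := card_image_le (s := B) (f := π)
  simp only [coe_sort_coe, Nat.card_eq_finsetCard, Nat.card_zmod]
  refine Nat.le_of_mul_le_mul_left ?_ hp.out.pos
  rcases card_eq_mul_card_image_castHom_or_of_isComplement h with hA' | hB' <;> nlinarith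

theorem exists_isComplement_of_card_image_eq {A : Finset (ZMod (p ^ (m + 1)))}
    {B : Finset (ZMod (p ^ m))} (h : IsComplement (A.image π : Set (ZMod (p ^ m))) B)
    (hA : #(A.image π) = #A) :
    ∃ B' : Finset (ZMod (p ^ (m + 1))), IsComplement (A : Set (ZMod (p ^ (m + 1)))) B' := by
  refine ⟨({x | π x ∈ B} : Finset _),
    isComplement_of_add_eq_univ_of_card_mul_card_le (Set.eq_univ_of_forall fun s => ?_) ?_⟩
  · obtain ⟨a', ha', b, hb, hab⟩ := Set.mem_add.mp (h.add_eq ▸ Set.mem_univ (π s))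
    obtain ⟨a, ha, rfl⟩ := mem_image.mp ha'
    refine Set.mem_add.mpr ⟨a, ha, s - a, ?_, add_sub_cancel _ _⟩
    simpa only [mem_coe, mem_filter, mem_univ, true_and, map_sub, ← hab, add_sub_cancel_left]
      using hb
  have hcard := h.card_mul_card
  have hB := card_filter_castHom_mem_le (M := p ^ (m + 1)) (pow_dvd_pow p m.le_succ) B
  simp only [coe_sort_coe, Nat.card_eq_finsetCard, Nat.card_zmod,
    Nat.pow_succ_div_pow hp.out.pos] at hcard hB ⊢
  nlinarith [pow_succ' p m]

theorem exists_isComplement_of_card_eq_mul_card_image {A : Finset (ZMod (p ^ (m + 1)))}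
    {B : Finset (ZMod (p ^ m))} (h : IsComplement (A.image π : Set (ZMod (p ^ m))) B)
    (hA : #A = p * #(A.image π)) :
    ∃ B' : Finset (ZMod (p ^ (m + 1))), IsComplement (A : Set (ZMod (p ^ (m + 1)))) B' := by
  have hfull : ({x | π x ∈ A.image π} : Finset _) = A := by
    refine (eq_of_subset_of_card_le (fun a ha => ?_) ?_).symm
    · exact mem_filter.mpr ⟨mem_univ _, mem_image_of_mem π ha⟩
    · exact (card_filter_castHom_mem_le _ _).trans_eq
        (by rw [Nat.pow_succ_div_pow hp.out.pos, hA])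
  refine ⟨B.image fun b => (b.val : ZMod (p ^ (m + 1))),
    isComplement_of_add_eq_univ_of_card_mul_card_le (Set.eq_univ_of_forall fun s => ?_) ?_⟩
  · obtain ⟨a, ha, b, hb, hab⟩ := Set.mem_add.mp (h.add_eq ▸ Set.mem_univ (π s))
    refine Set.mem_add.mpr ⟨s - b.val, ?_, b.val, mem_image_of_mem _ hb, sub_add_cancel _ _⟩
    rw [mem_coe, ← hfull]
    simpa only [mem_filter, mem_univ, true_and, map_sub, map_natCast, natCast_zmod_val, ← hab,
      add_sub_cancel_right, mem_coe] using ha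
  have hcard := h.card_mul_card
  have hB := card_image_le (s := B) (f := fun b => (b.val : ZMod (p ^ (m + 1))))
  simp only [coe_sort_coe, Nat.card_eq_finsetCard, Nat.card_zmod] at hcard ⊢
  nlinarith [pow_succ' p m]

end Step

theorem isComplement_image_castHom {m n : ℕ} (hn : n ≤ m) {A B : Finset (ZMod (p ^ m))}
    (h : IsComplement (A : Set (ZMod (p ^ m))) B) :
    IsComplement (A.image (castHom (pow_dvd_pow p hn) (ZMod (p ^ n))) : Set (ZMod (p ^ n)))
      (B.image (castHom (pow_dvd_pow p hn) (ZMod (p ^ n)))) := by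
  induction m, hn using Nat.le_induction with
  | base => rwa [image_castHom_self, image_castHom_self]
  | succ m hnm ih =>
    have := ih (isComplement_image_castHom_succ h)
    rwa [image_castHom_image_castHom, image_castHom_image_castHom] at this

def IsPHomogeneous (p : ℕ) {m : ℕ} (A : Finset (ZMod (p ^ m))) : Prop :=
  ∀ n (hn : n ≤ m), ∃ k, #(A.image (castHom (pow_dvd_pow p hn) (ZMod (p ^ n)))) = p ^ k

theorem isPHomogeneous_of_isComplement {m : ℕ} {A : Finset (ZMod (p ^ m))}
    {B : Set (ZMod (p ^ m))} (h : IsComplement (A : Set (ZMod (p ^ m))) B) :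
    IsPHomogeneous p A := by
  classical
  intro n hn
  have hcard := (isComplement_image_castHom hn (A := A) (B := B.toFinset)
    (by rwa [Set.coe_toFinset])).card_mul_card
  simp only [coe_sort_coe, Nat.card_eq_finsetCard, Nat.card_zmod] at hcard
  obtain ⟨k, -, hk⟩ := (Nat.dvd_prime_pow hp.out).mp (Dvd.intro _ hcard)
  exact ⟨k, hk⟩

omit hp in
theorem IsPHomogeneous.image_castHom {m : ℕ} {A : Finset (ZMod (p ^ (m + 1)))}
    (hA : IsPHomogeneous p A) :
    IsPHomogeneous p (A.image (castHom (pow_dvd_pow p m.le_succ) (ZMod (p ^ m)))) := by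
  intro n hn
  rw [image_castHom_image_castHom]
  exact hA n (hn.trans m.le_succ)

theorem IsPHomogeneous.exists_isComplement : ∀ {m : ℕ} {A : Finset (ZMod (p ^ m))},
    A.Nonempty → IsPHomogeneous p A →
      ∃ B : Finset (ZMod (p ^ m)), IsComplement (A : Set (ZMod (p ^ m))) B
  | 0, A, hne, _ => by
    have : Subsingleton (ZMod (p ^ 0)) := by rw [pow_zero]; infer_instance
    obtain ⟨a, ha⟩ := hne
    have hA : (A : Set (ZMod (p ^ 0))) = Set.univ :=
      Set.eq_univ_of_forall fun x => Subsingleton.elim a x ▸ ha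
    exact ⟨{0}, by rw [coe_singleton, hA]; exact isComplement_univ_singleton⟩
  | m + 1, A, hne, hA => by
    set π := castHom (pow_dvd_pow p m.le_succ) (ZMod (p ^ m))
    obtain ⟨B, hB⟩ := hA.image_castHom.exists_isComplement (hne.image π)
    obtain ⟨k, hk⟩ := hA (m + 1) le_rfl
    obtain ⟨l, hl⟩ := hA m m.le_succ
    rw [image_castHom_self] at hk
    have hle : #(A.image π) ≤ #A := card_image_le
    have hle' : #A ≤ p * #(A.image π) := card_le_mul_card_image _ _ fun r _ =>
      (card_filter_castHom_le _ A r).trans (Nat.pow_succ_div_pow hp.out.pos m).le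
    rw [hk, hl] at hle
    rw [hk, hl, ← pow_succ'] at hle'
    have hkl := (Nat.pow_le_pow_iff_right hp.out.one_lt).mp hle
    have hkl' := (Nat.pow_le_pow_iff_right hp.out.one_lt).mp hle'
    obtain rfl | rfl : k = l ∨ k = l + 1 := by omega
    · exact exists_isComplement_of_card_image_eq hB (hk.trans hl.symm).symm
    · exact exists_isComplement_of_card_eq_mul_card_image hB (by rw [hk, hl, pow_succ'])

end ZMod

section Padic

variable {p : ℕ} [hp : Fact p.Prime] {γ : ℕ}

open PadicInt

theorem PadicInt.toZModPow_eq_iff_norm_sub_le {x y : ℤ_[p]} :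
    toZModPow γ x = toZModPow γ y ↔ ‖x - y‖ ≤ (p : ℝ) ^ (-(γ : ℤ)) := by
  rw [norm_le_pow_iff_mem_span_pow, ← ker_toZModPow, RingHom.mem_ker, map_sub, sub_eq_zero]

namespace Padic

theorem norm_sub_natCast_le_iff {x : ℚ_[p]} {c : ℕ} :
    ‖x - c‖ ≤ (p : ℝ) ^ (-(γ : ℤ)) ↔ ∃ z : ℤ_[p], (z : ℚ_[p]) = x ∧ toZModPow γ z = c := by
  have hc : toZModPow γ (c : ℤ_[p]) = c := map_natCast _ c
  constructor
  · intro hxc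
    have hx : ‖x‖ ≤ 1 := by
      have hγ : (p : ℝ) ^ (-(γ : ℤ)) ≤ 1 :=
        zpow_le_one_of_nonpos₀ (by exact_mod_cast hp.out.one_lt.le) (by omega)
      have hc1 : ‖(c : ℚ_[p])‖ ≤ 1 := (c : ℤ_[p]).norm_le_one
      simpa using (nonarchimedean (x - (c : ℚ_[p])) (c : ℚ_[p])).trans (max_le (hxc.trans hγ) hc1)
    refine ⟨show ℤ_[p] from ⟨x, hx⟩, rfl, ?_⟩
    rwa [← hc, toZModPow_eq_iff_norm_sub_le]
  · rintro ⟨z, rfl, hz⟩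
    rwa [← hc, toZModPow_eq_iff_norm_sub_le] at hz

/-- `⋃_{a ∈ A} (a + p^γ ℤ_p)`. -/
def residueUnion (γ : ℕ) (A : Set (ZMod (p ^ γ))) : Set ℚ_[p] :=
  {x | ∃ z : ℤ_[p], (z : ℚ_[p]) = x ∧ toZModPow γ z ∈ A}

theorem iUnion_norm_sub_natCast_le_eq (C : Finset ℕ) :
    ⋃ c ∈ C, {x : ℚ_[p] | ‖x - (c : ℚ_[p])‖ ≤ (p : ℝ) ^ (-(γ : ℤ))} =
      residueUnion γ ↑(C.image fun c : ℕ => (c : ZMod (p ^ γ))) := by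
  ext x
  simp only [Set.mem_iUnion, exists_prop, Set.mem_ofPred_eq, norm_sub_natCast_le_iff]
  constructor
  · rintro ⟨c, hc, z, rfl, hz⟩
    exact ⟨z, rfl, mem_image.mpr ⟨c, hc, hz.symm⟩⟩
  · rintro ⟨z, rfl, hz⟩
    obtain ⟨c, hc, hcz⟩ := mem_image.mp hz
    exact ⟨c, hc, z, rfl, hcz.symm⟩

theorem isComplement_of_ae_existsUnique [MeasurableSpace ℚ_[p]] {μ : Measure ℚ_[p]}
    [μ.IsOpenPosMeasure] {A : Set (ZMod (p ^ γ))} {T : Set ℚ_[p]}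
    (hT : ∀ᵐ x ∂μ, ∃! t, t ∈ T ∧ x - t ∈ residueUnion γ A) :
    IsComplement A (toZModPow γ '' (((↑) : ℤ_[p] → ℚ_[p]) ⁻¹' T)) := by
  refine isComplement_iff_existsUnique_add_neg_mem.mpr fun s => ?_
  have hr : (0 : ℝ) < (p : ℝ) ^ (-(γ : ℤ)) := zpow_pos (by exact_mod_cast hp.out.pos) _
  have hball : μ (Metric.closedBall ((s.val : ℕ) : ℚ_[p]) ((p : ℝ) ^ (-(γ : ℤ)))) ≠ 0 :=
    ((IsUltrametricDist.isOpen_closedBall _ hr.ne').measure_pos μ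
      ⟨_, Metric.mem_closedBall_self hr.le⟩).ne'
  obtain ⟨x, hx, t₀, ⟨ht₀T, w, hwx, hw⟩, huniq⟩ :=
    Measure.exists_mem_of_measure_ne_zero_of_ae hball (ae_restrict_of_ae hT)
  rw [Metric.mem_closedBall, dist_eq_norm, norm_sub_natCast_le_iff] at hx
  obtain ⟨z, rfl, hz⟩ := hx
  rw [ZMod.natCast_zmod_val] at hz
  have ht₀ : t₀ = ((z - w : ℤ_[p]) : ℚ_[p]) := by rw [PadicInt.coe_sub, hwx, sub_sub_cancel]
  refine ⟨⟨toZModPow γ (z - w), z - w, show ((z - w : ℤ_[p]) : ℚ_[p]) ∈ T from ht₀ ▸ ht₀T,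
    rfl⟩, by simpa [map_sub, hz] using hw, ?_⟩
  rintro ⟨_, u, hu, rfl⟩ hsu
  have hut₀ : (u : ℚ_[p]) = t₀ := huniq _ ⟨hu, z - u,
    PadicInt.coe_sub z u, by simpa [map_sub, hz, sub_eq_add_neg] using hsu⟩
  rw [ht₀] at hut₀
  exact Subtype.ext (congrArg (toZModPow γ) (PadicInt.ext hut₀))

theorem exists_existsUnique_of_isComplement {A B : Set (ZMod (p ^ γ))} (h : IsComplement A B) :
    ∃ T : Set ℚ_[p], ∀ x, ∃! t, t ∈ T ∧ x - t ∈ residueUnion γ A := by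
  obtain ⟨F, hF, -⟩ := exists_isComplement_left (PadicInt.subring p).toAddSubgroup 0
  have mem_iff (y : ℚ_[p]) : y ∈ (PadicInt.subring p).toAddSubgroup ↔ ‖y‖ ≤ 1 :=
    mem_subring_iff p
  refine ⟨F + (fun b : ZMod (p ^ γ) => (b.val : ℚ_[p])) '' B, fun x => ?_⟩
  obtain ⟨⟨f, hf⟩, hxf, hfu⟩ := isComplement_iff_existsUnique_neg_add_mem.mp hF x
  set z : ℤ_[p] := ⟨-f + x, (mem_iff _).mp hxf⟩
  obtain ⟨⟨b, hb⟩, hzb, hbu⟩ := isComplement_iff_existsUnique_add_neg_mem.mp h (toZModPow γ z)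
  refine ⟨f + (b.val : ℚ_[p]),
    ⟨Set.add_mem_add hf ⟨b, hb, rfl⟩, z - (b.val : ℤ_[p]), ?_, ?_⟩, ?_⟩
  · rw [PadicInt.coe_sub, PadicInt.coe_natCast]
    change -f + x - _ = _
    abel
  · simpa [map_sub, sub_eq_add_neg] using hzb
  rintro _ ⟨⟨f', hf', _, ⟨b', hb', rfl⟩, rfl⟩, w, hwx, hw⟩
  have hxf' : -f' + x = ((w + (b'.val : ℤ_[p]) : ℤ_[p]) : ℚ_[p]) := by
    beta_reduce at hwx
    rw [PadicInt.coe_add, PadicInt.coe_natCast, hwx]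
    abel
  obtain rfl : f' = f := congrArg Subtype.val
    (hfu ⟨f', hf'⟩ ((mem_iff _).mpr (hxf' ▸ (w + (b'.val : ℤ_[p])).norm_le_one)))
  have hzw : z = w + (b'.val : ℤ_[p]) := PadicInt.ext hxf'
  obtain rfl : b' = b := congrArg Subtype.val (hbu ⟨b', hb'⟩ (by simpa [hzw] using hw))
  rfl

end Padic

end Padic

theorem compactOpen_tiles_iff_pHomogeneous_general
    (p γ : ℕ) [Fact p.Prime]
    (C : Finset ℕ) (hCne : C.Nonempty)
    [MeasurableSpace ℚ_[p]]
    (μ : Measure ℚ_[p]) [μ.IsAddHaarMeasure]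
    (Ω : Set ℚ_[p])
    (hΩ : Ω = ⋃ c ∈ C, {x : ℚ_[p] | ‖x - (c : ℚ_[p])‖ ≤ (p : ℝ) ^ (-(γ : ℤ))}) :
    (∃ T : Set ℚ_[p], ∀ᵐ x ∂μ, ∃! t, t ∈ T ∧ x - t ∈ Ω) ↔
      (∀ n : ℕ, 1 ≤ n → n ≤ γ →
        ∃ k : ℕ, (C.image (fun c : ℕ => (c : ZMod (p ^ n)))).card = p ^ k) := by
  set A := C.image fun c : ℕ => (c : ZMod (p ^ γ))
  have hAn (n : ℕ) (hn : n ≤ γ) : A.image (ZMod.castHom (pow_dvd_pow p hn) (ZMod (p ^ n))) =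
      C.image fun c : ℕ => (c : ZMod (p ^ n)) := by
    simp only [A, image_image, Function.comp_def, map_natCast]
  rw [hΩ, Padic.iUnion_norm_sub_natCast_le_eq]
  constructor
  · rintro ⟨T, hT⟩ n - hn
    rw [← hAn n hn]
    exact ZMod.isPHomogeneous_of_isComplement (Padic.isComplement_of_ae_existsUnique hT) n hn
  · intro hhom
    have hA : ZMod.IsPHomogeneous p A := fun n hn => by
      rcases n.eq_zero_or_pos with rfl | hn1
      · refine ⟨0, le_antisymm ((card_le_univ _).trans_eq ?_) ((hCne.image _).image _).card_pos⟩
        rw [ZMod.card, pow_zero]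
      · rw [hAn n hn]
        exact hhom n hn1 hn
    obtain ⟨B, hB⟩ := hA.exists_isComplement (hCne.image _)
    obtain ⟨T, hT⟩ := Padic.exists_existsUnique_of_isComplement hB
    exact ⟨T, ae_of_all μ hT⟩

/-- For `Ω = ⋃_{c∈C} (c + p^γ ℤ_p)` with `C ⊆ {0,…,p^γ-1}` nonempty,
`Ω` tiles `ℚ_p` by translation iff for every `1 ≤ n ≤ γ` the cardinality of the image of
`C` in `ℤ/p^nℤ` is a power of `p`. -/
theorem compactOpen_tiles_iff_pHomogeneous
    (p γ : ℕ) [Fact p.Prime] (hγ : 1 ≤ γ)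
    (C : Finset ℕ) (hCne : C.Nonempty) (hCsub : ∀ c ∈ C, c < p ^ γ)
    [MeasurableSpace ℚ_[p]] [BorelSpace ℚ_[p]]
    (μ : Measure ℚ_[p]) [μ.IsAddHaarMeasure]
    (Ω : Set ℚ_[p])
    (hΩ : Ω = ⋃ c ∈ C, {x : ℚ_[p] | ‖x - (c : ℚ_[p])‖ ≤ (p : ℝ) ^ (-(γ : ℤ))}) :
    (∃ T : Set ℚ_[p], ∀ᵐ x ∂μ, ∃! t, t ∈ T ∧ x - t ∈ Ω) ↔
      (∀ n : ℕ, 1 ≤ n → n ≤ γ →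
        ∃ k : ℕ, (C.image (fun c : ℕ => (c : ZMod (p ^ n)))).card = p ^ k) :=
  compactOpen_tiles_iff_pHomogeneous_general p γ C hCne μ Ω hΩ
end

section
/- Let p be a prime and γ ≥ 1 an integer. A nonempty subset C of ℤ/p^γℤ is a spectral set in ℤ/p^γℤ if and only if C tiles ℤ/p^γℤ. -/
/-!
Let `S_C` be the set of `j ∈ [1, n]` such that the cyclotomic polynomial `Φ_{p^j}` divides the
mask polynomial `∑_{c ∈ C} X^c`. The character sum of `C` at `a` vanishes iff `Φ_{ord a}` divides
the mask, and the `Φ_{p^j}` are pairwise coprime with `Φ_{p^j}(1) = p`, so `p^|S_C|` always divides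
`|C|`. Spectrality and tiling are both equivalent to Łaba's condition `|C| = p^|S_C|`.

The witnesses are digit sets `{∑ dᵢ p^eᵢ : 0 ≤ dᵢ < p}`: the differences of their elements have
orders `p^(n - eᵢ)`, and their character sums vanish at the elements of order `p^(eᵢ + 1)`.
All differences of a spectrum `Λ` have orders `p^j` with `j ∈ S_C`, so `Λ` sums directly with the
digit set at the positions `n - j`, `j ∉ S_C`, which gives `|Λ| ≤ p^|S_C|`; conversely the digit set
at the positions `n - j`, `j ∈ S_C`, is a spectrum. If `C ⊕ T = ℤ/p^n`, the product of the
character sums of `C` and `T` vanishes off `0`, so every `j ∈ [1, n]` lies in `S_C ∪ S_T`, and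
`|C| |T| = p^n` forces the condition; conversely the digit set at the positions `j - 1`, `j ∉ S_C`,
is a tiling complement by Fourier inversion.
-/

open Finset Polynomial

noncomputable section

namespace Polynomial

lemma cyclotomic.isRelPrime {k m : ℕ} (hk : 0 < k) (hkm : k ≠ m) :
    IsRelPrime (cyclotomic k ℤ) (cyclotomic m ℤ) := by
  refine (cyclotomic.irreducible hk).isRelPrime_iff_not_dvd.2 fun h => ?_
  have hℚ : cyclotomic k ℚ ∣ cyclotomic m ℚ := by
    simpa using Polynomial.map_dvd (Int.castRingHom ℚ) h
  exact (cyclotomic.irreducible_rat hk).not_isUnit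
    ((cyclotomic.isCoprime_rat hkm).isUnit_of_dvd' dvd_rfl hℚ)

lemma pow_card_dvd_eval_one_of_cyclotomic_dvd {p : ℕ} [hp : Fact p.Prime] {P : ℤ[X]}
    {S : Finset ℕ} (hS : ∀ j ∈ S, 0 < j) (hdvd : ∀ j ∈ S, cyclotomic (p ^ j) ℤ ∣ P) :
    (p : ℤ) ^ S.card ∣ P.eval 1 := by
  have hprod : ∏ j ∈ S, cyclotomic (p ^ j) ℤ ∣ P :=
    prod_dvd_of_isRelPrime (fun i _ j _ hij => cyclotomic.isRelPrime (pow_pos hp.out.pos i)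
      fun h => hij (Nat.pow_right_injective hp.out.two_le h)) hdvd
  have heval : ∀ j ∈ S, (cyclotomic (p ^ j) ℤ).eval 1 = p := fun j hj => by
    obtain ⟨k, rfl⟩ := Nat.exists_eq_add_of_lt (hS j hj)
    simp
  simpa [eval_prod, prod_congr rfl heval] using eval_dvd (x := 1) hprod

end Polynomial

lemma Int.exists_pow_dvd_sum_mul_pow {ι : Type*} [Fintype ι] {q : ℤ} (hq : q ≠ 0) {pos : ι → ℕ}
    (hpos : Function.Injective pos) {a : ι → ℤ} (ha : ∀ i, q ∣ a i → a i = 0) (hne : a ≠ 0) :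
    ∃ i, q ^ pos i ∣ ∑ j, a j * q ^ pos j ∧ ¬ q ^ (pos i + 1) ∣ ∑ j, a j * q ^ pos j := by
  classical
  obtain ⟨i, hi, hmin⟩ := exists_min_image {j | a j ≠ 0} pos
    (by simpa [Finset.Nonempty, Function.ne_iff] using hne)
  have hrest : q ^ (pos i + 1) ∣ ∑ j ∈ univ.erase i, a j * q ^ pos j := dvd_sum fun j hj => by
    by_cases hj0 : a j = 0
    · simp [hj0]
    · exact (pow_dvd_pow _ (lt_of_le_of_ne (hmin j (by simpa using hj0))
        (hpos.ne (ne_of_mem_erase hj).symm))).mul_left _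
  rw [← add_sum_erase _ _ (mem_univ i)]
  refine ⟨i, dvd_add (dvd_mul_left _ _) ((pow_dvd_pow _ (Nat.le_succ _)).trans hrest), fun h => ?_⟩
  have : q ^ pos i * q ∣ q ^ pos i * a i := by
    simpa [pow_succ, mul_comm] using (dvd_add_left hrest).1 h
  exact (mem_filter.1 hi).2 (ha i ((mul_dvd_mul_iff_left (pow_ne_zero _ hq)).1 this))

lemma card_mul_card_le_of_sub_eq_sub {G : Type*} [AddCommGroup G] [Fintype G]
    {A B : Finset G} (h : ∀ a ∈ A, ∀ a' ∈ A, ∀ b ∈ B, ∀ b' ∈ B, a - a' = b' - b → a = a') :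
    A.card * B.card ≤ Fintype.card G := by
  rw [← card_product, ← card_univ]
  refine card_le_card_of_injOn (fun x => x.1 + x.2) (fun _ _ => mem_univ _) ?_
  rintro ⟨a, b⟩ hab ⟨a', b'⟩ hab' (hsum : a + b = a' + b')
  simp only [coe_product, Set.mem_prod, mem_coe] at hab hab'
  obtain rfl := h a hab.1 a' hab'.1 b hab.2 b' hab'.2
    (by rw [sub_eq_sub_iff_add_eq_add, hsum, add_comm])
  rw [add_right_inj] at hsum
  rw [hsum]

namespace ZMod

section Fourier

variable {N : ℕ}

def mask (C : Finset (ZMod N)) : ℤ[X] :=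
  ∑ c ∈ C, X ^ c.val

lemma mask_eval_one (C : Finset (ZMod N)) : (mask C).eval 1 = C.card := by
  simp [mask, eval_finsetSum]

def repCount (C T : Finset (ZMod N)) (x : ZMod N) : ℕ :=
  #{ct ∈ C ×ˢ T | ct.1 + ct.2 = x}

lemma existsUnique_add_iff_repCount_eq_one (C T : Finset (ZMod N)) (x : ZMod N) :
    (∃! ct : ZMod N × ZMod N, ct.1 ∈ C ∧ ct.2 ∈ T ∧ ct.1 + ct.2 = x) ↔ repCount C T x = 1 := by
  rw [repCount, card_eq_one_iff_existsUnique]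
  simp only [mem_filter, mem_product, and_assoc]

def Tiles (C : Finset (ZMod N)) : Prop :=
  ∃ T : Finset (ZMod N), ∀ x, repCount C T x = 1

variable [NeZero N]

def fourierSum (C : Finset (ZMod N)) (a : ZMod N) : ℂ :=
  ∑ c ∈ C, stdAddChar (c * a)

def IsSpectral (C : Finset (ZMod N)) : Prop :=
  ∃ Λ : Finset (ZMod N), Λ.card = C.card ∧ ∀ l ∈ Λ, ∀ l' ∈ Λ, l ≠ l' → fourierSum C (l - l') = 0

lemma tiles_iff_exists_set {C : Finset (ZMod N)} :
    Tiles C ↔ ∃ T : Set (ZMod N), ∀ x,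
      ∃! ct : ZMod N × ZMod N, ct.1 ∈ C ∧ ct.2 ∈ T ∧ ct.1 + ct.2 = x := by
  simp only [Tiles, ← existsUnique_add_iff_repCount_eq_one]
  constructor
  · rintro ⟨T, hT⟩
    exact ⟨T, by simpa using hT⟩
  · rintro ⟨T, hT⟩
    exact ⟨T.toFinite.toFinset, by simpa using hT⟩

lemma exp_mul_sub_eq_stdAddChar (c l l' : ZMod N) :
    Complex.exp (2 * Real.pi * Complex.I * ((c.val : ℂ) * ((l.val : ℂ) - (l'.val : ℂ)) / N)) =
      stdAddChar (c * (l - l')) := by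
  have hcast : ((c.val * ((l.val : ℤ) - l'.val) : ℤ) : ZMod N) = c * (l - l') := by
    push_cast
    simp only [natCast_zmod_val]
  rw [← hcast, stdAddChar_coe]
  push_cast
  ring_nf

lemma isPrimitiveRoot_stdAddChar (a : ZMod N) :
    IsPrimitiveRoot (stdAddChar a) (addOrderOf a) := by
  have key (l : ℕ) : stdAddChar a ^ l = 1 ↔ addOrderOf a ∣ l := by
    rw [← AddChar.map_nsmul_eq_pow, ← AddChar.map_zero_eq_one (stdAddChar (N := N)),
      injective_stdAddChar.eq_iff, addOrderOf_dvd_iff_nsmul_eq_zero]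
  exact ⟨(key _).2 dvd_rfl, fun l hl => (key l).1 hl⟩

lemma stdAddChar_mul_eq_pow (c a : ZMod N) : stdAddChar (c * a) = stdAddChar a ^ c.val := by
  rw [← AddChar.map_nsmul_eq_pow, nsmul_eq_mul, natCast_zmod_val]

lemma fourierSum_eq_aeval_mask (C : Finset (ZMod N)) (a : ZMod N) :
    fourierSum C a = aeval (stdAddChar a) (mask C) := by
  simp [fourierSum, mask, stdAddChar_mul_eq_pow]

lemma fourierSum_eq_zero_iff (C : Finset (ZMod N)) (a : ZMod N) :
    fourierSum C a = 0 ↔ cyclotomic (addOrderOf a) ℤ ∣ mask C := by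
  have hpos := addOrderOf_pos a
  have hμ := isPrimitiveRoot_stdAddChar a
  rw [fourierSum_eq_aeval_mask, cyclotomic_eq_minpoly hμ hpos,
    minpoly.isIntegrallyClosed_dvd_iff (hμ.isIntegral hpos)]

lemma fourierSum_univ (a : ZMod N) : fourierSum univ a = if a = 0 then (N : ℂ) else 0 := by
  classical
  rw [fourierSum, AddChar.sum_mulShift a (isPrimitive_stdAddChar N), card]
  split_ifs <;> simp

lemma sum_repCount (C T : Finset (ZMod N)) : ∑ x, repCount C T x = C.card * T.card := by
  rw [← card_product, card_eq_sum_card_fiberwise (f := fun ct : ZMod N × ZMod N => ct.1 + ct.2)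
    fun _ _ => mem_univ _]
  rfl

lemma sum_repCount_mul_stdAddChar (C T : Finset (ZMod N)) (a : ZMod N) :
    ∑ x, (repCount C T x : ℂ) * stdAddChar (x * a) = fourierSum C a * fourierSum T a := by
  classical
  rw [fourierSum, fourierSum, sum_mul_sum, ← sum_product',
    ← sum_fiberwise_of_maps_to (g := fun ct : ZMod N × ZMod N => ct.1 + ct.2)
    fun _ _ => mem_univ _]
  refine sum_congr rfl fun x _ => ?_
  rw [repCount, ← nsmul_eq_mul, ← sum_const]
  refine sum_congr rfl fun ct hct => ?_
  rw [← AddChar.map_add_eq_mul, ← add_mul, (mem_filter.1 hct).2]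

lemma fourierSum_mul_eq_zero_of_repCount_eq_one {C T : Finset (ZMod N)}
    (h : ∀ x, repCount C T x = 1) {a : ZMod N} (ha : a ≠ 0) :
    fourierSum C a * fourierSum T a = 0 := by
  rw [← sum_repCount_mul_stdAddChar]
  simp only [h, Nat.cast_one, one_mul]
  exact (fourierSum_univ a).trans (if_neg ha)

lemma repCount_eq_one_of_card_mul_eq {C T : Finset (ZMod N)} (hcard : C.card * T.card = N)
    (h : ∀ a ≠ 0, fourierSum C a * fourierSum T a = 0) (x : ZMod N) : repCount C T x = 1 := by
  set g : ZMod N → ℂ := fun x => repCount C T x - 1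
  suffices hg : 𝓕 g = 0 by
    have := congr_fun (dft.map_eq_zero_iff.1 hg) x
    simpa [g, sub_eq_zero] using this
  ext k
  have hsplit : 𝓕 g k = ∑ x, (repCount C T x : ℂ) * stdAddChar (x * -k) - fourierSum univ (-k) := by
    rw [dft_apply, fourierSum, ← sum_sub_distrib]
    refine sum_congr rfl fun j _ => ?_
    rw [smul_eq_mul, ← mul_neg]
    ring
  rw [hsplit, fourierSum_univ, Pi.zero_apply]
  by_cases hk : -k = 0
  · simp only [hk, mul_zero, AddChar.map_zero_eq_one, mul_one, if_true]
    rw [sub_eq_zero]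
    exact_mod_cast (sum_repCount C T).trans hcard
  · rw [if_neg hk, sum_repCount_mul_stdAddChar, h _ hk, sub_zero]

end Fourier

section PrimePower

variable {p n : ℕ} {ι : Type*} [Fintype ι]

def digitSum (p : ℕ) (pos : ι → ℕ) (f : ι → Fin p) : ℕ :=
  ∑ i, (f i : ℕ) * p ^ pos i

def digitSet [DecidableEq ι] (p n : ℕ) (pos : ι → ℕ) : Finset (ZMod (p ^ n)) :=
  univ.image fun f : ι → Fin p => (digitSum p pos f : ZMod (p ^ n))

open scoped Classical in
def cyclotomicExponents (p n : ℕ) (C : Finset (ZMod (p ^ n))) : Finset ℕ :=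
  {j ∈ Icc 1 n | cyclotomic (p ^ j) ℤ ∣ mask C}

lemma mem_cyclotomicExponents {C : Finset (ZMod (p ^ n))} {j : ℕ} :
    j ∈ cyclotomicExponents p n C ↔ j ∈ Icc 1 n ∧ cyclotomic (p ^ j) ℤ ∣ mask C := by
  classical
  simp only [cyclotomicExponents, mem_filter]

variable [hp : Fact p.Prime] {pos : ι → ℕ}

lemma exists_addOrderOf_eq_pow {a : ZMod (p ^ n)} (ha : a ≠ 0) :
    ∃ j ∈ Icc 1 n, addOrderOf a = p ^ j := by
  obtain ⟨j, hjn, hj⟩ := (Nat.dvd_prime_pow hp.out).1 (card (p ^ n) ▸ addOrderOf_dvd_card (x := a))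
  refine ⟨j, mem_Icc.2 ⟨Nat.pos_of_ne_zero fun h0 => ha ?_, hjn⟩, hj⟩
  rwa [h0, pow_zero, AddMonoid.addOrderOf_eq_one_iff] at hj

lemma addOrderOf_natCast_pow {j : ℕ} (hj : j ≤ n) :
    addOrderOf ((p ^ (n - j) : ℕ) : ZMod (p ^ n)) = p ^ j := by
  rw [addOrderOf_coe _ (pow_ne_zero _ hp.out.ne_zero),
    Nat.gcd_eq_right (pow_dvd_pow p (Nat.sub_le n j)), Nat.pow_div (Nat.sub_le n j) hp.out.pos,
    Nat.sub_sub_self hj]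

lemma addOrderOf_intCast_of_pow_dvd {D : ℤ} {e : ℕ} (he : e < n) (h1 : (p : ℤ) ^ e ∣ D)
    (h2 : ¬ (p : ℤ) ^ (e + 1) ∣ D) : addOrderOf (D : ZMod (p ^ n)) = p ^ (n - e) := by
  obtain ⟨m, hm⟩ : ∃ m, n - e = m + 1 := ⟨n - e - 1, by omega⟩
  have key (k : ℕ) : p ^ k • (D : ZMod (p ^ n)) = 0 ↔ (p : ℤ) ^ n ∣ p ^ k * D := by
    rw [nsmul_eq_mul, ← Int.cast_natCast, ← Int.cast_mul, intCast_zmod_eq_zero_iff_dvd]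
    push_cast
    rfl
  obtain ⟨u, rfl⟩ := h1
  have hn : n = m + e + 1 := by omega
  rw [hm]
  apply addOrderOf_eq_prime_pow
  · rw [key, hn, ← mul_assoc, ← pow_add, pow_succ]
    intro h
    have hu : (p : ℤ) ∣ u :=
      (mul_dvd_mul_iff_left (pow_ne_zero _ (by exact_mod_cast hp.out.ne_zero))).1 h
    exact h2 (by rw [pow_succ]; exact mul_dvd_mul_left _ hu)
  · rw [key, ← mul_assoc, ← pow_add, hn, Nat.add_right_comm]
    exact dvd_mul_right _ u

lemma exists_addOrderOf_digitSum_sub (hpos : Function.Injective pos) (hlt : ∀ i, pos i < n)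
    {f g : ι → Fin p} (hfg : f ≠ g) :
    ∃ i, addOrderOf ((digitSum p pos f : ZMod (p ^ n)) - digitSum p pos g) = p ^ (n - pos i) := by
  set a : ι → ℤ := fun i => (f i : ℤ) - g i
  have ha : ∀ i, (p : ℤ) ∣ a i → a i = 0 := fun i h => by
    have hf := (f i).isLt
    have hg := (g i).isLt
    exact Int.eq_zero_of_abs_lt_dvd h (abs_sub_lt_iff.2 ⟨by omega, by omega⟩)
  have hne : a ≠ 0 := fun h => hfg (funext fun i => Fin.ext (by
    have := congr_fun h i; simp only [a, Pi.zero_apply, sub_eq_zero] at this; exact_mod_cast this))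
  obtain ⟨i, h1, h2⟩ :=
    Int.exists_pow_dvd_sum_mul_pow (by exact_mod_cast hp.out.ne_zero) hpos ha hne
  refine ⟨i, ?_⟩
  have hcast : (digitSum p pos f : ZMod (p ^ n)) - digitSum p pos g =
      ((∑ j, a j * (p : ℤ) ^ pos j : ℤ) : ZMod (p ^ n)) := by
    simp only [digitSum, a, sub_mul, sum_sub_distrib]
    push_cast
    rfl
  rw [hcast, addOrderOf_intCast_of_pow_dvd (hlt i) h1 h2]

lemma digitSum_injective (hpos : Function.Injective pos) (hlt : ∀ i, pos i < n) :
    Function.Injective fun f : ι → Fin p => (digitSum p pos f : ZMod (p ^ n)) := by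
  intro f g hfg
  by_contra hne
  obtain ⟨i, hi⟩ := exists_addOrderOf_digitSum_sub hpos hlt hne
  rw [show (digitSum p pos f : ZMod (p ^ n)) = digitSum p pos g from hfg, sub_self,
    addOrderOf_zero] at hi
  exact (Nat.one_lt_pow (by have := hlt i; omega) hp.out.one_lt).ne hi

variable [DecidableEq ι]

lemma card_digitSet (hpos : Function.Injective pos) (hlt : ∀ i, pos i < n) :
    (digitSet p n pos).card = p ^ Fintype.card ι := by
  rw [digitSet, card_image_of_injective _ (digitSum_injective hpos hlt), card_univ,
    Fintype.card_fun, Fintype.card_fin]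

lemma exists_addOrderOf_sub_of_mem_digitSet (hpos : Function.Injective pos) (hlt : ∀ i, pos i < n)
    {θ θ' : ZMod (p ^ n)} (hθ : θ ∈ digitSet p n pos) (hθ' : θ' ∈ digitSet p n pos) (hne : θ ≠ θ') :
    ∃ i, addOrderOf (θ - θ') = p ^ (n - pos i) := by
  obtain ⟨f, -, rfl⟩ := mem_image.1 hθ
  obtain ⟨g, -, rfl⟩ := mem_image.1 hθ'
  exact exists_addOrderOf_digitSum_sub hpos hlt fun h => hne (h ▸ rfl)

lemma fourierSum_digitSet_eq_zero (hpos : Function.Injective pos) (hlt : ∀ i, pos i < n)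
    {a : ZMod (p ^ n)} {i : ι} (ha : addOrderOf a = p ^ (pos i + 1)) :
    fourierSum (digitSet p n pos) a = 0 := by
  have hterm (f : ι → Fin p) : stdAddChar ((digitSum p pos f : ZMod (p ^ n)) * a) =
      ∏ j, (stdAddChar a ^ p ^ pos j) ^ (f j : ℕ) := by
    rw [← nsmul_eq_mul, AddChar.map_nsmul_eq_pow, digitSum, ← prod_pow_eq_pow_sum]
    exact prod_congr rfl fun j _ => by rw [← pow_mul, mul_comm]
  rw [fourierSum, digitSet, sum_image fun f _ g _ h => digitSum_injective hpos hlt h]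
  simp only [hterm]
  rw [← Fintype.prod_sum fun j (d : Fin p) => (stdAddChar a ^ p ^ pos j) ^ (d : ℕ)]
  refine prod_eq_zero (mem_univ i) ?_
  have hζ : IsPrimitiveRoot (stdAddChar a ^ p ^ pos i) p :=
    (ha ▸ isPrimitiveRoot_stdAddChar a).pow (pow_pos hp.out.pos _) (pow_succ _ _)
  rw [Fin.sum_univ_eq_sum_range (fun d => (stdAddChar a ^ p ^ pos i) ^ d)]
  exact hζ.geom_sum_eq_zero hp.out.one_lt

lemma pow_card_cyclotomicExponents_dvd (C : Finset (ZMod (p ^ n))) :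
    p ^ (cyclotomicExponents p n C).card ∣ C.card := by
  have := pow_card_dvd_eval_one_of_cyclotomic_dvd (P := mask C) (S := cyclotomicExponents p n C)
    (fun j hj => (mem_Icc.1 (mem_cyclotomicExponents.1 hj).1).1)
    fun j hj => (mem_cyclotomicExponents.1 hj).2
  rw [mask_eval_one] at this
  exact_mod_cast this

lemma fourierSum_eq_zero_iff_mem {C : Finset (ZMod (p ^ n))} {a : ZMod (p ^ n)} {j : ℕ}
    (hj : j ∈ Icc 1 n) (ha : addOrderOf a = p ^ j) :
    fourierSum C a = 0 ↔ j ∈ cyclotomicExponents p n C := by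
  rw [fourierSum_eq_zero_iff, ha, mem_cyclotomicExponents, and_iff_right hj]

lemma card_le_of_forall_addOrderOf_sub {S : Finset ℕ} (hS : S ⊆ Icc 1 n)
    {Λ : Finset (ZMod (p ^ n))}
    (hΛ : ∀ l ∈ Λ, ∀ l' ∈ Λ, l ≠ l' → ∃ j ∈ S, addOrderOf (l - l') = p ^ j) :
    Λ.card ≤ p ^ S.card := by
  set pos : ↥(Icc 1 n \ S) → ℕ := fun j => n - j
  have hle (j : ↥(Icc 1 n \ S)) : 1 ≤ (j : ℕ) ∧ (j : ℕ) ≤ n := mem_Icc.1 (mem_sdiff.1 j.2).1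
  have hpos : Function.Injective pos := fun i j h => Subtype.ext (by
    have := hle i; have := hle j; simp only [pos] at h; omega)
  have hlt (j : ↥(Icc 1 n \ S)) : pos j < n := by have := hle j; simp only [pos]; omega
  -- The differences in `Λ` and in this digit set have orders `p ^ j` with `j ∈ S`, resp. `j ∉ S`.
  have hdirect := card_mul_card_le_of_sub_eq_sub (A := Λ) (B := digitSet p n pos)
    fun l hl l' hl' θ hθ θ' hθ' hdiff => by
      by_contra hne
      obtain ⟨j, hjS, hj⟩ := hΛ l hl l' hl' hne
      obtain ⟨k, hk⟩ := exists_addOrderOf_sub_of_mem_digitSet hpos hlt hθ' hθ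
        fun h => hne (by rwa [h, sub_self, sub_eq_zero] at hdiff)
      rw [← hdiff, hj] at hk
      have hjk : j = k := by
        have := hle k; have := Nat.pow_right_injective hp.out.two_le hk; simp only [pos] at this
        omega
      exact (mem_sdiff.1 k.2).2 (hjk ▸ hjS)
  have hSn : S.card ≤ n := by simpa using card_le_card hS
  rw [card_digitSet hpos hlt, Fintype.card_coe, card_sdiff_of_subset hS, Nat.card_Icc,
    Nat.add_sub_cancel, card] at hdirect
  have hpn : p ^ n = p ^ S.card * p ^ (n - S.card) := by rw [← pow_add, Nat.add_sub_cancel' hSn]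
  exact Nat.le_of_mul_le_mul_right (hdirect.trans_eq hpn) (pow_pos hp.out.pos _)

theorem isSpectral_iff_card_eq {C : Finset (ZMod (p ^ n))} (hC : C.Nonempty) :
    IsSpectral C ↔ C.card = p ^ (cyclotomicExponents p n C).card := by
  set S := cyclotomicExponents p n C
  have hS : S ⊆ Icc 1 n := fun j hj => (mem_cyclotomicExponents.1 hj).1
  constructor
  · rintro ⟨Λ, hΛ, horth⟩
    refine le_antisymm (hΛ ▸ card_le_of_forall_addOrderOf_sub hS fun l hl l' hl' hne => ?_)
      (Nat.le_of_dvd hC.card_pos (pow_card_cyclotomicExponents_dvd C))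
    obtain ⟨j, hj, hord⟩ := exists_addOrderOf_eq_pow (sub_ne_zero.2 hne)
    exact ⟨j, (fourierSum_eq_zero_iff_mem hj hord).1 (horth l hl l' hl' hne), hord⟩
  · intro hcard
    set pos : ↥S → ℕ := fun j => n - j
    have hle (j : ↥S) : 1 ≤ (j : ℕ) ∧ (j : ℕ) ≤ n := mem_Icc.1 (hS j.2)
    have hpos : Function.Injective pos := fun i j h => Subtype.ext (by
      have := hle i; have := hle j; simp only [pos] at h; omega)
    have hlt (j : ↥S) : pos j < n := by have := hle j; simp only [pos]; omega
    refine ⟨digitSet p n pos, by rw [card_digitSet hpos hlt, Fintype.card_coe, hcard],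
      fun l hl l' hl' hne => ?_⟩
    obtain ⟨j, hj⟩ := exists_addOrderOf_sub_of_mem_digitSet hpos hlt hl hl' hne
    rw [show n - pos j = j by have := hle j; simp only [pos]; omega] at hj
    exact (fourierSum_eq_zero_iff_mem (hS j.2) hj).2 j.2

lemma card_eq_of_repCount_eq_one {C T : Finset (ZMod (p ^ n))} (hT : ∀ x, repCount C T x = 1) :
    C.card = p ^ (cyclotomicExponents p n C).card := by
  set sC := (cyclotomicExponents p n C).card
  set sT := (cyclotomicExponents p n T).card
  have hprod : C.card * T.card = p ^ n := by simp [← sum_repCount, hT]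
  have hcover : n ≤ sC + sT := by
    calc n = (Icc 1 n).card := by simp
      _ ≤ (cyclotomicExponents p n C ∪ cyclotomicExponents p n T).card :=
          card_le_card fun j hj => ?_
      _ ≤ sC + sT := card_union_le _ _
    have hord := addOrderOf_natCast_pow (p := p) (mem_Icc.1 hj).2
    have ha : ((p ^ (n - j) : ℕ) : ZMod (p ^ n)) ≠ 0 := fun h => by
      rw [h, addOrderOf_zero] at hord
      exact (Nat.one_lt_pow (by have := (mem_Icc.1 hj).1; omega) hp.out.one_lt).ne hord
    rcases mul_eq_zero.1 (fourierSum_mul_eq_zero_of_repCount_eq_one hT ha) with h | h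
    · exact mem_union_left _ ((fourierSum_eq_zero_iff_mem hj hord).1 h)
    · exact mem_union_right _ ((fourierSum_eq_zero_iff_mem hj hord).1 h)
  obtain ⟨u, hu⟩ := pow_card_cyclotomicExponents_dvd C
  obtain ⟨v, hv⟩ := pow_card_cyclotomicExponents_dvd T
  have huv : p ^ (sC + sT) * (u * v) = p ^ n := by rw [pow_add, ← hprod, hu, hv]; ring
  have huv_le : u * v ≤ 1 := Nat.le_of_mul_le_mul_left
    (by rw [huv, mul_one]; exact Nat.pow_le_pow_right hp.out.pos hcover) (pow_pos hp.out.pos _)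
  have huv_ne : u * v ≠ 0 := fun h => by
    rw [h, mul_zero] at huv; exact pow_ne_zero _ hp.out.ne_zero huv.symm
  rw [hu, Nat.eq_one_of_mul_eq_one_right (by omega : u * v = 1), mul_one]

lemma tiles_of_card_eq {C : Finset (ZMod (p ^ n))}
    (hcard : C.card = p ^ (cyclotomicExponents p n C).card) : Tiles C := by
  set S := cyclotomicExponents p n C
  have hS : S ⊆ Icc 1 n := fun j hj => (mem_cyclotomicExponents.1 hj).1
  set pos : ↥(Icc 1 n \ S) → ℕ := fun j => j - 1
  have hle (j : ↥(Icc 1 n \ S)) : 1 ≤ (j : ℕ) ∧ (j : ℕ) ≤ n := mem_Icc.1 (mem_sdiff.1 j.2).1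
  have hpos : Function.Injective pos := fun i j h => Subtype.ext (by
    have := hle i; have := hle j; simp only [pos] at h; omega)
  have hlt (j : ↥(Icc 1 n \ S)) : pos j < n := by have := hle j; simp only [pos]; omega
  refine ⟨digitSet p n pos, repCount_eq_one_of_card_mul_eq ?_ fun a ha => ?_⟩
  · rw [card_digitSet hpos hlt, Fintype.card_coe, card_sdiff_of_subset hS, Nat.card_Icc, hcard,
      ← pow_add, Nat.add_sub_cancel, Nat.add_sub_cancel' (by simpa using card_le_card hS)]
  · obtain ⟨j, hj, hord⟩ := exists_addOrderOf_eq_pow ha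
    by_cases hjS : j ∈ S
    · rw [(fourierSum_eq_zero_iff_mem hj hord).2 hjS, zero_mul]
    · have hj' : pos ⟨j, mem_sdiff.2 ⟨hj, hjS⟩⟩ + 1 = j := by
        have := (mem_Icc.1 hj).1; simp only [pos]; omega
      rw [fourierSum_digitSet_eq_zero hpos hlt (hj'.symm ▸ hord), mul_zero]

theorem tiles_iff_card_eq {C : Finset (ZMod (p ^ n))} :
    Tiles C ↔ C.card = p ^ (cyclotomicExponents p n C).card :=
  ⟨fun ⟨_, hT⟩ => card_eq_of_repCount_eq_one hT, tiles_of_card_eq⟩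

end PrimePower

end ZMod

theorem zmod_spectral_iff_tile_general
    (p γ : ℕ) [Fact p.Prime]
    (C : Finset (ZMod (p ^ γ))) (hCne : C.Nonempty) :
    (∃ Λ : Finset (ZMod (p ^ γ)), Λ.card = C.card ∧
      ∀ l ∈ Λ, ∀ l' ∈ Λ, l ≠ l' →
        ∑ c ∈ C, Complex.exp (2 * Real.pi * Complex.I *
          ((c.val : ℂ) * ((l.val : ℂ) - (l'.val : ℂ)) / (p : ℂ) ^ γ)) = 0) ↔
    (∃ T : Set (ZMod (p ^ γ)), ∀ x : ZMod (p ^ γ),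
      ∃! ct : ZMod (p ^ γ) × ZMod (p ^ γ), ct.1 ∈ C ∧ ct.2 ∈ T ∧ ct.1 + ct.2 = x) := by
  have hexp (c l l' : ZMod (p ^ γ)) : Complex.exp (2 * Real.pi * Complex.I *
      ((c.val : ℂ) * ((l.val : ℂ) - (l'.val : ℂ)) / (p : ℂ) ^ γ)) =
        ZMod.stdAddChar (c * (l - l')) := by
    simpa using ZMod.exp_mul_sub_eq_stdAddChar c l l'
  simp only [hexp, ← ZMod.tiles_iff_exists_set]
  exact (ZMod.isSpectral_iff_card_eq hCne).trans ZMod.tiles_iff_card_eq.symm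

/-- a nonempty subset of `ℤ/p^γℤ` is a spectral set iff it tiles `ℤ/p^γℤ`. -/
theorem zmod_spectral_iff_tile
    (p γ : ℕ) [Fact p.Prime] (hγ : 1 ≤ γ)
    (C : Finset (ZMod (p ^ γ))) (hCne : C.Nonempty) :
    (∃ Λ : Finset (ZMod (p ^ γ)), Λ.card = C.card ∧
      ∀ l ∈ Λ, ∀ l' ∈ Λ, l ≠ l' →
        ∑ c ∈ C, Complex.exp (2 * Real.pi * Complex.I *
          ((c.val : ℂ) * ((l.val : ℂ) - (l'.val : ℂ)) / (p : ℂ) ^ γ)) = 0) ↔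
    (∃ T : Set (ZMod (p ^ γ)), ∀ x : ZMod (p ^ γ),
      ∃! ct : ZMod (p ^ γ) × ZMod (p ^ γ), ct.1 ∈ C ∧ ct.2 ∈ T ∧ ct.1 + ct.2 = x) :=
  zmod_spectral_iff_tile_general p γ C hCne
end
end

section
/- Let p be a prime, γ ≥ 1 an integer, and C a nonempty subset of ℤ/p^γℤ. Then C tiles ℤ/p^γℤ if and only if for every integer n with 1 ≤ n ≤ γ the image of C under the natural projection ℤ/p^γℤ → ℤ/p^nℤ has cardinality p^{k_n} for some k_n ∈ ℕ. -/
/-!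
The reduction `ℤ/p^(n+1) → ℤ/p^n` has fibres of size `p`. If `C ⊕ T = ℤ/p^(n+1)`, then at a
primitive `p^(n+1)`-th root of unity the product of the mask polynomials of `C` and `T` vanishes,
so one of them is divisible by the cyclotomic polynomial `Φ_{p^(n+1)}`, which forces that set to be
a union of fibres; the reductions of `C` and `T` then tile `ℤ/p^n`. Iterating, `|C mod p^n|`
divides `p^n`.

Conversely, if every `|C mod p^n|` is a power of `p`, each step `n → n+1` either keeps the size
(the reduction is injective on `C mod p^(n+1)`) or multiplies it by `p` (`C mod p^(n+1)` is a union
of full fibres). A complement of `C mod p^n` lifts to one of `C mod p^(n+1)`: take its full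
preimage in the first case, and a set of representatives in the second.
-/

open Finset Polynomial

section Tiling

variable {G : Type*}

def IsTiling [Add G] (A B : Set G) : Prop :=
  Set.BijOn (fun ab : G × G => ab.1 + ab.2) (A ×ˢ B) Set.univ

theorem isTiling_iff [Add G] {A B : Set G} :
    IsTiling A B ↔ ∀ x : G, ∃! ab : G × G, ab.1 ∈ A ∧ ab.2 ∈ B ∧ ab.1 + ab.2 = x := by
  constructor
  · intro h x
    obtain ⟨ab, hab, rfl⟩ := h.surjOn (Set.mem_univ x)
    exact ⟨ab, ⟨hab.1, hab.2, rfl⟩, fun ab' h' => h.injOn ⟨h'.1, h'.2.1⟩ hab h'.2.2⟩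
  · refine fun h => ⟨Set.mapsTo_univ _ _, ?_, fun x _ => ?_⟩
    · rintro ab ⟨ha, hb⟩ ab' ⟨ha', hb'⟩ heq
      exact (h _).unique ⟨ha, hb, rfl⟩ ⟨ha', hb', heq.symm⟩
    · obtain ⟨ab, ⟨ha, hb, hx⟩, -⟩ := h x
      exact ⟨ab, ⟨ha, hb⟩, hx⟩

namespace IsTiling

variable [AddCommGroup G] {A B : Set G}

theorem symm (h : IsTiling A B) : IsTiling B A := by
  have hswap : Set.BijOn Prod.swap (B ×ˢ A) (A ×ˢ B) := by
    simpa only [Set.image_swap_prod] using Prod.swap_injective.injOn.bijOn_image (s := B ×ˢ A)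
  simpa [IsTiling, Function.comp_def, add_comm] using h.comp hswap

theorem sum_add_eq_sum [Fintype G] {M : Type*} [AddCommMonoid M] {A B : Finset G}
    (h : IsTiling (A : Set G) B) (φ : G → M) :
    ∑ ab ∈ A ×ˢ B, φ (ab.1 + ab.2) = ∑ x, φ x :=
  sum_nbij (fun ab => ab.1 + ab.2) (fun _ _ => mem_univ _) (by simpa using h.injOn)
    (by simpa using h.surjOn) (fun _ _ => rfl)

theorem card_mul_card [Fintype G] {A B : Finset G} (h : IsTiling (A : Set G) B) :
    #A * #B = Fintype.card G := by
  simpa [card_product] using h.sum_add_eq_sum (fun _ => (1 : ℕ))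

theorem sum_mul_sum_eq_zero [Fintype G] {R : Type*} [CommRing R] [IsDomain R] {A B : Finset G}
    (h : IsTiling (A : Set G) B) {ψ : AddChar G R} (hψ : ψ ≠ 1) :
    (∑ a ∈ A, ψ a) * (∑ b ∈ B, ψ b) = 0 := by
  rw [sum_mul_sum, ← sum_product', ← AddChar.sum_eq_zero_of_ne_one hψ, ← h.sum_add_eq_sum]
  simp [AddChar.map_add_eq_mul]

variable {G' F : Type*} [AddCommGroup G'] [FunLike F G G'] [AddMonoidHomClass F G G'] {f : F}

theorem image (hf : Function.Surjective f) (h : IsTiling A B) (hB : f ⁻¹' (f '' B) ⊆ B) :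
    IsTiling (f '' A) (f '' B) := by
  refine ⟨Set.mapsTo_univ _ _, ?_, fun x' _ => ?_⟩
  · rintro ⟨_, _⟩ ⟨⟨a₁, ha₁, rfl⟩, ⟨b₁, hb₁, rfl⟩⟩ ⟨_, _⟩ ⟨⟨a₂, ha₂, rfl⟩, ⟨b₂, hb₂, rfl⟩⟩ hsum
    set e := a₂ + b₂ - (a₁ + b₁)
    have he : f e = 0 := by simpa [e, sub_eq_zero] using hsum.symm
    have hb : b₁ + e ∈ B := hB ⟨b₁, hb₁, by simp [he]⟩
    have := h.injOn (show (a₁, b₁ + e) ∈ A ×ˢ B from ⟨ha₁, hb⟩)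
      (show (a₂, b₂) ∈ A ×ˢ B from ⟨ha₂, hb₂⟩) (by simp only [e]; abel)
    simp only [Prod.mk.injEq] at this ⊢
    rw [this.1, ← this.2, map_add, he, add_zero]
    exact ⟨rfl, rfl⟩
  · obtain ⟨x, rfl⟩ := hf x'
    obtain ⟨⟨a, b⟩, ⟨ha, hb⟩, hx⟩ := h.surjOn (Set.mem_univ x)
    exact ⟨(f a, f b), ⟨⟨a, ha, rfl⟩, ⟨b, hb, rfl⟩⟩, by simp [← hx]⟩

theorem of_injOn_image (hA : Set.InjOn f A) {B' : Set G'} (h : IsTiling (f '' A) B') :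
    IsTiling A (f ⁻¹' B') := by
  refine ⟨Set.mapsTo_univ _ _, ?_, fun x _ => ?_⟩
  · rintro ⟨a₁, b₁⟩ ⟨ha₁, hb₁⟩ ⟨a₂, b₂⟩ ⟨ha₂, hb₂⟩ hsum
    have := h.injOn (show (f a₁, f b₁) ∈ (f '' A) ×ˢ B' from ⟨Set.mem_image_of_mem f ha₁, hb₁⟩)
      (show (f a₂, f b₂) ∈ (f '' A) ×ˢ B' from ⟨Set.mem_image_of_mem f ha₂, hb₂⟩)
      (by simpa using congrArg f hsum)
    simp only [Prod.mk.injEq] at this ⊢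
    have ha : a₁ = a₂ := hA ha₁ ha₂ this.1
    subst ha
    exact ⟨rfl, add_left_cancel hsum⟩
  · obtain ⟨⟨_, b'⟩, ⟨⟨a, ha, rfl⟩, hb'⟩, hx⟩ := h.surjOn (Set.mem_univ (f x))
    refine ⟨(a, x - a), ⟨ha, ?_⟩, add_sub_cancel a x⟩
    simpa [← hx] using hb'

theorem of_preimage_image_subset {σ : G' → G} (hσ : Function.RightInverse σ f)
    (hA : f ⁻¹' (f '' A) ⊆ A) {B' : Set G'} (h : IsTiling (f '' A) B') :
    IsTiling A (σ '' B') := by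
  refine ⟨Set.mapsTo_univ _ _, ?_, fun x _ => ?_⟩
  · rintro ⟨a₁, _⟩ ⟨ha₁, ⟨b₁, hb₁, rfl⟩⟩ ⟨a₂, _⟩ ⟨ha₂, ⟨b₂, hb₂, rfl⟩⟩ hsum
    have := h.injOn (show (f a₁, b₁) ∈ (f '' A) ×ˢ B' from ⟨Set.mem_image_of_mem f ha₁, hb₁⟩)
      (show (f a₂, b₂) ∈ (f '' A) ×ˢ B' from ⟨Set.mem_image_of_mem f ha₂, hb₂⟩)
      (by simpa [hσ _] using congrArg f hsum)
    simp only [Prod.mk.injEq] at this ⊢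
    rw [this.2] at hsum ⊢
    exact ⟨add_right_cancel hsum, rfl⟩
  · obtain ⟨⟨_, b'⟩, ⟨⟨a, ha, rfl⟩, hb'⟩, hx⟩ := h.surjOn (Set.mem_univ (f x))
    refine ⟨(x - σ b', σ b'), ⟨hA ⟨a, ha, ?_⟩, ⟨b', hb', rfl⟩⟩, sub_add_cancel x (σ b')⟩
    simp [hσ b', ← hx]

end IsTiling

end Tiling

namespace AddMonoidHom

variable {G G' F : Type*} [AddGroup G] [AddGroup G'] [Fintype G] [Fintype G'] [DecidableEq G']
  [FunLike F G G'] [AddMonoidHomClass F G G'] {f : F}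

theorem card_fiber_mul_card (hf : Function.Surjective f) (y : G') :
    #{x | f x = y} * Fintype.card G' = Fintype.card G := calc
  _ = ∑ y' : G', #{x | f x = y'} := by
    rw [sum_congr rfl fun y' _ => card_fiber_eq_of_mem_range f (hf y') (hf y), sum_const,
      card_univ, smul_eq_mul, mul_comm]
  _ = Fintype.card G := by
    rw [← card_univ, card_eq_sum_card_fiberwise (fun _ _ => mem_univ (f _))]

theorem card_filter_mem_mul_card (hf : Function.Surjective f) (S : Finset G') :
    #{x | f x ∈ S} * Fintype.card G' = #S * Fintype.card G := by
  rw [card_eq_sum_card_fiberwise (s := {x | f x ∈ S}) (fun x hx => (mem_filter.1 hx).2), sum_mul,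
    ← smul_eq_mul, ← sum_const]
  refine sum_congr rfl fun y hy => ?_
  rw [filter_filter, ← card_fiber_mul_card hf y]
  congr 2
  exact filter_congr fun x _ => ⟨And.right, fun hx => ⟨hx ▸ hy, hx⟩⟩

theorem card_mul_card_le_card_image_mul_card (hf : Function.Surjective f) (A : Finset G) :
    #A * Fintype.card G' ≤ #(A.image f) * Fintype.card G := by
  rw [← card_filter_mem_mul_card hf]
  exact Nat.mul_le_mul_right _ (card_le_card fun x hx => by simpa using ⟨x, hx, rfl⟩)

theorem preimage_image_subset_of_card_mul_card_eq (hf : Function.Surjective f) {A : Finset G}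
    (h : #A * Fintype.card G' = #(A.image f) * Fintype.card G) :
    f ⁻¹' (f '' A) ⊆ A := by
  have hsub : A ⊆ univ.filter (fun x => f x ∈ A.image f) := fun x hx => by
    simpa using ⟨x, hx, rfl⟩
  have hcard : #(univ.filter (fun x => f x ∈ A.image f)) ≤ #A := by
    rw [← Nat.mul_le_mul_right_iff (Fintype.card_pos (α := G')), card_filter_mem_mul_card hf, h]
  rintro x ⟨a, ha, hfx⟩
  rw [mem_coe, eq_of_subset_of_card_le hsub hcard]
  simpa using ⟨a, ha, hfx⟩

end AddMonoidHom

theorem Polynomial.coeff_geom_sum_mul_of_natDegree_lt {R : Type*} [Semiring R] {m q : ℕ}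
    {B : R[X]} (hB : B.natDegree < m) {r i : ℕ} (hr : r < m) (hi : i < q) :
    ((∑ k ∈ range q, (X ^ m) ^ k) * B).coeff (r + m * i) = B.coeff r := by
  rw [sum_mul, finsetSum_coeff, sum_eq_single_of_mem i (mem_range.2 hi)]
  · rw [← pow_mul, coeff_X_pow_mul', if_pos (Nat.le_add_left _ _), Nat.add_sub_cancel]
  · intro k _ hki
    rw [← pow_mul, coeff_X_pow_mul']
    split_ifs with hle
    · refine coeff_eq_zero_of_natDegree_lt ?_
      have hk : m * (k + 1) ≤ m * i := Nat.mul_le_mul_left m (by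
        by_contra hik
        have : m * (i + 1) ≤ m * k := Nat.mul_le_mul_left m (by omega)
        rw [mul_add] at this
        omega)
      rw [mul_add] at hk
      omega
    · rfl

theorem Polynomial.natDegree_lt_of_natDegree_cyclotomic_prime_pow_mul_lt {R : Type*} [CommRing R]
    [Nontrivial R] {p n : ℕ} (hp : p.Prime) {B : R[X]}
    (h : (cyclotomic (p ^ (n + 1)) R * B).natDegree < p ^ (n + 1)) : B.natDegree < p ^ n := by
  rcases eq_or_ne B 0 with rfl | hB0
  · exact pow_pos hp.pos _
  have hsplit : p ^ (n + 1) = p ^ n * (p - 1) + p ^ n := by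
    rw [pow_succ, Nat.mul_sub_one, Nat.sub_add_cancel (Nat.le_mul_of_pos_right _ hp.pos)]
  rw [(cyclotomic.monic _ R).natDegree_mul' hB0, natDegree_cyclotomic,
    Nat.totient_prime_pow_succ hp] at h
  omega

namespace ZMod

variable {p : ℕ}

theorem image_castHom_self_s3 {N : ℕ} (h : N ∣ N) (C : Finset (ZMod N)) :
    C.image (castHom h (ZMod N)) = C := by
  rw [show castHom h (ZMod N) = RingHom.id _ from Subsingleton.elim _ _]
  exact image_id

theorem image_castHom_image_castHom_s3 {m d N : ℕ} (hm : m ∣ d) (hd : d ∣ N) (C : Finset (ZMod N)) :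
    (C.image (castHom hd (ZMod d))).image (castHom hm (ZMod m)) =
      C.image (castHom (hm.trans hd) (ZMod m)) := by
  rw [image_image, ← RingHom.coe_comp, castHom_comp]

def powSuccReduction (p n : ℕ) : ZMod (p ^ (n + 1)) →+* ZMod (p ^ n) :=
  castHom (pow_dvd_pow p n.le_succ) _

theorem powSuccReduction_surjective (n : ℕ) : Function.Surjective (powSuccReduction p n) :=
  castHom_surjective _

variable [Fact p.Prime]

theorem powSuccReduction_natCast_val (n : ℕ) (y : ZMod (p ^ n)) :
    powSuccReduction p n (y.val : ZMod (p ^ (n + 1))) = y := by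
  rw [map_natCast, natCast_zmod_val]

theorem powSuccReduction_eq_iff {n : ℕ} {x y : ZMod (p ^ (n + 1))} :
    powSuccReduction p n x = powSuccReduction p n y ↔ x.val % p ^ n = y.val % p ^ n := by
  simp only [powSuccReduction, castHom_apply, cast_eq_val, natCast_eq_natCast_iff']

theorem preimage_image_powSuccReduction_subset {K : Type*} [Field K] [CharZero K] {n : ℕ} {ζ : K}
    (hζ : IsPrimitiveRoot ζ (p ^ (n + 1))) {S : Finset (ZMod (p ^ (n + 1)))}
    (hS : ∑ s ∈ S, ζ ^ s.val = 0) :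
    powSuccReduction p n ⁻¹' (powSuccReduction p n '' S) ⊆ S := by
  have hp : 0 < p := (Fact.out : p.Prime).pos
  -- `A = Φ_{p^(n+1)} * B` with `Φ_{p^(n+1)} = ∑_{i<p} X^(p^n * i)` and `deg B < p^n`, so the
  -- coefficients of the mask polynomial `A` only depend on the exponent modulo `p^n`.
  set A : ℚ[X] := ∑ s ∈ S, X ^ s.val
  have hA_coeff (x : ZMod (p ^ (n + 1))) : A.coeff x.val = if x ∈ S then 1 else 0 := by
    simp only [A, finsetSum_coeff, coeff_X_pow, val_injective _ |>.eq_iff, sum_ite_eq]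
  have hA_natDegree : A.natDegree < p ^ (n + 1) := by
    refine Nat.lt_of_le_sub_one (pow_pos hp _) (natDegree_sum_le_of_forall_le _ _ fun s _ => ?_)
    exact natDegree_X_pow_le _ |>.trans (Nat.le_sub_one_of_lt (val_lt s))
  obtain ⟨B, hAB⟩ : cyclotomic (p ^ (n + 1)) ℚ ∣ A := by
    rw [cyclotomic_eq_minpoly_rat hζ (pow_pos hp _)]
    exact minpoly.dvd ℚ ζ (by simpa [A, map_sum] using hS)
  have hB : B.natDegree < p ^ n :=
    natDegree_lt_of_natDegree_cyclotomic_prime_pow_mul_lt Fact.out (hAB ▸ hA_natDegree)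
  have hA_coeff_mod (x : ZMod (p ^ (n + 1))) : A.coeff x.val = B.coeff (x.val % p ^ n) := by
    rw [hAB, cyclotomic_prime_pow_eq_geom_sum Fact.out]
    conv_lhs => rw [← Nat.mod_add_div x.val (p ^ n)]
    refine coeff_geom_sum_mul_of_natDegree_lt hB (Nat.mod_lt _ (pow_pos hp _)) ?_
    rw [Nat.div_lt_iff_lt_mul (pow_pos hp _), ← pow_succ']
    exact val_lt x
  rintro y ⟨s, hs, hsy⟩
  have := hA_coeff y
  rw [hA_coeff_mod, ← powSuccReduction_eq_iff.1 hsy, ← hA_coeff_mod, hA_coeff,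
    if_pos (mem_coe.1 hs)] at this
  split_ifs at this with hy
  · exact hy
  · exact absurd this one_ne_zero

end ZMod

section Tower

open ZMod

variable {p : ℕ} [Fact p.Prime]

theorem IsTiling.image_powSuccReduction {n : ℕ} {A B : Finset (ZMod (p ^ (n + 1)))}
    (h : IsTiling (A : Set (ZMod (p ^ (n + 1)))) B) :
    IsTiling (powSuccReduction p n '' A) (powSuccReduction p n '' B) := by
  have hp := (Fact.out : p.Prime)
  have hpow : 1 < p ^ (n + 1) := Nat.one_lt_pow n.succ_ne_zero hp.one_lt
  have hζ := Complex.isPrimitiveRoot_exp (p ^ (n + 1)) (pow_ne_zero _ hp.ne_zero)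
  set ψ := AddChar.zmodChar _ hζ.pow_eq_one
  have hψ : ψ ≠ 1 := by
    rw [AddChar.zmod_char_ne_one_iff, AddChar.zmodChar_apply, val_one'' hpow.ne', pow_one]
    exact hζ.ne_one hpow
  rcases mul_eq_zero.1 (h.sum_mul_sum_eq_zero hψ) with hA | hB
  · exact (h.symm.image (powSuccReduction_surjective n)
      (preimage_image_powSuccReduction_subset hζ hA)).symm
  · exact h.image (powSuccReduction_surjective n) (preimage_image_powSuccReduction_subset hζ hB)

theorem exists_isTiling_of_isTiling_image_powSuccReduction {n a b : ℕ}
    {A : Finset (ZMod (p ^ (n + 1)))}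
    (ha : #A = p ^ a) (hb : #(A.image (powSuccReduction p n)) = p ^ b) {B' : Set (ZMod (p ^ n))}
    (h : IsTiling (powSuccReduction p n '' A) B') :
    ∃ B : Set (ZMod (p ^ (n + 1))), IsTiling (A : Set (ZMod (p ^ (n + 1)))) B := by
  have hp := (Fact.out : p.Prime).one_lt
  have hba : b ≤ a := (Nat.pow_le_pow_iff_right hp).1 (hb ▸ ha ▸ card_image_le)
  have hle := AddMonoidHom.card_mul_card_le_card_image_mul_card (powSuccReduction_surjective n) A
  rw [ZMod.card, ZMod.card, ha, hb, ← pow_add, ← pow_add, Nat.pow_le_pow_iff_right hp] at hle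
  obtain rfl | rfl : a = b ∨ a = b + 1 := by omega
  · exact ⟨_, h.of_injOn_image (card_image_iff.1 (hb.trans ha.symm))⟩
  · refine ⟨_, h.of_preimage_image_subset (powSuccReduction_natCast_val n)
      (AddMonoidHom.preimage_image_subset_of_card_mul_card_eq (powSuccReduction_surjective n) ?_)⟩
    rw [ZMod.card, ZMod.card, ha, hb, ← pow_add, ← pow_add]
    ring

theorem exists_isTiling_image_castHom {γ : ℕ} {C T : Finset (ZMod (p ^ γ))}
    (h : IsTiling (C : Set (ZMod (p ^ γ))) T) {n : ℕ} (hn : n ≤ γ) :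
    ∃ T' : Finset (ZMod (p ^ n)),
      IsTiling (C.image (castHom (pow_dvd_pow p hn) (ZMod (p ^ n))) : Set (ZMod (p ^ n))) T' := by
  induction hn using Nat.decreasingInduction with
  | self => exact ⟨T, by rwa [image_castHom_self_s3]⟩
  | of_succ k _ ih =>
    obtain ⟨T', hT'⟩ := ih
    refine ⟨T'.image (powSuccReduction p k), ?_⟩
    have := hT'.image_powSuccReduction
    rwa [← coe_image, ← coe_image, powSuccReduction, image_castHom_image_castHom_s3] at this

theorem exists_isTiling_of_card_image_castHom_eq_pow {γ : ℕ} (C : Finset (ZMod (p ^ γ)))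
    (hC : ∀ n (hn : n ≤ γ), ∃ k, #(C.image (castHom (pow_dvd_pow p hn) (ZMod (p ^ n)))) = p ^ k) :
    ∃ T : Set (ZMod (p ^ γ)), IsTiling (C : Set (ZMod (p ^ γ))) T := by
  induction γ with
  | zero =>
    obtain ⟨k, hk⟩ := hC 0 le_rfl
    rw [image_castHom_self_s3] at hk
    obtain ⟨c, hc⟩ := card_pos.1 (hk ▸ pow_pos (Fact.out : p.Prime).pos k)
    have : Subsingleton (ZMod (p ^ 0)) := by rw [pow_zero]; infer_instance
    exact ⟨Set.univ, Set.mapsTo_univ _ _, fun _ _ _ _ _ => Subsingleton.elim _ _,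
      fun _ _ => ⟨(c, c), ⟨hc, trivial⟩, Subsingleton.elim _ _⟩⟩
  | succ γ ih =>
    obtain ⟨T', hT'⟩ := ih (C.image (powSuccReduction p γ)) fun n hn => by
      simpa only [powSuccReduction, image_castHom_image_castHom_s3] using hC n (hn.trans γ.le_succ)
    obtain ⟨a, ha⟩ := hC (γ + 1) le_rfl
    rw [image_castHom_self_s3] at ha
    obtain ⟨b, hb⟩ := hC γ γ.le_succ
    exact exists_isTiling_of_isTiling_image_powSuccReduction ha hb (by rwa [← coe_image])

end Tower

theorem zmod_tile_iff_pHomogeneous_general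
    (p γ : ℕ) [Fact p.Prime]
    (C : Finset (ZMod (p ^ γ))) (hCne : C.Nonempty) :
    (∃ T : Set (ZMod (p ^ γ)), ∀ x : ZMod (p ^ γ),
      ∃! ct : ZMod (p ^ γ) × ZMod (p ^ γ), ct.1 ∈ C ∧ ct.2 ∈ T ∧ ct.1 + ct.2 = x) ↔
    (∀ n : ℕ, 1 ≤ n → ∀ hn : n ≤ γ, ∃ k : ℕ,
      (C.image (ZMod.castHom (pow_dvd_pow p hn) (ZMod (p ^ n)))).card = p ^ k) := by
  constructor
  · rintro ⟨T, hT⟩ n - hn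
    have hT : IsTiling (C : Set (ZMod (p ^ γ))) T.toFinite.toFinset := by
      rw [Set.Finite.coe_toFinset]
      exact isTiling_iff.2 hT
    obtain ⟨T', hT'⟩ := exists_isTiling_image_castHom hT hn
    obtain ⟨k, -, hk⟩ := (Nat.dvd_prime_pow Fact.out).1
      (Dvd.intro _ (hT'.card_mul_card.trans (ZMod.card _)))
    exact ⟨k, hk⟩
  · intro hpow
    obtain ⟨T, hT⟩ := exists_isTiling_of_card_image_castHom_eq_pow C fun n hn => by
      rcases n.eq_zero_or_pos with rfl | hn0
      · have : Subsingleton (ZMod (p ^ 0)) := by rw [pow_zero]; infer_instance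
        exact ⟨0, (card_le_one_of_subsingleton _).antisymm (hCne.image _).card_pos⟩
      · exact hpow n hn0 hn
    exact ⟨T, isTiling_iff.1 hT⟩

/-- a nonempty subset `C ⊆ ℤ/p^γℤ` tiles `ℤ/p^γℤ` iff for every `1 ≤ n ≤ γ`
the cardinality of the image of `C` under the projection `ℤ/p^γℤ → ℤ/p^nℤ` is a power of `p`. -/
theorem zmod_tile_iff_pHomogeneous
    (p γ : ℕ) [Fact p.Prime] (hγ : 1 ≤ γ)
    (C : Finset (ZMod (p ^ γ))) (hCne : C.Nonempty) :
    (∃ T : Set (ZMod (p ^ γ)), ∀ x : ZMod (p ^ γ),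
      ∃! ct : ZMod (p ^ γ) × ZMod (p ^ γ), ct.1 ∈ C ∧ ct.2 ∈ T ∧ ct.1 + ct.2 = x) ↔
    (∀ n : ℕ, 1 ≤ n → ∀ hn : n ≤ γ, ∃ k : ℕ,
      (C.image (ZMod.castHom (pow_dvd_pow p hn) (ZMod (p ^ n)))).card = p ^ k) :=
  zmod_tile_iff_pHomogeneous_general p γ C hCne
end

section
/- Let p be a prime, γ ≥ 1 an integer, and C a nonempty subset of ℤ/p^γℤ. Then the cardinality of the image of C in ℤ/p^nℤ is a power of p for every 1 ≤ n ≤ γ if and only if there exists a set I ⊆ {0, 1, …, γ − 1} with #C = p^{#I} such that ∑_{c∈C} e^{−2πi c̃ p^ℓ / p^γ} = 0 for every ℓ ∈ I, where c̃ denotes any integer lift of c (the sum is independent of the lifts). -/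
/-!
Write `a n` for the number of residues of `C` modulo `p ^ n`; then `a n ≤ a (n + 1) ≤ p * a n`.
For `γ - ℓ = n + 1` the sum at `ℓ` is `∑ c ∈ C, ζ ^ c` with `ζ` a primitive `p ^ (n + 1)`-th root
of unity. If it vanishes, `Φ_{p^(n+1)} = ∑_{k<p} X ^ (k p ^ n)` divides
`∑ c ∈ C, X ^ (c % p ^ (n + 1))`, so the number of elements of `C` in a class modulo `p ^ (n + 1)`
only depends on the class modulo `p ^ n`: every residue modulo `p ^ n` lifts to all `p` residues
modulo `p ^ (n + 1)`, i.e. `a (n + 1) = p * a n`. Then `#C = p ^ #I` leaves no room for growth at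
the other levels, so every `a n` is a power of `p`.

Conversely, if every `a n` is a power of `p`, each step multiplies `a` by `1` or by `p`. Hence all
fibres of `C → ℤ/p^nℤ` have the same size (by descending induction on `n`), and at a step by `p`
the sum splits into complete sums of `p`-th roots of unity, which vanish.
-/

open Finset

open Polynomial in
theorem Polynomial.coeff_eq_coeff_mod_of_cyclotomic_dvd {R : Type*} [CommRing R] [Nontrivial R]
    {p n : ℕ} (hp : p.Prime) {P : R[X]} (hdeg : P.natDegree < p ^ (n + 1))
    (hdvd : cyclotomic (p ^ (n + 1)) R ∣ P) {t : ℕ} (ht : t < p ^ (n + 1)) :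
    P.coeff t = P.coeff (t % p ^ n) := by
  have := Fact.mk hp
  set Q := P /ₘ cyclotomic (p ^ (n + 1)) R
  have hmonic := cyclotomic.monic (p ^ (n + 1)) R
  have hPQ : P = cyclotomic (p ^ (n + 1)) R * Q := by
    have := modByMonic_add_div P (cyclotomic (p ^ (n + 1)) R)
    rwa [(modByMonic_eq_zero_iff_dvd hmonic).2 hdvd, zero_add, eq_comm] at this
  have hQ : Q.natDegree < p ^ n := by
    rw [natDegree_divByMonic P hmonic, natDegree_cyclotomic, Nat.totient_prime_pow_succ hp,
      Nat.mul_sub_one]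
    rw [pow_succ] at hdeg
    have hle : p ^ n ≤ p ^ n * p := Nat.le_mul_of_pos_right _ hp.pos
    have hpos : 0 < p ^ n := pow_pos hp.pos n
    -- the two `natDegree`s carry different (defeq) semiring instances, which `omega` does not unify
    generalize P.natDegree = d at hdeg ⊢
    omega
  have hshift : ∀ s, p ^ n ≤ s → s < p ^ (n + 1) → P.coeff (s - p ^ n) = P.coeff s := by
    intro s hs hs'
    have h := congrArg (coeff · s) (show (X ^ p ^ n - 1) * P = (X ^ p ^ (n + 1) - 1) * Q by
      rw [hPQ, ← mul_assoc, mul_comm (X ^ p ^ n - 1), cyclotomic_prime_pow_mul_X_pow_sub_one])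
    simp only [sub_mul, one_mul, coeff_sub, coeff_X_pow_mul', if_pos hs, if_neg (not_le.2 hs'),
      coeff_eq_zero_of_natDegree_lt (hQ.trans_le hs)] at h
    simpa [sub_eq_zero] using h
  induction t using Nat.strong_induction_on with
  | _ t ih =>
    rcases lt_or_ge t (p ^ n) with h | h
    · rw [Nat.mod_eq_of_lt h]
    · rw [← hshift t h ht, Nat.mod_eq_sub_mod h]
      exact ih _ (Nat.sub_lt (by omega) (pow_pos hp.pos n)) (by omega)

section Sequences

variable {b : ℕ → ℕ} {p : ℕ}

theorem eq_mul_pow_card_filter_of_forall_eq_or_eq_mul {n : ℕ}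
    (h : ∀ ℓ < n, b ℓ = b (ℓ + 1) ∨ b ℓ = p * b (ℓ + 1)) :
    b 0 = b n * p ^ #{ℓ ∈ range n | b ℓ = p * b (ℓ + 1)} := by
  induction n with
  | zero => simp
  | succ n ih =>
    rw [ih fun ℓ hℓ => h ℓ (by omega), range_add_one, filter_insert]
    by_cases hn : b n = p * b (n + 1)
    · rw [if_pos hn, card_insert_of_notMem (by simp), hn, pow_succ]
      ring
    · rw [if_neg hn, (h n n.lt_succ_self).resolve_right hn]

theorem mul_pow_card_inter_Ico_le {I : Finset ℕ} (hb : Antitone b)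
    (hI : ∀ ℓ ∈ I, b ℓ = p * b (ℓ + 1)) {m n : ℕ} (hmn : m ≤ n) :
    b n * p ^ #(I ∩ Ico m n) ≤ b m := by
  induction n, hmn using Nat.le_induction with
  | base => simp
  | succ n hmn ih =>
    rw [Nat.Ico_succ_right_eq_insert_Ico hmn]
    by_cases hn : n ∈ I
    · rw [inter_insert_of_mem hn, card_insert_of_notMem (by simp)]
      calc b (n + 1) * p ^ (#(I ∩ Ico m n) + 1) = b n * p ^ #(I ∩ Ico m n) := by
            rw [hI n hn]; ring
        _ ≤ b m := ih
    · rw [inter_insert_of_notMem hn]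
      exact (Nat.mul_le_mul_right _ (hb n.le_succ)).trans ih

theorem eq_pow_card_inter_Ico {I : Finset ℕ} {γ ℓ : ℕ} (hp : 0 < p) (hb : Antitone b)
    (hI : ∀ ℓ ∈ I, b ℓ = p * b (ℓ + 1)) (hIγ : I ⊆ range γ) (h₀ : b 0 = p ^ #I) (hγ : b γ = 1)
    (hℓ : ℓ ≤ γ) : b ℓ = p ^ #(I ∩ Ico ℓ γ) := by
  have hsplit : #(I ∩ Ico 0 ℓ) + #(I ∩ Ico ℓ γ) = #I := by
    rw [← card_union_of_disjoint ((Ico_disjoint_Ico_consecutive 0 ℓ γ).mono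
      inter_subset_right inter_subset_right), ← inter_union_distrib_left,
      Ico_union_Ico_eq_Ico (Nat.zero_le ℓ) hℓ, ← range_eq_Ico, inter_eq_left.2 hIγ]
  refine le_antisymm ?_ (by simpa [hγ] using mul_pow_card_inter_Ico_le hb hI hℓ)
  have h := mul_pow_card_inter_Ico_le hb hI (Nat.zero_le ℓ)
  rw [h₀, ← hsplit, pow_add, mul_comm (p ^ _)] at h
  exact Nat.le_of_mul_le_mul_right h (pow_pos hp _)

theorem pow_eq_or_eq_mul_of_le {i k : ℕ} (hp : 1 < p) (h₁ : p ^ i ≤ p ^ k)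
    (h₂ : p ^ k ≤ p * p ^ i) : p ^ k = p ^ i ∨ p ^ k = p * p ^ i := by
  rw [← pow_succ'] at h₂ ⊢
  rw [Nat.pow_le_pow_iff_right hp] at h₁ h₂
  rcases (show k = i ∨ k = i + 1 by omega) with rfl | rfl <;> simp

theorem pow_sub_eq_pow_sub_succ_mul {γ ℓ : ℕ} (hℓ : ℓ < γ) :
    p ^ (γ - ℓ) = p ^ (γ - (ℓ + 1)) * p := by
  rw [← pow_succ]
  congr 1
  omega

end Sequences

namespace Finset

def residues (V : Finset ℕ) (N : ℕ) : Finset ℕ := V.image (· % N)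

def residueCount (V : Finset ℕ) (N x : ℕ) : ℕ := #{v ∈ V | v % N = x}

variable {V : Finset ℕ} {N M q c x y : ℕ}

@[simp] lemma mem_residues : x ∈ V.residues N ↔ ∃ v ∈ V, v % N = x := mem_image

lemma lt_of_mem_residues (hN : 0 < N) (hx : x ∈ V.residues N) : x < N := by
  obtain ⟨v, -, rfl⟩ := mem_residues.1 hx
  exact Nat.mod_lt v hN

lemma residues_residues (h : N ∣ M) : (V.residues M).residues N = V.residues N := by
  simp only [residues, image_image]
  exact image_congr fun v _ => Nat.mod_mod_of_dvd v h

lemma card_residues_le_of_dvd (h : N ∣ M) : #(V.residues N) ≤ #(V.residues M) :=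
  residues_residues (V := V) h ▸ card_image_le

lemma residues_of_forall_lt (hV : ∀ v ∈ V, v < M) : V.residues M = V := by
  simp only [residues]
  rw [image_congr fun v hv => Nat.mod_eq_of_lt (hV v hv), image_id']

lemma residues_one (hV : V.Nonempty) : V.residues 1 = {0} := by
  simp only [residues, Nat.mod_one]
  exact image_const hV 0

lemma residueCount_pos : 0 < V.residueCount N x ↔ x ∈ V.residues N := by
  simp [residueCount, card_pos, filter_nonempty_iff]

lemma residueCount_of_forall_lt (hV : ∀ v ∈ V, v < M) (hx : x ∈ V) : V.residueCount M x = 1 := by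
  rw [residueCount, card_eq_one]
  refine ⟨x, eq_singleton_iff_unique_mem.2 ⟨mem_filter.2 ⟨hx, Nat.mod_eq_of_lt (hV x hx)⟩, ?_⟩⟩
  intro v hv
  obtain ⟨hv, hvx⟩ := mem_filter.1 hv
  rw [← hvx, Nat.mod_eq_of_lt (hV v hv)]

lemma residueCount_eq_sum (h : N ∣ M) (y : ℕ) :
    V.residueCount N y = ∑ x ∈ V.residues M with x % N = y, V.residueCount M x := by
  rw [residueCount,
    card_eq_sum_card_fiberwise (f := (· % M)) (t := {x ∈ V.residues M | x % N = y})]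
  · refine sum_congr rfl fun x hx => ?_
    rw [residueCount, filter_filter]
    refine congrArg card (filter_congr fun v _ => and_iff_right_of_imp fun hvx => ?_)
    rw [← Nat.mod_mod_of_dvd v h, hvx, (mem_filter.1 hx).2]
  · intro v hv
    obtain ⟨hv, hvy⟩ := mem_filter.1 hv
    exact mem_filter.2 ⟨mem_image_of_mem _ hv, (Nat.mod_mod_of_dvd v h).trans hvy⟩

lemma card_residues_eq_sum (h : N ∣ M) :
    #(V.residues M) = ∑ y ∈ V.residues N, #{x ∈ V.residues M | x % N = y} := by
  refine card_eq_sum_card_fiberwise fun x hx => ?_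
  rw [← residues_residues h]
  exact mem_image_of_mem _ hx

lemma filter_residues_nonempty (h : N ∣ M) (hy : y ∈ V.residues N) :
    ({x ∈ V.residues M | x % N = y} : Finset ℕ).Nonempty := by
  obtain ⟨v, hv, rfl⟩ := mem_residues.1 hy
  exact ⟨v % M, mem_filter.2 ⟨mem_image_of_mem _ hv, Nat.mod_mod_of_dvd v h⟩⟩

lemma filter_residues_mul_subset (hN : 0 < N) (hq : 0 < q) :
    {x ∈ V.residues (N * q) | x % N = y} ⊆ (range q).image (y + N * ·) := by
  intro x hxy
  obtain ⟨hx, rfl⟩ := mem_filter.1 hxy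
  have hxq : x / N < q := Nat.div_lt_of_lt_mul (lt_of_mem_residues (Nat.mul_pos hN hq) hx)
  exact mem_image.2 ⟨x / N, mem_range.2 hxq, Nat.mod_add_div x N⟩

lemma card_image_add_mul_range (hN : 0 < N) : #((range q).image (y + N * ·)) = q := by
  rw [card_image_of_injective _ fun a b hab => mul_right_injective₀ hN.ne' (add_left_cancel hab),
    card_range]

lemma card_filter_residues_mul_le (hN : 0 < N) (hq : 0 < q) :
    #{x ∈ V.residues (N * q) | x % N = y} ≤ q :=
  (card_le_card (filter_residues_mul_subset hN hq)).trans (card_image_add_mul_range hN).le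

lemma card_residues_mul_le (hN : 0 < N) (hq : 0 < q) :
    #(V.residues (N * q)) ≤ q * #(V.residues N) := by
  calc #(V.residues (N * q))
      = ∑ y ∈ V.residues N, #{x ∈ V.residues (N * q) | x % N = y} :=
        card_residues_eq_sum (dvd_mul_right N q)
    _ ≤ ∑ _y ∈ V.residues N, q := sum_le_sum fun y _ => card_filter_residues_mul_le hN hq
    _ = q * #(V.residues N) := by rw [sum_const, smul_eq_mul, mul_comm]

lemma card_filter_residues_eq_one (h : N ∣ M) (hcard : #(V.residues M) = #(V.residues N)) :
    ∀ y ∈ V.residues N, #{x ∈ V.residues M | x % N = y} = 1 := by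
  have hle : ∀ y ∈ V.residues N, 1 ≤ #{x ∈ V.residues M | x % N = y} :=
    fun y hy => (filter_residues_nonempty h hy).card_pos
  refine fun y hy => ((sum_eq_sum_iff_of_le hle).1 ?_ y hy).symm
  rw [← card_residues_eq_sum h, hcard, sum_const, smul_eq_mul, mul_one]

lemma card_filter_residues_mul_eq (hN : 0 < N) (hq : 0 < q)
    (hcard : #(V.residues (N * q)) = q * #(V.residues N)) :
    ∀ y ∈ V.residues N, #{x ∈ V.residues (N * q) | x % N = y} = q := by
  refine (sum_eq_sum_iff_of_le fun y _ => card_filter_residues_mul_le hN hq).1 ?_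
  rw [← card_residues_eq_sum (dvd_mul_right N q), hcard, sum_const, smul_eq_mul, mul_comm]

lemma filter_residues_mul_eq (hN : 0 < N) (hq : 0 < q)
    (hcard : #(V.residues (N * q)) = q * #(V.residues N)) (hy : y ∈ V.residues N) :
    {x ∈ V.residues (N * q) | x % N = y} = (range q).image (y + N * ·) :=
  eq_of_subset_of_card_le (filter_residues_mul_subset hN hq) <| by
    rw [card_image_add_mul_range hN, card_filter_residues_mul_eq hN hq hcard y hy]

lemma card_residues_mul_eq_of_forall_add_mul_mem (hN : 0 < N) (hq : 0 < q)
    (h : ∀ y ∈ V.residues N, ∀ k < q, y + N * k ∈ V.residues (N * q)) :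
    #(V.residues (N * q)) = q * #(V.residues N) := by
  rw [card_residues_eq_sum (dvd_mul_right N q), sum_const_nat fun y hy => ?_, mul_comm]
  refine le_antisymm (card_filter_residues_mul_le hN hq) ?_
  refine (card_image_add_mul_range (y := y) (q := q) hN).symm.le.trans
    (card_le_card fun x hx => ?_)
  obtain ⟨k, hk, rfl⟩ := mem_image.1 hx
  refine mem_filter.2 ⟨h y hy k (mem_range.1 hk), ?_⟩
  rw [Nat.add_mul_mod_self_left, Nat.mod_eq_of_lt (lt_of_mem_residues hN hy)]

lemma exists_residueCount_eq_of_mul (hN : 0 < N) (hq : 0 < q)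
    (hc : ∀ x ∈ V.residues (N * q), V.residueCount (N * q) x = c)
    (hcard : #(V.residues (N * q)) = #(V.residues N) ∨
      #(V.residues (N * q)) = q * #(V.residues N)) :
    ∃ c', ∀ y ∈ V.residues N, V.residueCount N y = c' := by
  obtain ⟨r, hr⟩ : ∃ r, ∀ y ∈ V.residues N, #{x ∈ V.residues (N * q) | x % N = y} = r :=
    hcard.elim (fun h => ⟨1, card_filter_residues_eq_one (dvd_mul_right N q) h⟩)
      (fun h => ⟨q, card_filter_residues_mul_eq hN hq h⟩)
  refine ⟨r * c, fun y hy => ?_⟩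
  rw [residueCount_eq_sum (dvd_mul_right N q), sum_const_nat fun x hx => hc x (mem_filter.1 hx).1,
    hr y hy]

variable {R : Type*}

lemma sum_pow_eq_sum_residues [Semiring R] {ζ : R} (hζ : ζ ^ M = 1) :
    ∑ v ∈ V, ζ ^ v = ∑ x ∈ V.residues M, V.residueCount M x • ζ ^ x := by
  rw [← sum_fiberwise_of_maps_to (g := (· % M)) (t := V.residues M)
    fun v hv => mem_image_of_mem _ hv]
  refine sum_congr rfl fun x _ => ?_
  rw [residueCount, ← sum_const]
  exact sum_congr rfl fun v hv => by rw [pow_eq_pow_mod v hζ, (mem_filter.1 hv).2]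

lemma sum_pow_residues_mul_eq_zero [CommRing R] [IsDomain R] {ζ : R} (hN : 0 < N) (hq : 1 < q)
    (hζ : IsPrimitiveRoot (ζ ^ N) q) (hcard : #(V.residues (N * q)) = q * #(V.residues N)) :
    ∑ x ∈ V.residues (N * q), ζ ^ x = 0 := by
  have hq₀ : 0 < q := zero_lt_one.trans hq
  rw [← sum_fiberwise_of_maps_to (g := (· % N)) (t := V.residues N) fun x hx => by
    rw [← residues_residues (dvd_mul_right N q)]; exact mem_image_of_mem _ hx]
  refine sum_eq_zero fun y hy => ?_
  rw [filter_residues_mul_eq hN hq₀ hcard hy,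
    sum_image fun a _ b _ hab => mul_right_injective₀ hN.ne' (add_left_cancel hab)]
  simp_rw [pow_add, pow_mul, ← mul_sum, hζ.geom_sum_eq_zero hq, mul_zero]

lemma sum_pow_eq_zero_of_residueCount_eq [CommRing R] [IsDomain R] {ζ : R} (hN : 0 < N)
    (hq : 1 < q) (hζ : IsPrimitiveRoot ζ (N * q))
    (hc : ∀ x ∈ V.residues (N * q), V.residueCount (N * q) x = c)
    (hcard : #(V.residues (N * q)) = q * #(V.residues N)) : ∑ v ∈ V, ζ ^ v = 0 := by
  rw [sum_pow_eq_sum_residues hζ.pow_eq_one, sum_congr rfl fun x hx => by rw [hc x hx],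
    ← smul_sum, sum_pow_residues_mul_eq_zero hN hq (hζ.pow (by positivity) rfl) hcard, smul_zero]

lemma card_residues_mul_eq_of_residueCount_eq_mod (hN : 0 < N) (hq : 0 < q)
    (h : ∀ t < N * q, V.residueCount (N * q) t = V.residueCount (N * q) (t % N)) :
    #(V.residues (N * q)) = q * #(V.residues N) := by
  refine card_residues_mul_eq_of_forall_add_mul_mem hN hq fun y hy k hk => ?_
  obtain ⟨v, hv, rfl⟩ := mem_residues.1 hy
  have hlt : v % N + N * k < N * q := by nlinarith [Nat.mod_lt v hN]
  rw [← residueCount_pos, h _ hlt, Nat.add_mul_mod_self_left, Nat.mod_mod,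
    ← Nat.mod_mod_of_dvd v (dvd_mul_right N q), ← h _ (Nat.mod_lt v (Nat.mul_pos hN hq)),
    residueCount_pos]
  exact mem_image_of_mem _ hv

open Polynomial

noncomputable def residuePoly (V : Finset ℕ) (M : ℕ) : ℤ[X] := ∑ v ∈ V, X ^ (v % M)

lemma coeff_residuePoly (t : ℕ) : (V.residuePoly M).coeff t = V.residueCount M t := by
  simp [residuePoly, coeff_X_pow, residueCount, eq_comm]

lemma natDegree_residuePoly_lt (hM : 0 < M) : (V.residuePoly M).natDegree < M := by
  refine (natDegree_sum_le_of_forall_le _ _ (n := M - 1) fun v _ => ?_).trans_lt (by omega)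
  rw [natDegree_X_pow]
  have := Nat.mod_lt v hM
  omega

lemma aeval_residuePoly [CommRing R] {ζ : R} (hζ : ζ ^ M = 1) :
    aeval ζ (V.residuePoly M) = ∑ v ∈ V, ζ ^ v := by
  simp only [residuePoly, map_sum, map_pow, aeval_X]
  exact sum_congr rfl fun v _ => (pow_eq_pow_mod v hζ).symm

lemma card_residues_pow_succ_eq_of_sum_eq_zero {K : Type*} [Field K] [CharZero K] {p n : ℕ}
    (hp : p.Prime) {ζ : K} (hζ : IsPrimitiveRoot ζ (p ^ (n + 1))) (h : ∑ v ∈ V, ζ ^ v = 0) :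
    #(V.residues (p ^ (n + 1))) = p * #(V.residues (p ^ n)) := by
  have hpos : 0 < p ^ (n + 1) := pow_pos hp.pos _
  have hdvd : cyclotomic (p ^ (n + 1)) ℤ ∣ V.residuePoly (p ^ (n + 1)) := by
    rw [cyclotomic_eq_minpoly hζ hpos]
    exact minpoly.isIntegrallyClosed_dvd (hζ.isIntegral hpos)
      (by rw [aeval_residuePoly hζ.pow_eq_one, h])
  rw [pow_succ]
  refine card_residues_mul_eq_of_residueCount_eq_mod (pow_pos hp.pos n) hp.pos fun t ht => ?_
  rw [← pow_succ] at ht ⊢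
  simpa only [coeff_residuePoly, Nat.cast_inj] using
    coeff_eq_coeff_mod_of_cyclotomic_dvd hp (natDegree_residuePoly_lt hpos) hdvd ht

variable {p γ : ℕ}

lemma antitone_card_residues_pow_sub : Antitone fun ℓ => #(V.residues (p ^ (γ - ℓ))) :=
  fun _ _ h => card_residues_le_of_dvd (pow_dvd_pow p (by omega))

lemma exists_residueCount_eq_of_forall_eq_or_eq_mul (hp : 0 < p) (hV : ∀ v ∈ V, v < p ^ γ)
    (hstep : ∀ ℓ < γ, #(V.residues (p ^ (γ - ℓ))) = #(V.residues (p ^ (γ - (ℓ + 1)))) ∨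
      #(V.residues (p ^ (γ - ℓ))) = p * #(V.residues (p ^ (γ - (ℓ + 1))))) {ℓ : ℕ} (hℓ : ℓ ≤ γ) :
    ∃ c, ∀ x ∈ V.residues (p ^ (γ - ℓ)), V.residueCount (p ^ (γ - ℓ)) x = c := by
  induction ℓ with
  | zero =>
    refine ⟨1, fun x hx => residueCount_of_forall_lt hV ?_⟩
    rwa [Nat.sub_zero, residues_of_forall_lt hV] at hx
  | succ ℓ ih =>
    obtain ⟨c, hc⟩ := ih (by omega)
    have hstep := hstep ℓ hℓ
    rw [pow_sub_eq_pow_sub_succ_mul hℓ] at hc hstep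
    exact exists_residueCount_eq_of_mul (pow_pos hp _) hp hc hstep

variable {K : Type*} [Field K] {ζ : ℕ → K}

theorem exists_sum_pow_eq_zero_of_card_residues_eq_pow (hp : p.Prime)
    (hζ : ∀ m, IsPrimitiveRoot (ζ m) (p ^ m)) (hV : ∀ v ∈ V, v < p ^ γ) (hne : V.Nonempty)
    (hpow : ∀ ℓ < γ, ∃ k, #(V.residues (p ^ (γ - ℓ))) = p ^ k) :
    ∃ I ⊆ range γ, #V = p ^ #I ∧ ∀ ℓ ∈ I, ∑ v ∈ V, ζ (γ - ℓ) ^ v = 0 := by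
  set b : ℕ → ℕ := fun ℓ => #(V.residues (p ^ (γ - ℓ))) with hb
  have hbγ : b γ = 1 := by simp [hb, residues_one hne]
  have hstep : ∀ ℓ < γ, b ℓ = b (ℓ + 1) ∨ b ℓ = p * b (ℓ + 1) := by
    intro ℓ hℓ
    obtain ⟨i, hi⟩ : ∃ i, b (ℓ + 1) = p ^ i := by
      rcases (show ℓ + 1 < γ ∨ ℓ + 1 = γ by omega) with h | h
      · exact hpow _ h
      · exact ⟨0, by rw [h, hbγ, pow_zero]⟩
    obtain ⟨k, hk⟩ := hpow ℓ hℓ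
    have h₁ : b (ℓ + 1) ≤ b ℓ := antitone_card_residues_pow_sub ℓ.le_succ
    have h₂ : b ℓ ≤ p * b (ℓ + 1) := by
      simp only [hb]
      rw [pow_sub_eq_pow_sub_succ_mul hℓ]
      exact card_residues_mul_le (pow_pos hp.pos _) hp.pos
    change b ℓ = p ^ k at hk
    rw [hi, hk] at h₁ h₂ ⊢
    exact pow_eq_or_eq_mul_of_le hp.one_lt h₁ h₂
  refine ⟨{ℓ ∈ range γ | b ℓ = p * b (ℓ + 1)}, filter_subset _ _, ?_, fun ℓ hℓ => ?_⟩
  · have h := eq_mul_pow_card_filter_of_forall_eq_or_eq_mul hstep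
    have hb₀ : b 0 = #V := by simp [hb, residues_of_forall_lt hV]
    rwa [hbγ, one_mul, hb₀] at h
  · obtain ⟨hℓγ, hfull⟩ := mem_filter.1 hℓ
    obtain ⟨c, hc⟩ := exists_residueCount_eq_of_forall_eq_or_eq_mul hp.pos hV hstep
      (mem_range.1 hℓγ).le
    have hζℓ := hζ (γ - ℓ)
    simp only [hb] at hfull
    rw [pow_sub_eq_pow_sub_succ_mul (mem_range.1 hℓγ)] at hfull hc hζℓ
    exact sum_pow_eq_zero_of_residueCount_eq (pow_pos hp.pos _) hp.one_lt hζℓ hc hfull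

theorem card_residues_eq_pow_of_sum_pow_eq_zero [CharZero K] (hp : p.Prime)
    (hζ : ∀ m, IsPrimitiveRoot (ζ m) (p ^ m)) (hV : ∀ v ∈ V, v < p ^ γ) {I : Finset ℕ}
    (hI : I ⊆ range γ) (hcard : #V = p ^ #I) (hvan : ∀ ℓ ∈ I, ∑ v ∈ V, ζ (γ - ℓ) ^ v = 0)
    {ℓ : ℕ} (hℓ : ℓ ≤ γ) : #(V.residues (p ^ (γ - ℓ))) = p ^ #(I ∩ Ico ℓ γ) := by
  have hne : V.Nonempty := card_pos.1 (hcard ▸ pow_pos hp.pos _)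
  refine eq_pow_card_inter_Ico (b := fun ℓ => #(V.residues (p ^ (γ - ℓ)))) hp.pos
    antitone_card_residues_pow_sub (fun ℓ hℓ => ?_) hI
    (by simp [residues_of_forall_lt hV, hcard]) (by simp [residues_one hne]) hℓ
  have h := hvan ℓ hℓ
  show #(V.residues (p ^ (γ - ℓ))) = p * #(V.residues (p ^ (γ - (ℓ + 1))))
  rw [show γ - ℓ = γ - (ℓ + 1) + 1 by have := mem_range.1 (hI hℓ); omega] at h ⊢
  exact card_residues_pow_succ_eq_of_sum_eq_zero hp (hζ _) h

end Finset

lemma ZMod.card_image_castHom {m n : ℕ} [NeZero m] [NeZero n] (h : n ∣ m) (C : Finset (ZMod m)) :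
    #(C.image (ZMod.castHom h (ZMod n))) = #((C.image ZMod.val).residues n) := by
  rw [residues, image_image, ← card_image_of_injective _ (ZMod.val_injective n), image_image]
  refine congrArg Finset.card (image_congr fun c _ => ?_)
  rw [Function.comp_apply, ZMod.castHom_apply, ZMod.cast_eq_val, ZMod.val_natCast]
  rfl

open Complex in
lemma Complex.isPrimitiveRoot_exp_neg_div_pow {p : ℕ} (hp : p ≠ 0) (m : ℕ) :
    IsPrimitiveRoot (exp (-(2 * Real.pi * I) / (p : ℂ) ^ m)) (p ^ m) := by
  have h := (isPrimitiveRoot_exp (p ^ m) (pow_ne_zero m hp)).inv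
  rwa [← exp_neg, ← neg_div, Nat.cast_pow] at h

open Complex in
lemma Complex.exp_neg_two_pi_I_mul_div_pow {p ℓ γ : ℕ} (hp : p ≠ 0) (hℓ : ℓ ≤ γ) (v : ℕ) :
    exp (-(2 * Real.pi * I) * ((v : ℂ) * (p : ℂ) ^ ℓ / (p : ℂ) ^ γ)) =
      exp (-(2 * Real.pi * I) / (p : ℂ) ^ (γ - ℓ)) ^ v := by
  have hγ : (p : ℂ) ^ γ = (p : ℂ) ^ (γ - ℓ) * (p : ℂ) ^ ℓ := by
    rw [← pow_add, Nat.sub_add_cancel hℓ]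
  have hp' : (p : ℂ) ≠ 0 := Nat.cast_ne_zero.2 hp
  rw [← exp_nat_mul, hγ]
  congr 1
  field_simp

theorem zmod_pHomogeneous_iff_vanishing_general
    (p γ : ℕ) [Fact p.Prime]
    (C : Finset (ZMod (p ^ γ))) (hCne : C.Nonempty) :
    (∀ n : ℕ, 1 ≤ n → ∀ hn : n ≤ γ, ∃ k : ℕ,
      (C.image (ZMod.castHom (pow_dvd_pow p hn) (ZMod (p ^ n)))).card = p ^ k) ↔
    (∃ I : Finset ℕ, I ⊆ Finset.range γ ∧ C.card = p ^ I.card ∧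
      ∀ l ∈ I, ∑ c ∈ C, Complex.exp (-(2 * Real.pi * Complex.I) *
        ((c.val : ℂ) * (p : ℂ) ^ l / (p : ℂ) ^ γ)) = 0) := by
  have hp : p.Prime := Fact.out
  have hζ := Complex.isPrimitiveRoot_exp_neg_div_pow hp.ne_zero
  set V := C.image ZMod.val
  have hV : ∀ v ∈ V, v < p ^ γ := by
    simp only [V, mem_image]
    rintro _ ⟨c, -, rfl⟩
    exact ZMod.val_lt c
  have hVC : #V = #C := card_image_of_injective _ (ZMod.val_injective _)
  have hsum : ∀ ℓ ∈ range γ, ∑ c ∈ C, Complex.exp (-(2 * Real.pi * Complex.I) *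
      ((c.val : ℂ) * (p : ℂ) ^ ℓ / (p : ℂ) ^ γ)) =
      ∑ v ∈ V, Complex.exp (-(2 * Real.pi * Complex.I) / (p : ℂ) ^ (γ - ℓ)) ^ v := fun ℓ hℓ => by
    rw [sum_image (ZMod.val_injective _).injOn]
    exact sum_congr rfl fun c _ =>
      Complex.exp_neg_two_pi_I_mul_div_pow hp.ne_zero (mem_range.1 hℓ).le c.val
  constructor
  · intro h
    obtain ⟨I, hI, hcard, hvan⟩ := exists_sum_pow_eq_zero_of_card_residues_eq_pow hp hζ hV
      (hCne.image _) fun ℓ _ => ZMod.card_image_castHom (pow_dvd_pow p (Nat.sub_le γ ℓ)) C ▸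
        h (γ - ℓ) (by omega) (Nat.sub_le γ ℓ)
    exact ⟨I, hI, hVC ▸ hcard, fun ℓ hℓ => (hsum ℓ (hI hℓ)).trans (hvan ℓ hℓ)⟩
  · rintro ⟨I, hI, hcard, hvan⟩ n - hn
    have h := card_residues_eq_pow_of_sum_pow_eq_zero hp hζ hV hI (hVC.trans hcard)
      (fun ℓ hℓ => (hsum ℓ (hI hℓ)).symm.trans (hvan ℓ hℓ)) (Nat.sub_le γ n)
    rw [Nat.sub_sub_self hn] at h
    exact ⟨_, (ZMod.card_image_castHom _ C).trans h⟩

/-- for a nonempty `C ⊆ ℤ/p^γℤ`, the image of `C` in `ℤ/p^nℤ` has cardinality a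
power of `p` for every `1 ≤ n ≤ γ` iff there is a set `I ⊆ {0,…,γ-1}` with `#C = p^{#I}` such
that `∑_{c∈C} e^{-2πi c p^ℓ / p^γ} = 0` for every `ℓ ∈ I`. -/
theorem zmod_pHomogeneous_iff_vanishing
    (p γ : ℕ) [Fact p.Prime] (hγ : 1 ≤ γ)
    (C : Finset (ZMod (p ^ γ))) (hCne : C.Nonempty) :
    (∀ n : ℕ, 1 ≤ n → ∀ hn : n ≤ γ, ∃ k : ℕ,
      (C.image (ZMod.castHom (pow_dvd_pow p hn) (ZMod (p ^ n)))).card = p ^ k) ↔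
    (∃ I : Finset ℕ, I ⊆ Finset.range γ ∧ C.card = p ^ I.card ∧
      ∀ l ∈ I, ∑ c ∈ C, Complex.exp (-(2 * Real.pi * Complex.I) *
        ((c.val : ℂ) * (p : ℂ) ^ l / (p : ℂ) ^ γ)) = 0) :=
  zmod_pHomogeneous_iff_vanishing_general p γ C hCne
end

section
/- Let p be a prime, ψ a standard character of ℚ_p, m ≥ 1 an integer, and ξ_0, ξ_1, …, ξ_{m−1} points of ℚ_p (repetitions allowed). If ∑_{j=0}^{m−1} ψ(ξ_j) = 0, then p divides m, and for every x ∈ ℚ_p with |x|_p = 1 one has ∑_{j=0}^{m−1} ψ(x ξ_j) = 0. -/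
/-!
Choose `N` with `p ^ N * ξ j ∈ ℤ_p` for all `j`. Then the values `ψ (ξ j)` are `p ^ N`-th roots
of unity, say `ζ ^ a j` for a primitive root `ζ`, and `ζ` is a root of `∑ j, X ^ a j`, so the
cyclotomic polynomial `Φ_{p ^ N}` divides it. Evaluating at `1` gives `p ∣ m`, as `Φ_{p ^ N}(1) = p`.
A unit `x` is congruent modulo `p ^ N` to an integer `c` prime to `p`, so `ψ (x * ξ j) = ψ (ξ j) ^ c`,
and `ζ ^ c` is again a root of `Φ_{p ^ N}`.
-/

noncomputable section

/-- A standard character of `ℚ_p`. -/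
def IsStdChar (p : ℕ) [Fact p.Prime] (ψ : ℚ_[p] → ℂ) : Prop :=
  Continuous ψ ∧ (∀ x y, ψ (x + y) = ψ x * ψ y) ∧ (∀ x, ‖ψ x‖ = 1) ∧
    (∀ x : ℚ_[p], ‖x‖ ≤ 1 → ψ x = 1) ∧ ∃ x : ℚ_[p], ‖x‖ ≤ p ∧ ψ x ≠ 1

open Polynomial

namespace IsPrimitiveRoot

variable {K : Type*} [Field K] [CharZero K] {ι : Type*} [Fintype ι] {ζ : K} {n : ℕ}

theorem cyclotomic_dvd_sum_X_pow (hζ : IsPrimitiveRoot ζ n) (hn : 0 < n) {a : ι → ℕ}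
    (h : ∑ i, ζ ^ a i = 0) : cyclotomic n ℤ ∣ ∑ i, X ^ a i := by
  rw [cyclotomic_eq_minpoly hζ hn]
  exact minpoly.isIntegrallyClosed_dvd (hζ.isIntegral hn) (by simpa using h)

theorem sum_pow_eq_zero_of_coprime (hζ : IsPrimitiveRoot ζ n) [NeZero n] {z : ι → K}
    (hz : ∀ i, z i ^ n = 1) (h : ∑ i, z i = 0) {c : ℕ} (hc : c.Coprime n) :
    ∑ i, z i ^ c = 0 := by
  choose a _ ha using fun i => hζ.eq_pow_of_pow_eq_one (hz i)
  simp only [← ha] at h ⊢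
  obtain ⟨g, hg⟩ := hζ.cyclotomic_dvd_sum_X_pow (NeZero.pos n) h
  have hroot := (hζ.pow_of_coprime c hc).isRoot_cyclotomic (NeZero.pos n)
  have hsum := congrArg (aeval (ζ ^ c)) hg
  simp only [map_sum, map_pow, aeval_X, map_mul] at hsum
  simp_rw [← pow_mul, mul_comm _ c, pow_mul]
  rw [hsum, aeval_def, eval₂_eq_eval_map, map_cyclotomic, hroot.eq_zero, zero_mul]

theorem prime_dvd_card_of_sum_eq_zero {p k : ℕ} [Fact p.Prime] (hζ : IsPrimitiveRoot ζ (p ^ k))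
    {z : ι → K} (hz : ∀ i, z i ^ p ^ k = 1) (h : ∑ i, z i = 0) : p ∣ Fintype.card ι := by
  obtain _ | k := k
  · simp_all
  choose a _ ha using fun i => hζ.eq_pow_of_pow_eq_one (hz i)
  simp only [← ha] at h
  obtain ⟨g, hg⟩ := hζ.cyclotomic_dvd_sum_X_pow (NeZero.pos _) h
  have hcard := congrArg (eval 1) hg
  simp only [eval_finsetSum, eval_pow, eval_X, one_pow, Finset.sum_const, Finset.card_univ,
    nsmul_eq_mul, mul_one, eval_mul, eval_one_cyclotomic_prime_pow] at hcard
  exact_mod_cast Dvd.intro _ hcard.symm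

end IsPrimitiveRoot

variable {p : ℕ} [Fact p.Prime]

theorem Padic.exists_norm_p_pow_mul_le_one {ι : Type*} [Fintype ι] (ξ : ι → ℚ_[p]) :
    ∃ N : ℕ, ∀ i, ‖(p : ℚ_[p]) ^ N * ξ i‖ ≤ 1 := by
  have hp : (1 : ℝ) < p := by exact_mod_cast (Fact.out : p.Prime).one_lt
  obtain ⟨N, hN⟩ := pow_unbounded_of_one_lt (∑ i, ‖ξ i‖) hp
  refine ⟨N, fun i => ?_⟩
  rw [norm_mul, norm_pow, Padic.norm_p, inv_pow, inv_mul_le_iff₀ (by positivity), mul_one]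
  exact (Finset.single_le_sum (fun j _ => norm_nonneg (ξ j)) (Finset.mem_univ i)).trans hN.le

theorem PadicInt.exists_coprime_eq_add_p_pow_mul {z : ℤ_[p]} (hz : IsUnit z) (N : ℕ) :
    ∃ c : ℕ, c.Coprime (p ^ N) ∧ ∃ w : ℤ_[p], z = c + p ^ N * w := by
  refine ⟨(toZModPow N z).val, ZMod.val_coe_unit_coprime (hz.map (toZModPow N)).unit, ?_⟩
  have hker : z - (toZModPow N z).val ∈ RingHom.ker (toZModPow N) := by
    simp [RingHom.mem_ker]
  rw [ker_toZModPow, Ideal.mem_span_singleton'] at hker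
  obtain ⟨w, hw⟩ := hker
  exact ⟨w, by rw [mul_comm, hw]; ring⟩

namespace IsStdChar

variable {ψ : ℚ_[p] → ℂ}

theorem map_add (hψ : IsStdChar p ψ) (x y : ℚ_[p]) : ψ (x + y) = ψ x * ψ y :=
  hψ.2.1 x y

theorem eq_one_of_norm_le_one (hψ : IsStdChar p ψ) {x : ℚ_[p]} (hx : ‖x‖ ≤ 1) : ψ x = 1 :=
  hψ.2.2.2.1 x hx

theorem map_natCast_mul (hψ : IsStdChar p ψ) (n : ℕ) (x : ℚ_[p]) : ψ (n * x) = ψ x ^ n := by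
  induction n with
  | zero => simpa using hψ.eq_one_of_norm_le_one (x := 0) (by simp)
  | succ n ih => rw [Nat.cast_succ, add_one_mul, hψ.map_add, ih, pow_succ]

theorem pow_eq_one (hψ : IsStdChar p ψ) {N : ℕ} {x : ℚ_[p]} (hx : ‖(p : ℚ_[p]) ^ N * x‖ ≤ 1) :
    ψ x ^ p ^ N = 1 := by
  rw [← hψ.map_natCast_mul, Nat.cast_pow]
  exact hψ.eq_one_of_norm_le_one hx

theorem exists_coprime_map_mul_eq_pow (hψ : IsStdChar p ψ) {x : ℚ_[p]} (hx : ‖x‖ = 1) (N : ℕ) :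
    ∃ c : ℕ, c.Coprime (p ^ N) ∧
      ∀ y, ‖(p : ℚ_[p]) ^ N * y‖ ≤ 1 → ψ (x * y) = ψ y ^ c := by
  obtain ⟨c, hc, w, hw⟩ := PadicInt.exists_coprime_eq_add_p_pow_mul
    (PadicInt.isUnit_iff (z := ⟨x, hx.le⟩) |>.mpr hx) N
  have hx' : x = c + p ^ N * (w : ℚ_[p]) := by
    simpa using congrArg ((↑) : ℤ_[p] → ℚ_[p]) hw
  refine ⟨c, hc, fun y hy => ?_⟩
  have htail : ‖(w : ℚ_[p]) * (p ^ N * y)‖ ≤ 1 := by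
    rw [norm_mul]
    exact mul_le_one₀ (PadicInt.norm_le_one w) (norm_nonneg _) hy
  rw [show x * y = c * y + w * (p ^ N * y) by rw [hx']; ring, hψ.map_add,
    hψ.eq_one_of_norm_le_one htail, mul_one, hψ.map_natCast_mul]

end IsStdChar

theorem vanishing_sum_rotation_invariant_general
    (p : ℕ) [Fact p.Prime] (ψ : ℚ_[p] → ℂ) (hψ : IsStdChar p ψ)
    (m : ℕ) (ξ : Fin m → ℚ_[p])
    (hsum : ∑ j, ψ (ξ j) = 0) :
    p ∣ m ∧ ∀ x : ℚ_[p], ‖x‖ = 1 → ∑ j, ψ (x * ξ j) = 0 := by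
  obtain ⟨N, hN⟩ := Padic.exists_norm_p_pow_mul_le_one ξ
  have hroot : ∀ j, ψ (ξ j) ^ p ^ N = 1 := fun j => hψ.pow_eq_one (hN j)
  have hζ := Complex.isPrimitiveRoot_exp (p ^ N) (NeZero.ne _)
  refine ⟨by simpa using hζ.prime_dvd_card_of_sum_eq_zero hroot hsum, fun x hx => ?_⟩
  obtain ⟨c, hc, hψc⟩ := hψ.exists_coprime_map_mul_eq_pow hx N
  simp only [hψc _ (hN _)]
  exact hζ.sum_pow_eq_zero_of_coprime hroot hsum hc

/-- if `∑_{j<m} ψ(ξ_j) = 0` then `p ∣ m`, and `∑_{j<m} ψ(x ξ_j) = 0` for every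
unit `x` (i.e. `|x|_p = 1`). -/
theorem vanishing_sum_rotation_invariant
    (p : ℕ) [Fact p.Prime] (ψ : ℚ_[p] → ℂ) (hψ : IsStdChar p ψ)
    (m : ℕ) (hm : 1 ≤ m) (ξ : Fin m → ℚ_[p])
    (hsum : ∑ j, ψ (ξ j) = 0) :
    p ∣ m ∧ ∀ x : ℚ_[p], ‖x‖ = 1 → ∑ j, ψ (x * ξ j) = 0 :=
  vanishing_sum_rotation_invariant_general p ψ hψ m ξ hsum
end
end

section
/- Let p be a prime, γ ≥ 1 an integer, C ⊆ {0, 1, …, p^γ − 1} a nonempty set of integers, and Ω = ⋃_{c∈C} (c + p^γ ℤ_p). Let ψ be a standard character of ℚ_p and μ the normalized Haar measure. If Λ ⊆ ℚ_p is a spectrum of Ω, then for every a ∈ ℚ_p the closed ball B(a, p^γ) contains exactly #C points of Λ. -/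
open MeasureTheory

noncomputable section

/-- `Λ` is a spectrum of `Ω`. -/
def IsSpectrum (p : ℕ) [Fact p.Prime] [MeasurableSpace ℚ_[p]] (ψ : ℚ_[p] → ℂ)
    (μ : Measure ℚ_[p]) (Ω Λ : Set ℚ_[p]) : Prop :=
  (∀ l₁ ∈ Λ, ∀ l₂ ∈ Λ, l₁ ≠ l₂ →
      ∫ x in Ω, ψ (l₁ * x) * (starRingEnd ℂ) (ψ (l₂ * x)) ∂μ = 0) ∧
  Dense (↑(Submodule.span ℂ {g : Lp ℂ 2 (μ.restrict Ω) |
      ∃ l ∈ Λ, ∀ᵐ x ∂(μ.restrict Ω), g x = ψ (l * x)}) : Set (Lp ℂ 2 (μ.restrict Ω)))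

/-!
`Ω` is the disjoint union of the balls `T_c = B(c, p^{-γ})`, `c ∈ C`; let `W ⊆ L²(Ω)` be the span
of the `#C` orthogonal functions `1_{T_c}(x) ψ(a x)`. If `|λ - a| ≤ p^γ`, then
`ψ(λ x) = ψ((λ - a) c) ψ(a x)` on `T_c`, so `ψ(λ ·) ∈ W`; otherwise `ψ(λ ·)` integrates to zero
over each `T_c`, so `ψ(λ ·) ⊥ W`. When an orthogonal family with dense span has each member either
in `W` or in `Wᗮ`, the members lying in `W` form a basis of `W`.
-/

open Metric Module Submodule ComplexConjugate
open scoped InnerProductSpace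

section OrthogonalFamily

variable {𝕜 H ι : Type*} [RCLike 𝕜] [NormedAddCommGroup H] [InnerProductSpace 𝕜 H]

theorem ncard_inter_eq_finrank_of_dense_span (W : Submodule 𝕜 H) [FiniteDimensional 𝕜 W]
    {e : ι → H} {Λ B : Set ι} (he : ∀ i ∈ Λ, e i ≠ 0)
    (horth : Λ.Pairwise fun i j => ⟪e i, e j⟫_𝕜 = 0)
    (hdense : Dense (span 𝕜 (e '' Λ) : Set H))
    (hW : ∀ i ∈ B, e i ∈ W) (hWc : ∀ i ∉ B, e i ∈ Wᗮ) :
    (Λ ∩ B).ncard = finrank 𝕜 W := by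
  set v : ↥(Λ ∩ B) → H := fun i => e i
  have hv : LinearIndependent 𝕜 v :=
    linearIndependent_of_ne_zero_of_inner_eq_zero (fun i => he i i.2.1)
      fun i j hij => horth i.2.1 j.2.1 (Subtype.coe_injective.ne hij)
  have : Finite ↥(Λ ∩ B) :=
    (LinearIndependent.of_comp W.subtype (v := fun i => ⟨v i, hW i i.2.2⟩) hv).finite
  have : Fintype ↥(Λ ∩ B) := Fintype.ofFinite _
  have : FiniteDimensional 𝕜 (span 𝕜 (Set.range v)) :=
    FiniteDimensional.span_of_finite 𝕜 (Set.finite_range v)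
  have hvW : span 𝕜 (Set.range v) ≤ W := span_le.2 (Set.range_subset_iff.2 fun i => hW i i.2.2)
  -- such a vector is orthogonal to every `e i`, `i ∈ Λ`, hence zero by density
  have hperp : (span 𝕜 (Set.range v))ᗮ ⊓ W = ⊥ := by
    refine eq_bot_iff.2 fun w ⟨hwv, hwW⟩ => (mem_bot 𝕜).2 ?_
    refine hdense.eq_zero_of_inner_left 𝕜 fun u hu => ?_
    refine mem_orthogonal_singleton_iff_inner_right.1 (span_le.2 ?_ hu)
    rintro _ ⟨i, hi, rfl⟩
    refine mem_orthogonal_singleton_iff_inner_right.2 ?_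
    by_cases hiB : i ∈ B
    · exact (mem_orthogonal' _ w).1 hwv _ (subset_span ⟨⟨i, hi, hiB⟩, rfl⟩)
    · exact inner_right_of_mem_orthogonal hwW (hWc i hiB)
  have hspan : span 𝕜 (Set.range v) = W := by
    simpa [hperp] using sup_orthogonal_inf_of_hasOrthogonalProjection hvW
  rw [← hspan, finrank_span_eq_card hv, ← Nat.card_eq_fintype_card, Nat.card_coe_set_eq]

end OrthogonalFamily

theorem setIntegral_eq_zero_of_add_eq_mul {G 𝕜 : Type*} [AddGroup G] [MeasurableSpace G]
    [MeasurableAdd G] [RCLike 𝕜] {μ : Measure G} [μ.IsAddRightInvariant] {A : Set G} {s : G}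
    (hA : (· + s) ⁻¹' A = A) {f : G → 𝕜} {z : 𝕜} (hf : ∀ x, f (x + s) = f x * z) (hz : z ≠ 1) :
    ∫ x in A, f x ∂μ = 0 := by
  have h := (measurePreserving_add_right μ s).setIntegral_preimage_emb
    (MeasurableEquiv.addRight s).measurableEmbedding f A
  simp only [hA, hf, integral_mul_const] at h
  have : (∫ x in A, f x ∂μ) * (z - 1) = 0 := by rw [mul_sub, h, mul_one, sub_self]
  exact (mul_eq_zero.1 this).resolve_right (sub_ne_zero.2 hz)

theorem MemLp.inner_toLp_toLp {α 𝕜 : Type*} [MeasurableSpace α] [RCLike 𝕜] {ν : Measure α}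
    {f g : α → 𝕜} (hf : MemLp f 2 ν) (hg : MemLp g 2 ν) :
    ⟪hf.toLp f, hg.toLp g⟫_𝕜 = ∫ x, conj (f x) * g x ∂ν := by
  rw [L2.inner_def]
  refine integral_congr_ae ?_
  filter_upwards [hf.coeFn_toLp, hg.coeFn_toLp] with x hfx hgx
  rw [RCLike.inner_apply', hfx, hgx]

namespace Padic

variable {p : ℕ} [Fact p.Prime]

theorem disjoint_closedBall_natCast {γ i j : ℕ} (hi : i < p ^ γ) (hj : j < p ^ γ) (hij : i ≠ j) :
    Disjoint (closedBall (i : ℚ_[p]) (p ^ (-(γ : ℤ))))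
      (closedBall (j : ℚ_[p]) (p ^ (-(γ : ℤ)))) := by
  refine Set.disjoint_left.2 fun x hxi hxj => hij ?_
  have hdist := (IsUltrametricDist.dist_triangle_max (i : ℚ_[p]) x j).trans
    (max_le (by rwa [dist_comm]) hxj)
  have hdvd : (p ^ γ : ℤ) ∣ (i - j : ℤ) := by
    rw [← norm_int_le_pow_iff_dvd]
    simpa [dist_eq_norm] using hdist
  zify at hi hj
  have := Int.eq_zero_of_abs_lt_dvd hdvd (by rw [abs_sub_lt_iff]; omega)
  omega

end Padic

namespace IsStdChar

variable {p : ℕ} [Fact p.Prime] {ψ : ℚ_[p] → ℂ}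

theorem ne_zero (hψ : IsStdChar p ψ) (x : ℚ_[p]) : ψ x ≠ 0 :=
  norm_ne_zero_iff.1 (by rw [hψ.2.2.1 x]; exact one_ne_zero)

theorem conj_apply (hψ : IsStdChar p ψ) (x : ℚ_[p]) : conj (ψ x) = ψ (-x) := by
  obtain ⟨-, hadd, hnorm, htriv, -⟩ := hψ
  rw [← Complex.inv_eq_conj (hnorm x), inv_eq_of_mul_eq_one_right]
  rw [← hadd, add_neg_cancel, htriv 0 (by simp)]

theorem apply_eq_mul_of_mem_closedBall (hψ : IsStdChar p ψ) {a b l x : ℚ_[p]} {r : ℝ}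
    (hx : x ∈ closedBall b r) (hl : ‖l - a‖ * r ≤ 1) : ψ (l * x) = ψ ((l - a) * b) * ψ (a * x) := by
  obtain ⟨-, hadd, -, htriv, -⟩ := hψ
  have h : ‖(l - a) * (x - b)‖ ≤ 1 := by
    rw [norm_mul]
    exact (mul_le_mul_of_nonneg_left (mem_closedBall_iff_norm.1 hx) (norm_nonneg _)).trans hl
  rw [show l * x = (l - a) * b + a * x + (l - a) * (x - b) by ring, hadd, hadd, htriv _ h, mul_one]

variable [MeasurableSpace ℚ_[p]] [BorelSpace ℚ_[p]]

theorem setIntegral_closedBall_eq_zero (hψ : IsStdChar p ψ) (μ : Measure ℚ_[p])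
    [μ.IsAddRightInvariant] (b : ℚ_[p]) {t : ℚ_[p]} {n : ℤ} (ht : (p : ℝ) ^ n < ‖t‖) :
    ∫ x in closedBall b (p ^ (-n)), ψ (t * x) ∂μ = 0 := by
  obtain ⟨-, hadd, -, -, x₀, hx₀, hψx₀⟩ := hψ
  have hp : (0 : ℝ) < p := by exact_mod_cast (Fact.out : p.Prime).pos
  have ht₀ : t ≠ 0 := by
    rintro rfl
    exact (zpow_pos hp n).not_ge (by simpa using ht.le)
  -- the norm of `t` is a power of `p`, so it is at least `p ^ (n + 1)`
  have ht' : (p : ℝ) ^ (n + 1) ≤ ‖t‖ :=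
    not_lt.1 fun h => ht.not_ge ((Padic.norm_le_pow_iff_norm_lt_pow_add_one t n).2 h)
  have hs : ‖x₀ / t‖ ≤ p ^ (-n) := by
    rw [norm_div, div_le_iff₀ (norm_pos_iff.2 ht₀)]
    calc ‖x₀‖ ≤ p := hx₀
      _ = p ^ (-n) * p ^ (n + 1) := by rw [← zpow_add₀ hp.ne']; simp
      _ ≤ p ^ (-n) * ‖t‖ := by gcongr
  refine setIntegral_eq_zero_of_add_eq_mul (s := x₀ / t) ?_ (fun x => ?_) hψx₀
  · rw [Metric.preimage_add_right_closedBall, IsUltrametricDist.closedBall_eq_of_mem]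
    simpa [dist_eq_norm] using hs
  · rw [mul_add, hadd, mul_div_cancel₀ _ ht₀]

variable (ν : Measure ℚ_[p]) [IsFiniteMeasure ν]

theorem memLp (hψ : IsStdChar p ψ) (l : ℚ_[p]) : MemLp (fun x => ψ (l * x)) 2 ν :=
  MemLp.of_bound (hψ.1.comp (continuous_const_mul l)).aestronglyMeasurable 1
    (ae_of_all _ fun _ => (hψ.2.2.1 _).le)

def expLp (hψ : IsStdChar p ψ) (l : ℚ_[p]) : Lp ℂ 2 ν :=
  (hψ.memLp ν l).toLp _

def cellLp (hψ : IsStdChar p ψ) (a b : ℚ_[p]) (r : ℝ) : Lp ℂ 2 ν :=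
  ((hψ.memLp ν a).indicator (s := closedBall b r) measurableSet_closedBall).toLp _

variable {ν}

theorem expLp_ne_zero (hψ : IsStdChar p ψ) [NeZero ν] (l : ℚ_[p]) : hψ.expLp ν l ≠ 0 := by
  intro h
  rw [expLp, Lp.eq_zero_iff_ae_eq_zero] at h
  have : ∀ᵐ _ ∂ν, False := by
    filter_upwards [(hψ.memLp ν l).coeFn_toLp, h] with x h₁ h₂
    exact hψ.ne_zero _ (h₁.symm.trans h₂)
  exact NeZero.ne ν (ae_eq_bot.1 (Filter.eventually_false_iff_eq_bot.1 this))

theorem cellLp_ne_zero (hψ : IsStdChar p ψ) (a : ℚ_[p]) {b : ℚ_[p]} {r : ℝ}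
    (hb : ν (closedBall b r) ≠ 0) : hψ.cellLp ν a b r ≠ 0 := by
  intro h
  rw [cellLp, Lp.eq_zero_iff_ae_eq_zero] at h
  refine hb (measure_eq_zero_iff_ae_notMem.2 ?_)
  have hcoe := ((hψ.memLp ν a).indicator (s := closedBall b r) measurableSet_closedBall).coeFn_toLp
  filter_upwards [hcoe, h] with x h₁ h₂ hx
  rw [h₂, Set.indicator_of_mem hx] at h₁
  exact hψ.ne_zero _ h₁.symm

theorem inner_cellLp_cellLp_of_disjoint (hψ : IsStdChar p ψ) (a : ℚ_[p]) {b₁ b₂ : ℚ_[p]} {r : ℝ}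
    (hd : Disjoint (closedBall b₁ r) (closedBall b₂ r)) :
    ⟪hψ.cellLp ν a b₁ r, hψ.cellLp ν a b₂ r⟫_ℂ = 0 := by
  rw [cellLp, cellLp, MemLp.inner_toLp_toLp]
  refine integral_eq_zero_of_ae (ae_of_all _ fun x => ?_)
  by_cases hx : x ∈ closedBall b₁ r
  · simp [Set.indicator_of_notMem (Set.disjoint_left.1 hd hx)]
  · simp [Set.indicator_of_notMem hx]

theorem inner_cellLp_expLp (hψ : IsStdChar p ψ) (a b l : ℚ_[p]) (r : ℝ) :
    ⟪hψ.cellLp ν a b r, hψ.expLp ν l⟫_ℂ = ∫ x in closedBall b r, ψ ((l - a) * x) ∂ν := by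
  rw [cellLp, expLp, MemLp.inner_toLp_toLp, ← integral_indicator measurableSet_closedBall]
  congr 1 with x
  by_cases hx : x ∈ closedBall b r
  · simp only [Set.indicator_of_mem hx, hψ.conj_apply, ← hψ.2.1]
    ring_nf
  · simp [Set.indicator_of_notMem hx]

variable {ι : Type*} (s : Finset ι) (z : ι → ℚ_[p]) {r : ℝ}

variable (ν) in
def cellSpan (hψ : IsStdChar p ψ) (a : ℚ_[p]) (r : ℝ) : Submodule ℂ (Lp ℂ 2 ν) :=
  span ℂ (Set.range fun c : s => hψ.cellLp ν a (z c) r)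

instance (hψ : IsStdChar p ψ) (a : ℚ_[p]) : FiniteDimensional ℂ (hψ.cellSpan ν s z a r) :=
  FiniteDimensional.span_of_finite ℂ (Set.finite_range _)

theorem finrank_cellSpan (hψ : IsStdChar p ψ) (a : ℚ_[p])
    (hdisj : (s : Set ι).PairwiseDisjoint fun c => closedBall (z c) r)
    (hpos : ∀ c ∈ s, ν (closedBall (z c) r) ≠ 0) :
    finrank ℂ (hψ.cellSpan ν s z a r) = s.card := by
  rw [cellSpan, finrank_span_eq_card, Fintype.card_coe]
  refine linearIndependent_of_ne_zero_of_inner_eq_zero (fun c => hψ.cellLp_ne_zero a (hpos c c.2))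
    fun c d hcd => ?_
  exact hψ.inner_cellLp_cellLp_of_disjoint a (hdisj c.2 d.2 (Subtype.coe_injective.ne hcd))

theorem expLp_mem_cellSpan (hψ : IsStdChar p ψ)
    (hdisj : (s : Set ι).PairwiseDisjoint fun c => closedBall (z c) r)
    (hcover : ∀ᵐ x ∂ν, ∃ c ∈ s, x ∈ closedBall (z c) r) {a l : ℚ_[p]} (hl : ‖l - a‖ * r ≤ 1) :
    hψ.expLp ν l ∈ hψ.cellSpan ν s z a r := by
  suffices hsum : hψ.expLp ν l = ∑ c : s, ψ ((l - a) * z c) • hψ.cellLp ν a (z c) r by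
    rw [hsum]
    exact sum_mem fun c _ => smul_mem _ _ (subset_span ⟨c, rfl⟩)
  have hcell : ∀ᵐ x ∂ν, ∀ c : s, (ψ ((l - a) * z c) • hψ.cellLp ν a (z c) r) x =
      ψ ((l - a) * z c) * (closedBall (z c) r).indicator (fun x => ψ (a * x)) x :=
    Filter.eventually_all.2 fun c => by
      filter_upwards [Lp.coeFn_smul (ψ ((l - a) * z c)) (hψ.cellLp ν a (z c) r),
        ((hψ.memLp ν a).indicator (s := closedBall (z c) r) measurableSet_closedBall).coeFn_toLp]
        with x h₁ h₂
      rw [h₁, Pi.smul_apply, cellLp, h₂, smul_eq_mul]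
  refine Lp.ext ?_
  filter_upwards [(hψ.memLp ν l).coeFn_toLp, Lp.coeFn_fun_finsetSum Finset.univ
    (fun c : s => ψ ((l - a) * z c) • hψ.cellLp ν a (z c) r), hcell, hcover]
    with x h₁ h₂ h₃ ⟨c₀, hc₀, hx⟩
  rw [expLp, h₁, h₂, Finset.sum_congr rfl fun c _ => h₃ c,
    Finset.sum_eq_single_of_mem ⟨c₀, hc₀⟩ (Finset.mem_univ _) fun c _ hc => ?_,
    Set.indicator_of_mem hx, hψ.apply_eq_mul_of_mem_closedBall hx hl]
  have hx' : x ∉ closedBall (z c) r :=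
    Set.disjoint_right.1 (hdisj c.2 hc₀ (Subtype.coe_injective.ne hc)) hx
  rw [Set.indicator_of_notMem hx', mul_zero]

theorem expLp_mem_orthogonal_cellSpan (hψ : IsStdChar p ψ) {a l : ℚ_[p]}
    (h : ∀ c ∈ s, ∫ x in closedBall (z c) r, ψ ((l - a) * x) ∂ν = 0) :
    hψ.expLp ν l ∈ (hψ.cellSpan ν s z a r)ᗮ := by
  refine (mem_orthogonal _ _).2 fun u hu => ?_
  refine mem_orthogonal_singleton_iff_inner_left.1 (span_le.2 ?_ hu)
  rintro _ ⟨c, rfl⟩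
  rw [SetLike.mem_coe, mem_orthogonal_singleton_iff_inner_left, inner_cellLp_expLp, h c c.2]

end IsStdChar

namespace IsSpectrum

variable {p : ℕ} [Fact p.Prime] {ψ : ℚ_[p] → ℂ} [MeasurableSpace ℚ_[p]] [BorelSpace ℚ_[p]]
  {μ : Measure ℚ_[p]} {Ω Λ : Set ℚ_[p]} [IsFiniteMeasure (μ.restrict Ω)]

theorem pairwise_inner_expLp_eq_zero (hΛ : IsSpectrum p ψ μ Ω Λ) (hψ : IsStdChar p ψ) :
    Λ.Pairwise fun l₁ l₂ => ⟪hψ.expLp (μ.restrict Ω) l₁, hψ.expLp (μ.restrict Ω) l₂⟫_ℂ = 0 :=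
  fun l₁ h₁ l₂ h₂ hne => by
    simpa only [IsStdChar.expLp, MemLp.inner_toLp_toLp, mul_comm (conj _)] using
      hΛ.1 l₂ h₂ l₁ h₁ hne.symm

theorem dense_span_expLp (hΛ : IsSpectrum p ψ μ Ω Λ) (hψ : IsStdChar p ψ) :
    Dense (span ℂ (hψ.expLp (μ.restrict Ω) '' Λ) : Set (Lp ℂ 2 (μ.restrict Ω))) := by
  convert hΛ.2 using 4
  ext g
  constructor
  · rintro ⟨l, hl, rfl⟩
    exact ⟨l, hl, (hψ.memLp _ l).coeFn_toLp⟩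
  · rintro ⟨l, hl, hg⟩
    exact ⟨l, hl, Lp.ext ((hψ.memLp _ l).coeFn_toLp.trans (Filter.EventuallyEq.symm hg))⟩

end IsSpectrum

theorem spectrum_uniformly_distributed_general
    (p γ : ℕ) [Fact p.Prime]
    (C : Finset ℕ) (hCne : C.Nonempty) (hCsub : ∀ c ∈ C, c < p ^ γ)
    (ψ : ℚ_[p] → ℂ) (hψ : IsStdChar p ψ)
    [MeasurableSpace ℚ_[p]] [BorelSpace ℚ_[p]]
    (μ : Measure ℚ_[p]) [μ.IsAddHaarMeasure]
    (Ω : Set ℚ_[p])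
    (hΩ : Ω = ⋃ c ∈ C, {x : ℚ_[p] | ‖x - (c : ℚ_[p])‖ ≤ (p : ℝ) ^ (-(γ : ℤ))})
    (Λ : Set ℚ_[p]) (hΛ : IsSpectrum p ψ μ Ω Λ) :
    ∀ a : ℚ_[p], (Λ ∩ {x : ℚ_[p] | ‖x - a‖ ≤ (p : ℝ) ^ (γ : ℤ)}).ncard = C.card := by
  intro a
  simp only [← mem_closedBall_iff_norm, Set.ofPred_mem_eq] at hΩ ⊢
  set r : ℝ := (p : ℝ) ^ (-(γ : ℤ))
  have hp : (0 : ℝ) < p := by exact_mod_cast (Fact.out : p.Prime).pos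
  have hdisj : (C : Set ℕ).PairwiseDisjoint fun c => closedBall (c : ℚ_[p]) r :=
    fun i hi j hj hij => Padic.disjoint_closedBall_natCast (hCsub i hi) (hCsub j hj) hij
  have hsub : ∀ c ∈ C, closedBall (c : ℚ_[p]) r ⊆ Ω :=
    fun c hc => hΩ ▸ Set.subset_biUnion_of_mem (u := fun c : ℕ => closedBall (c : ℚ_[p]) r) hc
  have hpos : ∀ c ∈ C, μ.restrict Ω (closedBall c r) ≠ 0 := fun c hc => by
    rw [Measure.restrict_eq_self _ (hsub c hc)]
    exact (measure_closedBall_pos μ _ (by positivity)).ne'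
  have : IsFiniteMeasure (μ.restrict Ω) := isFiniteMeasure_restrict.2
    (hΩ ▸ (C.isCompact_biUnion fun c _ => isCompact_closedBall _ _).measure_lt_top.ne)
  have : NeZero (μ.restrict Ω) := ⟨fun h => hpos _ hCne.choose_spec (by simp [h])⟩
  rw [← hψ.finrank_cellSpan C Nat.cast a hdisj hpos]
  refine ncard_inter_eq_finrank_of_dense_span _ (fun l _ => hψ.expLp_ne_zero l)
    (hΛ.pairwise_inner_expLp_eq_zero hψ) (hΛ.dense_span_expLp hψ) (fun l hl => ?_) fun l hl => ?_
  · have hcover : ∀ᵐ x ∂μ.restrict Ω, ∃ c ∈ C, x ∈ closedBall (c : ℚ_[p]) r :=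
      ae_restrict_of_forall_mem (hΩ ▸ C.measurableSet_biUnion fun _ _ => measurableSet_closedBall)
        fun x hx => by simpa [hΩ] using hx
    refine hψ.expLp_mem_cellSpan C _ hdisj hcover ?_
    calc ‖l - a‖ * r ≤ p ^ (γ : ℤ) * r := by gcongr; exact mem_closedBall_iff_norm.1 hl
      _ = 1 := by rw [← zpow_add₀ hp.ne', add_neg_cancel, zpow_zero]
  · refine hψ.expLp_mem_orthogonal_cellSpan C _ fun c hc => ?_
    rw [Measure.restrict_restrict_of_subset (hsub c hc)]
    exact hψ.setIntegral_closedBall_eq_zero μ _ (not_le.1 (mt mem_closedBall_iff_norm.2 hl))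

/-- if `Λ` is a spectrum of `Ω = ⋃_{c∈C}(c + p^γ ℤ_p)`, then every closed ball
of radius `p^γ` contains exactly `#C` points of `Λ`. -/
theorem spectrum_uniformly_distributed
    (p γ : ℕ) [Fact p.Prime] (hγ : 1 ≤ γ)
    (C : Finset ℕ) (hCne : C.Nonempty) (hCsub : ∀ c ∈ C, c < p ^ γ)
    (ψ : ℚ_[p] → ℂ) (hψ : IsStdChar p ψ)
    [MeasurableSpace ℚ_[p]] [BorelSpace ℚ_[p]]
    (μ : Measure ℚ_[p]) [μ.IsAddHaarMeasure]
    (hμ : μ {x : ℚ_[p] | ‖x‖ ≤ 1} = 1)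
    (Ω : Set ℚ_[p])
    (hΩ : Ω = ⋃ c ∈ C, {x : ℚ_[p] | ‖x - (c : ℚ_[p])‖ ≤ (p : ℝ) ^ (-(γ : ℤ))})
    (Λ : Set ℚ_[p]) (hΛ : IsSpectrum p ψ μ Ω Λ) :
    ∀ a : ℚ_[p], (Λ ∩ {x : ℚ_[p] | ‖x - a‖ ≤ (p : ℝ) ^ (γ : ℤ)}).ncard = C.card :=
  spectrum_uniformly_distributed_general p γ C hCne hCsub ψ hψ μ Ω hΩ Λ hΛ
end
end

section
/- Let p be a prime and E a finite subset of ℚ_p. Then #E ≤ p^{#I_E}, where I_E = {v_p(x − y) : x, y ∈ E, x ≠ y} is the (finite) set of admissible p-orders of E. -/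
/-!
Take `a, b ∈ E` at maximal distance, so that `E` lies in the closed ball of radius `‖a - b‖` about
`a`. Reducing `(x - a) / (a - b) ∈ ℤ_p` modulo `p` splits this ball into at most `p` open balls of
the same radius. Two distinct points in one of them are at distance `< ‖a - b‖`, so each of the at
most `p` parts of `E` misses the order `v_p(a - b)`, and induction on `#I_E` gives
`#E ≤ p · p^{#I_E - 1}`.
-/

noncomputable section

/-- The set of admissible `p`-orders of a set `E ⊆ ℚ_p`. -/
def pOrders (p : ℕ) [Fact p.Prime] (E : Set ℚ_[p]) : Set ℤ :=
  {n : ℤ | ∃ x ∈ E, ∃ y ∈ E, x ≠ y ∧ (x - y).valuation = n}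

theorem Set.ncard_le_card_mul_of_ncard_fiber_le {α β : Type*} [Fintype β] {s : Set α}
    (hs : s.Finite) (f : α → β) {n : ℕ} (h : ∀ b, {a ∈ s | f a = b}.ncard ≤ n) :
    s.ncard ≤ Fintype.card β * n := by
  classical
  obtain ⟨t, rfl⟩ := hs.exists_finset_coe
  rw [Set.ncard_coe_finset, mul_comm, ← Finset.card_univ]
  refine Finset.card_le_mul_card_image_of_maps_to (f := f) (fun _ _ ↦ Finset.mem_univ _) n
    fun b _ ↦ ?_
  simpa [← Set.ncard_coe_finset] using h b

theorem Set.Finite.exists_ne_forall_dist_le {α : Type*} [MetricSpace α] {s : Set α}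
    (hs : s.Finite) (hnt : s.Nontrivial) :
    ∃ a ∈ s, ∃ b ∈ s, a ≠ b ∧ ∀ x ∈ s, ∀ y ∈ s, dist x y ≤ dist a b := by
  obtain ⟨⟨a, b⟩, ⟨ha, hb⟩, hmax⟩ := (s ×ˢ s).exists_max_image (fun q ↦ dist q.1 q.2)
    (hs.prod hs) (hnt.nonempty.prod hnt.nonempty)
  refine ⟨a, ha, b, hb, fun hab ↦ ?_, fun x hx y hy ↦ hmax (x, y) ⟨hx, hy⟩⟩
  obtain ⟨x, hx, y, hy, hxy⟩ := hnt
  exact hxy (dist_le_zero.1 (by simpa [hab] using hmax (x, y) ⟨hx, hy⟩))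

namespace PadicInt

variable {p : ℕ} [Fact p.Prime]

theorem toZMod_eq_toZMod_iff (x y : ℤ_[p]) : toZMod x = toZMod y ↔ ‖x - y‖ < 1 := by
  rw [← sub_eq_zero, ← map_sub, ← RingHom.mem_ker, ker_toZMod, IsLocalRing.mem_maximalIdeal,
    mem_nonunits]

end PadicInt

namespace Padic

variable {p : ℕ} [Fact p.Prime]

theorem exists_residue_eq_iff_norm_sub_lt (a : ℚ_[p]) {c : ℚ_[p]} (hc : c ≠ 0) :
    ∃ r : ℚ_[p] → ZMod p, ∀ x y, ‖x - a‖ ≤ ‖c‖ → ‖y - a‖ ≤ ‖c‖ →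
      (r x = r y ↔ ‖x - y‖ < ‖c‖) := by
  have hc' : 0 < ‖c‖ := norm_pos_iff.2 hc
  refine ⟨fun x ↦ if h : ‖(x - a) / c‖ ≤ 1 then PadicInt.toZMod (⟨_, h⟩ : ℤ_[p]) else 0,
    fun x y hx hy ↦ ?_⟩
  have hx' : ‖(x - a) / c‖ ≤ 1 := by rwa [norm_div, div_le_one hc']
  have hy' : ‖(y - a) / c‖ ≤ 1 := by rwa [norm_div, div_le_one hc']
  simp only [dif_pos hx', dif_pos hy']
  refine (PadicInt.toZMod_eq_toZMod_iff (⟨_, hx'⟩ : ℤ_[p]) ⟨_, hy'⟩).trans ?_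
  change ‖(x - a) / c - (y - a) / c‖ < 1 ↔ _
  rw [← sub_div, sub_sub_sub_cancel_right, norm_div, div_lt_one hc']

end Padic

section pOrders

variable {p : ℕ} [Fact p.Prime]

theorem pOrders_finite {E : Set ℚ_[p]} (hE : E.Finite) : (pOrders p E).Finite :=
  ((hE.prod hE).image fun q ↦ (q.1 - q.2).valuation).subset
    fun _ ⟨x, hx, y, hy, _, h⟩ ↦ ⟨(x, y), ⟨hx, hy⟩, h⟩

theorem pOrders_mono {E F : Set ℚ_[p]} (h : E ⊆ F) : pOrders p E ⊆ pOrders p F :=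
  fun _ ⟨x, hx, y, hy, hxy, hv⟩ ↦ ⟨x, h hx, y, h hy, hxy, hv⟩

theorem ncard_pOrders_lt {E F : Set ℚ_[p]} (hE : E.Finite) (hFE : F ⊆ E) {m : ℤ}
    (hmE : m ∈ pOrders p E) (hmF : m ∉ pOrders p F) :
    (pOrders p F).ncard < (pOrders p E).ncard :=
  Set.ncard_lt_ncard ((pOrders_mono hFE).ssubset_of_not_subset fun h ↦ hmF (h hmE))
    (pOrders_finite hE)

end pOrders

/-- a finite subset `E ⊆ ℚ_p` satisfies `#E ≤ p^{#I_E}`. -/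
theorem card_le_pow_card_pOrders
    (p : ℕ) [Fact p.Prime] (E : Set ℚ_[p]) (hE : E.Finite) :
    E.ncard ≤ p ^ (pOrders p E).ncard := by
  have hp : 0 < p := (Fact.out : p.Prime).pos
  induction hn : (pOrders p E).ncard using Nat.strong_induction_on generalizing E with
  | _ n ih =>
  rcases E.subsingleton_or_nontrivial with hs | hnt
  · exact ((Set.ncard_le_one hE).2 hs).trans (Nat.one_le_pow _ _ hp)
  obtain ⟨a, ha, b, hb, hab, hdiam⟩ := hE.exists_ne_forall_dist_le hnt
  simp only [dist_eq_norm] at hdiam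
  obtain ⟨r, hr⟩ := Padic.exists_residue_eq_iff_norm_sub_lt a (sub_ne_zero.2 hab)
  have hfiber (i : ZMod p) : (pOrders p {x ∈ E | r x = i}).ncard < n := by
    refine hn ▸ ncard_pOrders_lt hE (Set.sep_subset _ _) ⟨a, ha, b, hb, hab, rfl⟩ ?_
    rintro ⟨x, ⟨hx, rfl⟩, y, ⟨hy, hxy⟩, hne, hv⟩
    have hlt := (hr x y (hdiam x hx a ha) (hdiam y hy a ha)).1 hxy.symm
    rw [Padic.norm_eq_zpow_neg_valuation (sub_ne_zero.2 hne),
      Padic.norm_eq_zpow_neg_valuation (sub_ne_zero.2 hab), hv] at hlt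
    exact hlt.false
  obtain ⟨k, rfl⟩ : ∃ k, n = k + 1 := ⟨n - 1, by have := hfiber 0; omega⟩
  calc E.ncard ≤ Fintype.card (ZMod p) * p ^ k :=
        Set.ncard_le_card_mul_of_ncard_fiber_le hE r fun i ↦
          (ih _ (hfiber i) _ (hE.subset (Set.sep_subset _ _)) rfl).trans
            (Nat.pow_le_pow_right hp (Nat.le_of_lt_succ (hfiber i)))
    _ = p ^ (k + 1) := by rw [ZMod.card, pow_succ']
end
end

section
/- Let p be a prime and E a nonempty p-homogeneous subset of ℚ_p whose set of admissible p-orders I_E is bounded above. Then there exists an isometric transformation f of ℚ_p such that f(E) = Ê, where Ê = {∑_{i∈F} β_i p^i : F a finite subset of I_E, β_i ∈ {0, 1, …, p − 1} for each i ∈ F} (the empty sum 0 belongs to Ê). -/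
noncomputable section

/-- `E ⊆ ℚ_p` is `p`-homogeneous. -/
def PHomogeneous (p : ℕ) [Fact p.Prime] (E : Set ℚ_[p]) : Prop :=
  ∀ n ∈ pOrders p E, ∀ x ∈ E, ∀ t : ℕ, t < p →
    ∃ y ∈ E, ‖y - x - (t : ℚ_[p]) * (p : ℚ_[p]) ^ n‖ ≤ (p : ℝ) ^ (-(n + 1))

/-- The canonical set `Ê = {∑_{i∈F} β_i p^i : F ⊆ I finite, 0 ≤ β_i < p}` attached to a set
`I ⊆ ℤ` of exponents. -/
def canonicalSet (p : ℕ) [Fact p.Prime] (I : Set ℤ) : Set ℚ_[p] :=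
  {x : ℚ_[p] | ∃ F : Finset ℤ, (↑F : Set ℤ) ⊆ I ∧ ∃ β : ℤ → ℕ, (∀ i ∈ F, β i < p) ∧
    x = ∑ i ∈ F, (β i : ℚ_[p]) * (p : ℚ_[p]) ^ i}

/-!
Fix `x₀ ∈ E` and an upper bound `N` of `I_E`. In every closed ball of radius `p ^ (-i)` choose a
representative, in `E` whenever the ball meets `E` and equal to `x₀` whenever the ball contains
it. Along the balls around `x`, consecutive representatives `R_{i+1} x` and `R_i x` differ by
`a_i p ^ i` plus a correction of norm `≤ p ^ (-(i + 1))` that depends only on the ball of radius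
`p ^ (-(i + 1))` around `x`. Subtracting these corrections (for `i ≤ N`) from `x - x₀` therefore
changes a difference `x - y` only beyond its leading term, which gives an isometry of `ℚ_p`.
For `x ∈ E` the representatives telescope, `R_{N+1} x = x` since distinct points of `E` are at
distance `≥ p ^ (-N)`, so the image of `x` is `∑ a_i p ^ i`, and `a_i ≠ 0` forces `i ∈ I_E`.
Conversely, homogeneity lets one prescribe the digits `a_i` at the levels `i ∈ I_E` one level
at a time.
-/

open Metric Finset

namespace IsUltrametricDist

variable {S : Type*} [SeminormedAddGroup S] [IsUltrametricDist S] {a b : S}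

theorem norm_add_le_of_le_of_le {r : ℝ} (ha : ‖a‖ ≤ r) (hb : ‖b‖ ≤ r) : ‖a + b‖ ≤ r :=
  (norm_add_le_max a b).trans (max_le ha hb)

theorem norm_sub_le_of_le_of_le {r : ℝ} (ha : ‖a‖ ≤ r) (hb : ‖b‖ ≤ r) : ‖a - b‖ ≤ r := by
  rw [sub_eq_add_neg]
  exact norm_add_le_of_le_of_le ha (by rwa [norm_neg])

theorem norm_sub_eq_of_norm_lt (h : ‖b‖ < ‖a‖) : ‖a - b‖ = ‖a‖ := by
  rw [sub_eq_add_neg, norm_add_eq_max_of_norm_ne_norm (by rw [norm_neg]; exact h.ne'), norm_neg,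
    max_eq_left h.le]

end IsUltrametricDist

theorem Finset.sum_Ico_sub_int {G : Type*} [AddCommGroup G] (f : ℤ → G) {a b : ℤ} (h : a ≤ b) :
    ∑ i ∈ Ico a b, (f (i + 1) - f i) = f b - f a := by
  induction b, h using Int.leInduction with
  | base => simp
  | succ b hab ih =>
    rw [← insert_Ico_right_eq_Ico_add_one hab, sum_insert right_notMem_Ico, ih]
    abel

namespace Padic

open IsUltrametricDist

variable {p : ℕ} [Fact p.Prime]

theorem one_lt_natCast_prime : (1 : ℝ) < p := by exact_mod_cast (Fact.out : p.Prime).one_lt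

theorem zpow_natCast_prime_le {m n : ℤ} (h : m ≤ n) : (p : ℝ) ^ m ≤ (p : ℝ) ^ n :=
  zpow_le_zpow_right₀ one_lt_natCast_prime.le h

theorem zpow_natCast_prime_pos (i : ℤ) : 0 < (p : ℝ) ^ i :=
  zpow_pos (by exact_mod_cast (Fact.out : p.Prime).pos) i

theorem norm_le_zpow_neg_of_le_valuation {w : ℚ_[p]} {L : ℤ} (h : L ≤ w.valuation) :
    ‖w‖ ≤ (p : ℝ) ^ (-L) := by
  rcases eq_or_ne w 0 with rfl | hw
  · rw [norm_zero]; positivity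
  · rw [norm_eq_zpow_neg_valuation hw]
    exact zpow_natCast_prime_le (by omega)

theorem norm_natCast_mul_zpow_le (d : ℕ) (i : ℤ) :
    ‖(d : ℚ_[p]) * (p : ℚ_[p]) ^ i‖ ≤ (p : ℝ) ^ (-i) := by
  rw [norm_mul, norm_p_zpow]
  exact mul_le_of_le_one_left (by positivity) (norm_natCast_le_one ℚ_[p] d)

theorem exists_digit {i : ℤ} {w : ℚ_[p]} (hw : ‖w‖ ≤ (p : ℝ) ^ (-i)) :
    ∃ d < p, ‖w - d * (p : ℚ_[p]) ^ i‖ ≤ (p : ℝ) ^ (-(i + 1)) := by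
  have hp : (p : ℚ_[p]) ≠ 0 := by exact_mod_cast (Fact.out : p.Prime).ne_zero
  have hu : ‖w * (p : ℚ_[p]) ^ (-i)‖ ≤ 1 := by
    rw [norm_mul, norm_p_zpow, neg_neg]
    calc ‖w‖ * (p : ℝ) ^ i ≤ (p : ℝ) ^ (-i) * (p : ℝ) ^ i := by gcongr
      _ = 1 := zpow_neg_mul_zpow_self i (by exact_mod_cast hp)
  set u : ℤ_[p] := ⟨_, hu⟩
  refine ⟨u.zmodRepr, u.zmodRepr_lt_p, ?_⟩
  have hlt : ‖w * (p : ℚ_[p]) ^ (-i) - u.zmodRepr‖ < 1 := by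
    have h := u.norm_sub_zmodRepr_lt_one
    rwa [PadicInt.norm_def, PadicInt.coe_sub, PadicInt.coe_natCast] at h
  have hw : w - u.zmodRepr * (p : ℚ_[p]) ^ i =
      (w * (p : ℚ_[p]) ^ (-i) - u.zmodRepr) * (p : ℚ_[p]) ^ i := by
    rw [sub_mul, mul_assoc, zpow_neg_mul_zpow_self i hp, mul_one]
  rw [hw, show -(i + 1) = -i - 1 by ring, ← norm_lt_pow_iff_norm_le_pow_sub_one, norm_mul,
    norm_p_zpow]
  exact mul_lt_of_lt_one_left (zpow_natCast_prime_pos _) hlt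

theorem digit_unique {i : ℤ} {w : ℚ_[p]} {d d' : ℕ} (hd : d < p) (hd' : d' < p)
    (h : ‖w - d * (p : ℚ_[p]) ^ i‖ ≤ (p : ℝ) ^ (-(i + 1)))
    (h' : ‖w - d' * (p : ℚ_[p]) ^ i‖ ≤ (p : ℝ) ^ (-(i + 1))) : d = d' := by
  have hsub : ‖(((d : ℤ) - d' : ℤ) : ℚ_[p]) * (p : ℚ_[p]) ^ i‖ ≤ (p : ℝ) ^ (-(i + 1)) := by
    have : (((d : ℤ) - d' : ℤ) : ℚ_[p]) * (p : ℚ_[p]) ^ i =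
        (w - d' * (p : ℚ_[p]) ^ i) - (w - d * (p : ℚ_[p]) ^ i) := by push_cast; ring
    exact this ▸ norm_sub_le_of_le_of_le h' h
  rw [norm_mul, norm_p_zpow] at hsub
  have hlt : ‖(((d : ℤ) - d' : ℤ) : ℚ_[p])‖ < 1 := by
    refine lt_of_mul_lt_mul_right (a := (p : ℝ) ^ (-i)) ?_ (zpow_natCast_prime_pos _).le
    rw [one_mul]
    exact hsub.trans_lt (zpow_lt_zpow_right₀ one_lt_natCast_prime (by omega))
  have := Int.eq_zero_of_abs_lt_dvd (norm_intCast_lt_one_iff.1 hlt) (by rw [abs_lt]; omega)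
  omega

variable (p) in
open Classical in
/-- The `p`-adic digit of `w` at position `i`, for `‖w‖ ≤ p ^ (-i)` (and `0` otherwise). -/
def leadingDigit (i : ℤ) (w : ℚ_[p]) : ℕ :=
  if h : ∃ d < p, ‖w - d * (p : ℚ_[p]) ^ i‖ ≤ (p : ℝ) ^ (-(i + 1)) then h.choose else 0

theorem leadingDigit_lt (i : ℤ) (w : ℚ_[p]) : leadingDigit p i w < p := by
  unfold leadingDigit
  split_ifs with h
  · exact h.choose_spec.1
  · exact (Fact.out : p.Prime).pos

theorem norm_sub_leadingDigit_le {i : ℤ} {w : ℚ_[p]} (hw : ‖w‖ ≤ (p : ℝ) ^ (-i)) :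
    ‖w - leadingDigit p i w * (p : ℚ_[p]) ^ i‖ ≤ (p : ℝ) ^ (-(i + 1)) := by
  have h := exists_digit hw
  rw [leadingDigit, dif_pos h]
  exact h.choose_spec.2

theorem leadingDigit_eq {i : ℤ} {w : ℚ_[p]} {d : ℕ} (hd : d < p)
    (h : ‖w - d * (p : ℚ_[p]) ^ i‖ ≤ (p : ℝ) ^ (-(i + 1))) : leadingDigit p i w = d := by
  have hex : ∃ d < p, ‖w - d * (p : ℚ_[p]) ^ i‖ ≤ (p : ℝ) ^ (-(i + 1)) := ⟨d, hd, h⟩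
  rw [leadingDigit, dif_pos hex]
  exact digit_unique hex.choose_spec.1 hd hex.choose_spec.2 h

theorem leadingDigit_eq_zero {i : ℤ} {w : ℚ_[p]} (hw : ‖w‖ ≤ (p : ℝ) ^ (-(i + 1))) :
    leadingDigit p i w = 0 :=
  leadingDigit_eq (Fact.out : p.Prime).pos (by simpa using hw)

theorem valuation_eq_of_leadingDigit_ne_zero {i : ℤ} {w : ℚ_[p]} (hw : ‖w‖ ≤ (p : ℝ) ^ (-i))
    (hd : leadingDigit p i w ≠ 0) : w ≠ 0 ∧ w.valuation = i := by
  have hlarge : ¬ ‖w‖ ≤ (p : ℝ) ^ (-(i + 1)) := fun h => hd (leadingDigit_eq_zero h)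
  have hw0 : w ≠ 0 := by rintro rfl; exact hlarge (by rw [norm_zero]; positivity)
  rw [norm_eq_zpow_neg_valuation hw0, zpow_le_zpow_iff_right₀ one_lt_natCast_prime]
    at hw hlarge
  exact ⟨hw0, by omega⟩

section BallRep

variable {X : Type*} (E : Set X) (x₀ : X)

open Classical in
/-- Since it depends on `B` only as a set, it picks the same point of a ball for all of its
centres. -/
def ballRep (B : Set X) : X :=
  if x₀ ∈ B then x₀ else @Classical.epsilon X ⟨x₀⟩ fun e => e ∈ B ∧ ((E ∩ B).Nonempty → e ∈ E)

theorem ballRep_spec {B : Set X} (hB : B.Nonempty) :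
    ballRep E x₀ B ∈ B ∧ (x₀ ∈ E → (E ∩ B).Nonempty → ballRep E x₀ B ∈ E) := by
  unfold ballRep
  split_ifs with h
  · exact ⟨h, fun hx₀ _ => hx₀⟩
  · have hex : ∃ e, e ∈ B ∧ ((E ∩ B).Nonempty → e ∈ E) := by
      by_cases hEB : (E ∩ B).Nonempty
      · exact ⟨hEB.some, hEB.some_mem.2, fun _ => hEB.some_mem.1⟩
      · exact ⟨hB.some, hB.some_mem, fun h => absurd h hEB⟩
    have := @Classical.epsilon_spec X _ hex
    exact ⟨this.1, fun _ => this.2⟩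

end BallRep

section CanonicalMap

variable (E : Set ℚ_[p]) (x₀ : ℚ_[p]) (N : ℤ)

def levelRep (i : ℤ) (x : ℚ_[p]) : ℚ_[p] :=
  ballRep E x₀ (closedBall x ((p : ℝ) ^ (-i)))

variable {E x₀}

theorem levelRep_congr {i : ℤ} {x y : ℚ_[p]} (h : ‖x - y‖ ≤ (p : ℝ) ^ (-i)) :
    levelRep E x₀ i x = levelRep E x₀ i y := by
  rw [levelRep, levelRep,
    closedBall_eq_of_mem (by rwa [mem_closedBall, dist_eq_norm, norm_sub_rev])]

theorem norm_levelRep_sub_le (i : ℤ) (x : ℚ_[p]) :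
    ‖levelRep E x₀ i x - x‖ ≤ (p : ℝ) ^ (-i) := by
  have := (ballRep_spec E x₀
    (nonempty_closedBall (x := x).2 (zpow_natCast_prime_pos (p := p) (-i)).le)).1
  rwa [mem_closedBall, dist_eq_norm] at this

theorem levelRep_mem (hx₀ : x₀ ∈ E) {x : ℚ_[p]} (hx : x ∈ E) (i : ℤ) :
    levelRep E x₀ i x ∈ E :=
  (ballRep_spec E x₀ (nonempty_closedBall.2 (zpow_natCast_prime_pos (-i)).le)).2 hx₀
    ⟨x, hx, mem_closedBall_self (zpow_natCast_prime_pos (-i)).le⟩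

theorem levelRep_eq_of_norm_le {i : ℤ} {x : ℚ_[p]} (h : ‖x - x₀‖ ≤ (p : ℝ) ^ (-i)) :
    levelRep E x₀ i x = x₀ :=
  if_pos (by rwa [mem_closedBall, dist_eq_norm, norm_sub_rev])

theorem norm_levelRep_succ_sub_le (i : ℤ) (x : ℚ_[p]) :
    ‖levelRep E x₀ (i + 1) x - levelRep E x₀ i x‖ ≤ (p : ℝ) ^ (-i) := by
  rw [← sub_sub_sub_cancel_right _ _ x]
  exact norm_sub_le_of_le_of_le
    ((norm_levelRep_sub_le _ x).trans (zpow_natCast_prime_le (by omega)))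
    (norm_levelRep_sub_le _ x)

variable (E x₀)

def levelDigit (i : ℤ) (x : ℚ_[p]) : ℕ :=
  leadingDigit p i (levelRep E x₀ (i + 1) x - levelRep E x₀ i x)

def correction (i : ℤ) (x : ℚ_[p]) : ℚ_[p] :=
  levelRep E x₀ (i + 1) x - levelRep E x₀ i x - levelDigit E x₀ i x * (p : ℚ_[p]) ^ i

def correctionSum (L : ℤ) (x : ℚ_[p]) : ℚ_[p] :=
  ∑ i ∈ Ico L (N + 1), correction E x₀ i x

/-- The corrections below level `(x - x₀).valuation` vanish (`correction_eq_zero`), so the sum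
starts there. -/
def canonicalMap (x : ℚ_[p]) : ℚ_[p] :=
  x - x₀ - correctionSum E x₀ N (x - x₀).valuation x

variable {E x₀ N}

theorem levelDigit_congr {i : ℤ} {x y : ℚ_[p]} (h : ‖x - y‖ ≤ (p : ℝ) ^ (-(i + 1))) :
    levelDigit E x₀ i x = levelDigit E x₀ i y := by
  rw [levelDigit, levelDigit, levelRep_congr h,
    levelRep_congr (h.trans (zpow_natCast_prime_le (by omega)))]

theorem correction_congr {i : ℤ} {x y : ℚ_[p]} (h : ‖x - y‖ ≤ (p : ℝ) ^ (-(i + 1))) :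
    correction E x₀ i x = correction E x₀ i y := by
  rw [correction, correction, levelDigit_congr h, levelRep_congr h,
    levelRep_congr (h.trans (zpow_natCast_prime_le (by omega)))]

theorem norm_correction_le (i : ℤ) (x : ℚ_[p]) :
    ‖correction E x₀ i x‖ ≤ (p : ℝ) ^ (-(i + 1)) :=
  norm_sub_leadingDigit_le (norm_levelRep_succ_sub_le i x)

theorem correction_eq_zero {i : ℤ} {x : ℚ_[p]} (h : ‖x - x₀‖ ≤ (p : ℝ) ^ (-(i + 1))) :
    correction E x₀ i x = 0 := by
  rw [correction, levelDigit, levelRep_eq_of_norm_le h,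
    levelRep_eq_of_norm_le (h.trans (zpow_natCast_prime_le (by omega))), sub_self,
    leadingDigit_eq_zero (by rw [norm_zero]; positivity)]
  simp

theorem norm_correction_sub_le {n : ℤ} {x y : ℚ_[p]} (h : ‖x - y‖ ≤ (p : ℝ) ^ (-n)) (i : ℤ) :
    ‖correction E x₀ i x - correction E x₀ i y‖ ≤ (p : ℝ) ^ (-(n + 1)) := by
  rcases lt_or_ge i n with hi | hi
  · rw [correction_congr (h.trans (zpow_natCast_prime_le (by omega))), sub_self, norm_zero]
    positivity
  · exact norm_sub_le_of_le_of_le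
      ((norm_correction_le i x).trans (zpow_natCast_prime_le (by omega)))
      ((norm_correction_le i y).trans (zpow_natCast_prime_le (by omega)))

theorem correctionSum_congr {L L' : ℤ} {x : ℚ_[p]} (hL : ‖x - x₀‖ ≤ (p : ℝ) ^ (-L))
    (hL' : ‖x - x₀‖ ≤ (p : ℝ) ^ (-L')) :
    correctionSum E x₀ N L x = correctionSum E x₀ N L' x := by
  wlog h : L ≤ L' generalizing L L'
  · exact (this hL' hL (le_of_not_ge h)).symm
  refine (sum_subset (Ico_subset_Ico_left h) fun i hi hi' =>
    correction_eq_zero (hL'.trans (zpow_natCast_prime_le ?_))).symm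
  simp only [mem_Ico, not_and, not_lt] at hi hi'
  omega

theorem canonicalMap_eq {L : ℤ} {x : ℚ_[p]} (hL : ‖x - x₀‖ ≤ (p : ℝ) ^ (-L)) :
    canonicalMap E x₀ N x = x - x₀ - correctionSum E x₀ N L x := by
  rw [canonicalMap, correctionSum_congr (norm_le_zpow_neg_of_le_valuation le_rfl) hL]

theorem norm_canonicalMap_sub (x y : ℚ_[p]) :
    ‖canonicalMap E x₀ N x - canonicalMap E x₀ N y‖ = ‖x - y‖ := by
  rcases eq_or_ne x y with rfl | hxy
  · simp
  set L := min (x - x₀).valuation (y - x₀).valuation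
  have hn : ‖x - y‖ = (p : ℝ) ^ (-(x - y).valuation) :=
    norm_eq_zpow_neg_valuation (sub_ne_zero.2 hxy)
  have hsum : ‖correctionSum E x₀ N L x - correctionSum E x₀ N L y‖ < ‖x - y‖ := by
    rw [correctionSum, correctionSum, ← sum_sub_distrib, hn]
    refine (norm_sum_le_of_forall_le_of_nonneg (zpow_natCast_prime_pos _).le
      fun i _ => norm_correction_sub_le hn.le i).trans_lt ?_
    exact zpow_lt_zpow_right₀ one_lt_natCast_prime (by omega)
  rw [canonicalMap_eq (norm_le_zpow_neg_of_le_valuation (min_le_left _ _)),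
    canonicalMap_eq (x := y) (norm_le_zpow_neg_of_le_valuation (min_le_right _ _)),
    ← norm_sub_eq_of_norm_lt hsum]
  congr 1
  ring

theorem eq_of_norm_sub_le_of_mem_upperBounds (hN : N ∈ upperBounds (pOrders p E))
    {x y : ℚ_[p]} (hx : x ∈ E) (hy : y ∈ E) (h : ‖x - y‖ ≤ (p : ℝ) ^ (-(N + 1))) : x = y := by
  by_contra hxy
  have hv : (x - y).valuation ≤ N := hN ⟨x, hx, y, hy, hxy, rfl⟩
  rw [norm_eq_zpow_neg_valuation (sub_ne_zero.2 hxy),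
    zpow_le_zpow_iff_right₀ one_lt_natCast_prime] at h
  omega

theorem canonicalMap_eq_sum (hx₀ : x₀ ∈ E) (hN : N ∈ upperBounds (pOrders p E)) {x : ℚ_[p]}
    (hx : x ∈ E) {L : ℤ} (hL : ‖x - x₀‖ ≤ (p : ℝ) ^ (-L)) (hLN : L ≤ N + 1) :
    canonicalMap E x₀ N x =
      ∑ i ∈ Ico L (N + 1), (levelDigit E x₀ i x : ℚ_[p]) * (p : ℚ_[p]) ^ i := by
  have htop : levelRep E x₀ (N + 1) x = x := eq_of_norm_sub_le_of_mem_upperBounds hN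
    (levelRep_mem hx₀ hx _) hx (norm_levelRep_sub_le _ x)
  rw [canonicalMap_eq hL, correctionSum]
  simp only [correction]
  rw [sum_sub_distrib, sum_Ico_sub_int (levelRep E x₀ · x) hLN, htop,
    levelRep_eq_of_norm_le hL]
  abel

theorem mem_pOrders_of_levelDigit_ne_zero (hx₀ : x₀ ∈ E) {x : ℚ_[p]} (hx : x ∈ E) {i : ℤ}
    (h : levelDigit E x₀ i x ≠ 0) : i ∈ pOrders p E := by
  obtain ⟨hne, hv⟩ := valuation_eq_of_leadingDigit_ne_zero (norm_levelRep_succ_sub_le i x) h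
  exact ⟨_, levelRep_mem hx₀ hx _, _, levelRep_mem hx₀ hx _, sub_ne_zero.1 hne, hv⟩

theorem canonicalMap_mem_canonicalSet (hx₀ : x₀ ∈ E) (hN : N ∈ upperBounds (pOrders p E))
    {x : ℚ_[p]} (hx : x ∈ E) : canonicalMap E x₀ N x ∈ canonicalSet p (pOrders p E) := by
  classical
  set L := min (x - x₀).valuation (N + 1)
  refine ⟨{i ∈ Ico L (N + 1) | (levelDigit E x₀ i x : ℚ_[p]) * (p : ℚ_[p]) ^ i ≠ 0},
    fun i hi => ?_, (levelDigit E x₀ · x), fun i _ => leadingDigit_lt _ _, ?_⟩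
  · rw [mem_coe, mem_filter] at hi
    exact mem_pOrders_of_levelDigit_ne_zero hx₀ hx fun h => hi.2 (by simp [h])
  · rw [sum_filter_ne_zero,
      canonicalMap_eq_sum hx₀ hN hx (norm_le_zpow_neg_of_le_valuation (min_le_left _ _))
        (min_le_right _ _)]

end CanonicalMap

end Padic

open Padic IsUltrametricDist

namespace PHomogeneous

variable {p : ℕ} [Fact p.Prime] {E : Set ℚ_[p]} {x₀ : ℚ_[p]}

theorem exists_mem_near_add (hE : PHomogeneous p E) {x : ℚ_[p]} (hx : x ∈ E) {n : ℤ} {d : ℕ}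
    (hd : d < p) (hn : d ≠ 0 → n ∈ pOrders p E) :
    ∃ y ∈ E, ‖y - x - d * (p : ℚ_[p]) ^ n‖ ≤ (p : ℝ) ^ (-(n + 1)) := by
  rcases eq_or_ne d 0 with rfl | hd0
  · exact ⟨x, hx, by simp only [sub_self, CharP.cast_eq_zero, zero_mul, norm_zero]; positivity⟩
  · exact hE n (hn hd0) x hx d hd

theorem exists_levelDigit_eq (hE : PHomogeneous p E) (hx₀ : x₀ ∈ E) {d : ℤ → ℕ}
    (hd : ∀ i, d i < p) (hdI : ∀ i, d i ≠ 0 → i ∈ pOrders p E) {L M : ℤ} (hLM : L ≤ M) :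
    ∃ c ∈ E, levelRep E x₀ M c = c ∧ ‖c - x₀‖ ≤ (p : ℝ) ^ (-L) ∧
      ∀ i ∈ Ico L M, levelDigit E x₀ i c = d i := by
  have hx₀L : ‖x₀ - x₀‖ ≤ (p : ℝ) ^ (-L) := by rw [sub_self, norm_zero]; positivity
  induction M, hLM using Int.leInduction with
  | base => exact ⟨x₀, hx₀, levelRep_eq_of_norm_le hx₀L, hx₀L, by simp⟩
  | succ M hLM ih =>
    obtain ⟨c, hc, hcM, hcL, hcd⟩ := ih
    obtain ⟨y, hy, hyc⟩ := hE.exists_mem_near_add hc (hd M) (hdI M)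
    set c' := levelRep E x₀ (M + 1) y
    have hc'y : ‖c' - y‖ ≤ (p : ℝ) ^ (-(M + 1)) := norm_levelRep_sub_le _ y
    have hc'c : ‖c' - c - d M * (p : ℚ_[p]) ^ M‖ ≤ (p : ℝ) ^ (-(M + 1)) := by
      rw [show c' - c - d M * (p : ℚ_[p]) ^ M =
        (c' - y) + (y - c - d M * (p : ℚ_[p]) ^ M) by ring]
      exact norm_add_le_of_le_of_le hc'y hyc
    have hc'c' : ‖c' - c‖ ≤ (p : ℝ) ^ (-M) := by
      rw [← sub_add_cancel (c' - c) (d M * (p : ℚ_[p]) ^ M)]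
      exact norm_add_le_of_le_of_le (hc'c.trans (zpow_natCast_prime_le (by omega)))
        (norm_natCast_mul_zpow_le _ _)
    refine ⟨c', levelRep_mem hx₀ hy _, levelRep_congr hc'y, ?_, fun i hi => ?_⟩
    · rw [← sub_add_sub_cancel c' c x₀]
      exact norm_add_le_of_le_of_le (hc'c'.trans (zpow_natCast_prime_le (by omega))) hcL
    · rcases (Int.lt_add_one_iff.1 (mem_Ico.1 hi).2).lt_or_eq with hiM | rfl
      · rw [levelDigit_congr (hc'c'.trans (zpow_natCast_prime_le (by omega)))]
        exact hcd i (mem_Ico.2 ⟨(mem_Ico.1 hi).1, by omega⟩)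
      · rw [levelDigit, levelRep_congr hc'y, levelRep_congr hc'c', hcM]
        exact leadingDigit_eq (hd _) hc'c

theorem canonicalSet_subset_image (hE : PHomogeneous p E) (hx₀ : x₀ ∈ E) {N : ℤ}
    (hN : N ∈ upperBounds (pOrders p E)) :
    canonicalSet p (pOrders p E) ⊆ canonicalMap E x₀ N '' E := by
  classical
  rintro _ ⟨F, hFI, β, hβ, rfl⟩
  obtain ⟨L, hL⟩ := F.bddBelow
  set d : ℤ → ℕ := fun i => if i ∈ F then β i else 0
  have hd : ∀ i, d i < p := fun i => by
    by_cases hi : i ∈ F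
    · simpa [d, hi] using hβ i hi
    · simpa [d, hi] using (Fact.out : p.Prime).pos
  have hdI : ∀ i, d i ≠ 0 → i ∈ pOrders p E := fun i hi =>
    hFI (mem_coe.2 (by by_contra h; simp [d, h] at hi))
  have hF : F ⊆ Ico (min L (N + 1)) (N + 1) := fun i hi =>
    mem_Ico.2 ⟨min_le_of_left_le (hL hi), Int.lt_add_one_iff.2 (hN (hFI hi))⟩
  obtain ⟨c, hc, -, hcL, hcd⟩ := hE.exists_levelDigit_eq hx₀ hd hdI (min_le_right L (N + 1))
  refine ⟨c, hc, ?_⟩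
  rw [canonicalMap_eq_sum hx₀ hN hc hcL (min_le_right _ _)]
  calc ∑ i ∈ Ico (min L (N + 1)) (N + 1), (levelDigit E x₀ i c : ℚ_[p]) * (p : ℚ_[p]) ^ i
      = ∑ i ∈ Ico (min L (N + 1)) (N + 1), (d i : ℚ_[p]) * (p : ℚ_[p]) ^ i :=
        sum_congr rfl fun i hi => by rw [hcd i hi]
    _ = ∑ i ∈ F, (d i : ℚ_[p]) * (p : ℚ_[p]) ^ i :=
        (sum_subset hF fun i _ hi => by simp [d, hi]).symm
    _ = ∑ i ∈ F, (β i : ℚ_[p]) * (p : ℚ_[p]) ^ i :=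
        sum_congr rfl fun i hi => by simp [d, hi]

end PHomogeneous

/-- a nonempty `p`-homogeneous set `E` whose admissible `p`-orders are bounded
above is mapped onto its canonical form `Ê` by some isometric transformation of `ℚ_p`. -/
theorem pHomogeneous_isometric_canonical_form
    (p : ℕ) [Fact p.Prime] (E : Set ℚ_[p]) (hne : E.Nonempty)
    (hhom : PHomogeneous p E) (hbdd : BddAbove (pOrders p E)) :
    ∃ f : ℚ_[p] → ℚ_[p], (∀ x y : ℚ_[p], ‖f x - f y‖ = ‖x - y‖) ∧
      f '' E = canonicalSet p (pOrders p E) := by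
  obtain ⟨x₀, hx₀⟩ := hne
  obtain ⟨N, hN⟩ := hbdd
  refine ⟨canonicalMap E x₀ N, norm_canonicalMap_sub, subset_antisymm ?_ ?_⟩
  · rintro _ ⟨x, hx, rfl⟩
    exact canonicalMap_mem_canonicalSet hx₀ hN hx
  · exact hhom.canonicalSet_subset_image hx₀ hN
end
end
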